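/- arXiv:2603.28614 — 9 statements merged into one kernel-verified Lean document; each statement's English description precedes it below -/
import Mathlib

section
/- Let G be a directed graph rooted in a vertex r in which every vertex has indegree at most two. Then the flip graph of the arborescences of G rooted in r is bipartite. -/
/-- An arborescence of the digraph `G` rooted in `r`: a finite set of arcs of `G` such that
no arc enters `r`, every vertex other than `r` has exactly one entering arc, and every
vertex is reachable from `r` along the arcs (so it is a spanning directed tree oriented
away from `r`). -/
structure Arborescence {V : Type*} (G : V → V → Prop) (r : V) where
  arcs : Finset (V × V)
  sub : ∀ a ∈ arcs, G a.1 a.2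
  noRoot : ∀ a ∈ arcs, a.2 ≠ r
  uniqueIn : ∀ v, v ≠ r → ∃! a, a ∈ arcs ∧ a.2 = v
  reach : ∀ v, Relation.ReflTransGen (fun x y => (x, y) ∈ arcs) r v

theorem Arborescence.ext' {V : Type*} {G : V → V → Prop} {r : V}
    {A B : Arborescence G r} (h : A.arcs = B.arcs) : A = B := by
  cases A; cases B; cases h; rfl

instance {V : Type*} [DecidableEq V] (G : V → V → Prop) (r : V) :
    DecidableEq (Arborescence G r) := fun A B =>
  decidable_of_iff (A.arcs = B.arcs) ⟨Arborescence.ext', fun h => h ▸ rfl⟩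

/-- The flip graph of `G` rooted in `r`: two arborescences are adjacent when their
arc sets differ in exactly one arc. -/
def FlipGraph {V : Type*} [DecidableEq V] (G : V → V → Prop) (r : V) :
    SimpleGraph (Arborescence G r) where
  Adj A B := A ≠ B ∧ (A.arcs \ B.arcs).card = 1 ∧ (B.arcs \ A.arcs).card = 1
  symm := ⟨fun A B ⟨h1, h2, h3⟩ => ⟨h1.symm, h3, h2⟩⟩
  loopless := ⟨fun A h => h.1 rfl⟩

/-- Let `G` be a directed graph rooted in `r` in which every vertex has
indegree at most two. Then the flip graph of the arborescences of `G` rooted in `r` is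
bipartite (i.e. 2-colorable). -/
theorem flipGraph_bipartite_of_indegree_le_two
    {V : Type*} [Fintype V] [DecidableEq V] (G : V → V → Prop) [DecidableRel G] (r : V)
    (hindeg : ∀ v : V, (Finset.univ.filter (fun u => G u v)).card ≤ 2) :
    (FlipGraph G r).Colorable 2 := by
    classical
  letI : LinearOrder (V × V) :=
    LinearOrder.lift' (Fintype.equivFin (V × V)) (Fintype.equivFin (V × V)).injective
  -- candidate arcs entering v
  set S : V → Finset (V × V) := fun v =>
    Finset.univ.filter (fun p : V × V => G p.1 p.2 ∧ p.2 = v) with hS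
  have hScard : ∀ v, (S v).card ≤ 2 := by
    intro v
    have hinj : Set.InjOn Prod.fst (S v : Set (V × V)) := by
      intro p hp q hq h
      simp [hS] at hp hq
      exact Prod.ext h (hp.2.trans hq.2.symm)
    calc (S v).card = ((S v).image Prod.fst).card := (Finset.card_image_of_injOn hinj).symm
      _ ≤ (Finset.univ.filter (fun u => G u v)).card := by
          apply Finset.card_le_card
          intro u hu
          simp only [hS, Finset.mem_image, Finset.mem_filter, Finset.mem_univ, true_and] at hu
          obtain ⟨p, ⟨hG, hv⟩, hfst⟩ := hu
          simp only [Finset.mem_filter, Finset.mem_univ, true_and]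
          subst hv; subst hfst; exact hG
      _ ≤ 2 := hindeg v
  -- weight of an arc: number of smaller candidate arcs with the same head
  set w : V × V → ℕ := fun a => ((S a.2).filter (fun b => b < a)).card with hw
  -- the coloring
  set f : Arborescence G r → ZMod 2 := fun A => ((∑ a ∈ A.arcs, w a : ℕ) : ZMod 2) with hf
  have key : ∀ A B : Arborescence G r, (FlipGraph G r).Adj A B → f A ≠ f B := by
    intro A B hAB
    obtain ⟨hne, h1, h2⟩ := hAB
    obtain ⟨a, ha⟩ := Finset.card_eq_one.mp h1
    obtain ⟨b, hb⟩ := Finset.card_eq_one.mp h2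
    have haA : a ∈ A.arcs ∧ a ∉ B.arcs := by
      have : a ∈ A.arcs \ B.arcs := ha ▸ Finset.mem_singleton_self a
      exact ⟨(Finset.mem_sdiff.mp this).1, (Finset.mem_sdiff.mp this).2⟩
    have hbB : b ∈ B.arcs ∧ b ∉ A.arcs := by
      have : b ∈ B.arcs \ A.arcs := hb ▸ Finset.mem_singleton_self b
      exact ⟨(Finset.mem_sdiff.mp this).1, (Finset.mem_sdiff.mp this).2⟩
    have hab : a ≠ b := fun h => haA.2 (h ▸ hbB.1)
    -- a and b have the same head
    have hhead : a.2 = b.2 := by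
      by_contra hne2
      have hr : a.2 ≠ r := A.noRoot a haA.1
      obtain ⟨c, ⟨hcB, hcv⟩, hcu⟩ := B.uniqueIn a.2 hr
      have hca : c ≠ a := fun h => haA.2 (h ▸ hcB)
      have hcb : c ≠ b := fun h => hne2 (hcv ▸ congrArg Prod.snd h)
      have hcA : c ∈ A.arcs := by
        by_contra hcA
        have : c ∈ B.arcs \ A.arcs := Finset.mem_sdiff.mpr ⟨hcB, hcA⟩
        rw [hb, Finset.mem_singleton] at this
        exact hcb this
      -- A has two arcs entering a.2
      obtain ⟨d, _, hdu⟩ := A.uniqueIn a.2 hr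
      have h1' := hdu a ⟨haA.1, rfl⟩
      have h2' := hdu c ⟨hcA, hcv⟩
      exact hca (h2'.trans h1'.symm)
    -- S a.2 = {a, b}
    have haS : a ∈ S a.2 := by
      simp only [hS, Finset.mem_filter, Finset.mem_univ, true_and, and_true]
      exact A.sub a haA.1
    have hbS : b ∈ S a.2 := by
      simp only [hS, Finset.mem_filter, Finset.mem_univ, true_and]
      exact ⟨B.sub b hbB.1, hhead.symm⟩
    have hSeq : S a.2 = {a, b} := by
      apply (Finset.eq_of_subset_of_card_le _ _).symm
      · intro x hx
        rw [Finset.mem_insert, Finset.mem_singleton] at hx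
        rcases hx with h | h
        · exact h ▸ haS
        · exact h ▸ hbS
      · calc (S a.2).card ≤ 2 := hScard a.2
          _ = ({a, b} : Finset (V × V)).card := by
            rw [Finset.card_insert_of_notMem (by simpa using hab), Finset.card_singleton]
    -- w a + w b = 1
    have hwsum : w a + w b = 1 := by
      have hwa : w a = (({a, b} : Finset (V × V)).filter (fun c => c < a)).card := by
        simp only [hw]; rw [hSeq]
      have hwb : w b = (({a, b} : Finset (V × V)).filter (fun c => c < b)).card := by
        simp only [hw]; rw [← hhead, hSeq]
      rw [hwa, hwb]
      rcases lt_trichotomy a b with h | h | h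
      · simp [Finset.filter_insert, Finset.filter_singleton, h, not_lt.mpr h.le,
          lt_irrefl, hab]
      · exact absurd h hab
      · simp [Finset.filter_insert, Finset.filter_singleton, h, not_lt.mpr h.le,
          lt_irrefl, hab]
    -- split the sums
    have e : ∀ (s t : Finset (V × V)), ∑ x ∈ s, w x = ∑ x ∈ s \ t, w x + ∑ x ∈ s ∩ t, w x := by
      intro s t
      rw [← Finset.sum_union (Finset.disjoint_sdiff_inter s t), Finset.sdiff_union_inter]
    have hsplitA : (∑ x ∈ A.arcs, w x) = w a + ∑ x ∈ A.arcs ∩ B.arcs, w x := by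
      rw [e A.arcs B.arcs, ha, Finset.sum_singleton]
    have hsplitB : (∑ x ∈ B.arcs, w x) = w b + ∑ x ∈ A.arcs ∩ B.arcs, w x := by
      rw [e B.arcs A.arcs, hb, Finset.sum_singleton, Finset.inter_comm]
    intro hcontra
    simp only [hf, hsplitA, hsplitB, Nat.cast_add] at hcontra
    have hwab : ((w a : ZMod 2)) = (w b : ZMod 2) := by
      have := add_right_cancel hcontra
      exact this
    have h1' : ((w a + w b : ℕ) : ZMod 2) = 1 := by rw [hwsum]; norm_num
    rw [Nat.cast_add, hwab] at h1'
    have hself : (w b : ZMod 2) + (w b : ZMod 2) = 0 := by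
      have : ((2 : ℕ) : ZMod 2) = 0 := by decide
      calc (w b : ZMod 2) + (w b : ZMod 2) = ((2 : ℕ) : ZMod 2) * (w b : ZMod 2) := by
            push_cast; ring
        _ = 0 := by rw [this]; ring
    rw [hself] at h1'
    exact zero_ne_one h1'
  have : (FlipGraph G r).Colorable (Fintype.card (ZMod 2)) :=
    (SimpleGraph.Coloring.mk f (fun {v w} h => key v w h)).colorable
  simpa using this
end

section
/- Let G be a directed graph rooted in a vertex r in which every vertex has indegree at most two. Assign to each arc of G a weight in {+1, -1} as follows: if a vertex z has exactly two incoming arcs, one of them gets weight +1 and the other weight -1 (the choice is arbitrary but fixed); every arc that is the unique incoming arc of its head gets weight +1. Define the weight of an arborescence of G rooted in r to be the product of the weights of its arcs. Then the number of arborescences of weight +1 and the number of arborescences of weight -1 differ by at most 1; equivalently, the absolute value of the sum of the weights over all arborescences of G rooted in r is at most 1. -/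
noncomputable instance {V : Type*} [Fintype V] [DecidableEq V] (G : V → V → Prop) (r : V) :
    Fintype (Arborescence G r) :=
  Fintype.ofInjective (fun A => A.arcs) (fun A B h => Arborescence.ext' h)

set_option linter.unusedSectionVars false
set_option linter.unusedVariables false

/-! ### Auxiliary material: totally unimodular rows -/

def RowOK {ι : Type*} (row : ι → ℤ) : Prop :=
  (∀ j, row j = 0 ∨ row j = 1 ∨ row j = -1) ∧
  (∀ j k, row j = 1 → row k = 1 → j = k) ∧
  (∀ j k, row j = -1 → row k = -1 → j = k)

lemma RowOK.comp {ι κ : Type*} {row : ι → ℤ} (h : RowOK row) {g : κ → ι}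
    (hg : Function.Injective g) : RowOK (row ∘ g) :=
  ⟨fun j => h.1 (g j), fun j k hj hk => hg (h.2.1 _ _ hj hk),
   fun j k hj hk => hg (h.2.2 _ _ hj hk)⟩

lemma rowOK_form {ι : Type*} (c : ℤ) (hc : c = 1 ∨ c = -1) (P Q : ι → Prop)
    [DecidablePred P] [DecidablePred Q]
    (hP : ∀ j k, P j → P k → j = k) (hQ : ∀ j k, Q j → Q k → j = k) :
    RowOK (fun j => c * ((if P j then (1:ℤ) else 0) - (if Q j then 1 else 0))) := by
  refine ⟨fun j => ?_, fun j k hj hk => ?_, fun j k hj hk => ?_⟩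
  · rcases hc with rfl | rfl <;> by_cases pj : P j <;> by_cases qj : Q j <;>
      simp [pj, qj]
  all_goals
    rcases hc with rfl | rfl <;>
      by_cases pj : P j <;> by_cases qj : Q j <;>
      by_cases pk : P k <;> by_cases qk : Q k <;>
      simp only [pj, qj, pk, qk, if_true, if_false] at hj hk <;>
      first
        | exact hP j k pj pk
        | exact hQ j k qj qk
        | omega

lemma tu_det_abs_le_one : ∀ n (M : Matrix (Fin n) (Fin n) ℤ), (∀ i, RowOK (M i)) →
    |M.det| ≤ 1 := by
  intro n
  induction n with
  | zero => intro M _; simp [Matrix.det_fin_zero]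
  | succ n ih =>
    intro M hM
    by_cases hC : ∀ i, (∃ j, M i j = 1) ∧ (∃ j, M i j = -1)
    · -- every row has a +1 and a -1; rows sum to zero
      have hrow : ∀ i, ∑ j, M i j = 0 := by
        intro i
        obtain ⟨⟨jp, hjp⟩, ⟨jm, hjm⟩⟩ := hC i
        have hne : jp ≠ jm := by intro h; rw [h, hjm] at hjp; omega
        have : ∑ j, M i j = ∑ j ∈ ({jp, jm} : Finset _), M i j := by
          refine (Finset.sum_subset (Finset.subset_univ _) ?_).symm
          intro x _ hx
          simp only [Finset.mem_insert, Finset.mem_singleton, not_or] at hx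
          rcases (hM i).1 x with h | h | h
          · exact h
          · exact absurd ((hM i).2.1 x jp h hjp) hx.1
          · exact absurd ((hM i).2.2 x jm h hjm) hx.2
        rw [this, Finset.sum_pair hne, hjp, hjm]; ring
      have hdet : M.det = 0 := by
        rw [← Matrix.exists_mulVec_eq_zero_iff]
        refine ⟨fun _ => 1, ?_, ?_⟩
        · intro h
          have := congrFun h 0
          simp at this
        · funext i
          simpa [Matrix.mulVec, dotProduct] using hrow i
      simp [hdet]
    · push_neg at hC
      obtain ⟨i, hi⟩ := hC
      have key : ∀ j k, M i j ≠ 0 → M i k ≠ 0 → j = k := by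
        intro j k hj hk
        rcases (hM i).1 j with h1 | h1 | h1 <;> rcases (hM i).1 k with h2 | h2 | h2
        · exact absurd h1 hj
        · exact absurd h1 hj
        · exact absurd h1 hj
        · exact absurd h2 hk
        · exact (hM i).2.1 j k h1 h2
        · exact absurd h2 (hi ⟨j, h1⟩ k)
        · exact absurd h2 hk
        · exact absurd h1 (hi ⟨k, h2⟩ j)
        · exact (hM i).2.2 j k h1 h2
      by_cases hz : ∃ j, M i j ≠ 0
      · obtain ⟨j₀, hj₀⟩ := hz
        have hrest : ∀ j, j ≠ j₀ → M i j = 0 := fun j hj =>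
          by_contra fun h => hj (key j j₀ h hj₀)
        have hexp : M.det = (-1) ^ (i + j₀ : ℕ) * M i j₀ *
            (M.submatrix i.succAbove j₀.succAbove).det := by
          rw [Matrix.det_succ_row M i]
          rw [Finset.sum_eq_single j₀]
          · intro b _ hb; rw [hrest b hb]; ring
          · intro h; exact absurd (Finset.mem_univ j₀) h
        have habs : |M i j₀| = 1 := by
          rcases (hM i).1 j₀ with h | h | h
          · exact absurd h hj₀
          · rw [h]; rfl
          · rw [h]; rfl
        have hsub : ∀ k, RowOK ((M.submatrix i.succAbove j₀.succAbove) k) := by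
          intro k
          exact (hM (i.succAbove k)).comp (Fin.succAbove_right_injective)
        calc |M.det| = |M i j₀| * |(M.submatrix i.succAbove j₀.succAbove).det| := by
              rw [hexp, abs_mul, abs_mul, abs_pow, abs_neg, abs_one, one_pow, one_mul]
          _ ≤ 1 := by rw [habs, one_mul]; exact ih _ hsub
      · push_neg at hz
        rw [Matrix.det_eq_zero_of_row_eq_zero i hz]; simp

lemma tu_general {ι : Type*} [Fintype ι] [DecidableEq ι] (M : Matrix ι ι ℤ)
    (h : ∀ i, RowOK (M i)) : |M.det| ≤ 1 := by
  let e := Fintype.equivFin ι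
  rw [← Matrix.det_submatrix_equiv_self e.symm M]
  apply tu_det_abs_le_one
  intro i
  exact (h (e.symm i)).comp e.symm.injective

section Aux
variable {V : Type*} [Fintype V] [DecidableEq V] (G : V → V → Prop) (r : V)

/-- the step relation generated by a parent function -/
def pstep (f : {v : V // v ≠ r} → V) : V → V → Prop := fun x y => ∃ h : y ≠ r, f ⟨y, h⟩ = x

/-- totalized parent map -/
def Fmap (f : {v : V // v ≠ r} → V) : V → V := fun x => if h : x = r then r else f ⟨x, h⟩

def Good (f : {v : V // v ≠ r} → V) : Prop :=
  ∀ v, Relation.ReflTransGen (pstep r f) r v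

/-- the 0/1-matrix attached to a parent function -/
def Mf (f : {v : V // v ≠ r} → V) : Matrix {v : V // v ≠ r} {v : V // v ≠ r} ℤ :=
  fun v u => (if v = u then 1 else 0) - (if f v = u.1 then 1 else 0)

variable {r} {f : {v : V // v ≠ r} → V}

lemma reach_iff_iter (v : V) :
    Relation.ReflTransGen (pstep r f) r v ↔ ∃ k, (Fmap r f)^[k] v = r := by
  constructor
  · intro h
    induction h with
    | refl => exact ⟨0, rfl⟩
    | tail hab hbc ih =>
      obtain ⟨k, hk⟩ := ih
      obtain ⟨hcr, hfc⟩ := hbc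
      refine ⟨k + 1, ?_⟩
      rw [Function.iterate_succ_apply]
      have : Fmap r f _ = f ⟨_, hcr⟩ := dif_neg hcr
      rw [this, hfc, hk]
  · rintro ⟨k, hk⟩
    induction k generalizing v with
    | zero => rw [show v = r from hk]
    | succ k ih =>
      by_cases hv : v = r
      · rw [hv]
      · rw [Function.iterate_succ_apply] at hk
        have hFv : Fmap r f v = f ⟨v, hv⟩ := dif_neg hv
        have := ih (Fmap r f v) hk
        exact this.tail ⟨hv, hFv.symm⟩
end Aux

section Det
variable {V : Type*} [Fintype V] [DecidableEq V] {r : V} {f : {v : V // v ≠ r} → V}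

lemma detMf_good (hg : Good r f) : (Mf r f).det = 1 := by
  classical
  -- depth function
  have hex : ∀ v : V, ∃ k, (Fmap r f)^[k] v = r := fun v => (reach_iff_iter v).mp (hg v)
  set F := Fmap r f with hF
  let d : V → ℕ := fun v => Nat.find (hex v)
  have hdlt : ∀ v : {v : V // v ≠ r}, f v ≠ r → d (f v) < d v.1 := by
    intro v hfv
    have h0 : (F)^[d v.1] v.1 = r := Nat.find_spec (hex v.1)
    have hpos : 0 < d v.1 := by
      rcases Nat.eq_zero_or_pos (d v.1) with h | h
      · exfalso; rw [h] at h0; exact v.2 h0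
      · exact h
    obtain ⟨m, hm⟩ := Nat.exists_eq_succ_of_ne_zero (Nat.pos_iff_ne_zero.mp hpos)
    have : (F)^[m] (F v.1) = r := by
      rw [← Function.iterate_succ_apply, ← hm]; exact h0
    have hFv : F v.1 = f v := by
      show Fmap r f v.1 = f v
      rw [Fmap, dif_neg v.2]
    rw [hFv] at this
    have : d (f v) ≤ m := Nat.find_le this
    omega
  have hne : ∀ v : {v : V // v ≠ r}, f v ≠ v.1 := by
    intro v hfv
    by_cases h : f v = r
    · exact v.2 (hfv ▸ h)
    · have := hdlt v h; rw [hfv] at this; omega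
  -- sort
  let n := Fintype.card {v : V // v ≠ r}
  let e₀ : Fin n ≃ {v : V // v ≠ r} := (Fintype.equivFin {v : V // v ≠ r}).symm
  let σ : Equiv.Perm (Fin n) := Tuple.sort (fun i => d (e₀ i).1)
  let e : Fin n ≃ {v : V // v ≠ r} := σ.trans e₀
  have hmono : Monotone (fun i => d ((e i) : V)) := Tuple.monotone_sort (fun i => d (e₀ i).1)
  have hdet : (Mf r f).det = ((Mf r f).submatrix e e).det :=
    (Matrix.det_submatrix_equiv_self e (Mf r f)).symm
  rw [hdet, Matrix.det_of_lowerTriangular _ ?tri]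
  case tri =>
    intro i j hij
    -- hij : toDual j < toDual i, i.e. i < j
    have hij' : i < j := hij
    show (if e i = e j then (1:ℤ) else 0) - (if f (e i) = (e j).1 then 1 else 0) = 0
    rw [if_neg (by intro h; exact absurd (e.injective h) (Fin.ne_of_lt hij'))]
    rw [if_neg, sub_zero]
    intro h
    have h1 : d ((e j):V) < d ((e i):V) := by
      rw [← h]; exact hdlt (e i) (h ▸ (e j).2)
    have h2 : d ((e i):V) ≤ d ((e j):V) := hmono (le_of_lt hij')
    omega
  refine Finset.prod_eq_one fun i _ => ?_
  show (if e i = e i then (1:ℤ) else 0) - (if f (e i) = (e i).1 then 1 else 0) = 1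
  rw [if_pos rfl, if_neg (hne (e i)), sub_zero]
end Det

section Det2
variable {V : Type*} [Fintype V] [DecidableEq V] {r : V} {f : {v : V // v ≠ r} → V}

lemma detMf_bad (hg : ¬ Good r f) : (Mf r f).det = 0 := by
  classical
  obtain ⟨v₀, hv₀⟩ : ∃ v₀, ¬ Relation.ReflTransGen (pstep r f) r v₀ := by
    by_contra h; push_neg at h; exact hg h
  set F := Fmap r f with hF
  have hiter : ∀ k, (F)^[k] v₀ ≠ r := by
    intro k hk
    exact hv₀ ((reach_iff_iter v₀).mpr ⟨k, hk⟩)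
  -- pigeonhole
  obtain ⟨k, l, hkl, hkeq⟩ : ∃ k l : ℕ, k < l ∧ (F)^[k] v₀ = (F)^[l] v₀ := by
    have : ¬ Function.Injective (fun i : Fin (Fintype.card V + 1) => (F)^[i] v₀) := by
      intro hinj
      have := Fintype.card_le_of_injective _ hinj
      simp at this
    rw [Function.not_injective_iff] at this
    obtain ⟨a, b, hab, hne⟩ := this
    rcases lt_or_gt_of_ne (show (a:ℕ) ≠ (b:ℕ) from fun h => hne (Fin.ext h)) with h | h
    · exact ⟨a, b, h, hab⟩
    · exact ⟨b, a, h, hab.symm⟩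
  set C : Finset V := (Finset.Ico k l).image (fun i => (F)^[i] v₀) with hC
  have hmemC : ∀ x ∈ C, x ≠ r := by
    intro x hx
    rw [hC, Finset.mem_image] at hx
    obtain ⟨i, _, rfl⟩ := hx
    exact hiter i
  have hmaps : ∀ x ∈ C, F x ∈ C := by
    intro x hx
    rw [hC, Finset.mem_image] at hx ⊢
    obtain ⟨i, hi, rfl⟩ := hx
    rw [Finset.mem_Ico] at hi
    rcases Nat.lt_or_ge (i+1) l with h | h
    · exact ⟨i+1, Finset.mem_Ico.mpr ⟨by omega, h⟩, Function.iterate_succ_apply' F i v₀⟩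
    · have : i + 1 = l := by omega
      refine ⟨k, Finset.mem_Ico.mpr ⟨le_refl _, hkl⟩, ?_⟩
      rw [hkeq, ← this]
      exact Function.iterate_succ_apply' F i v₀
  have hsurj : ∀ u ∈ C, ∃ x ∈ C, F x = u := by
    intro u hu
    rw [hC, Finset.mem_image] at hu
    obtain ⟨i, hi, rfl⟩ := hu
    rw [Finset.mem_Ico] at hi
    rcases Nat.lt_or_ge k i with h | h
    · refine ⟨(F)^[i-1] v₀, ?_, ?_⟩
      · rw [hC, Finset.mem_image]; exact ⟨i-1, Finset.mem_Ico.mpr ⟨by omega, by omega⟩, rfl⟩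
      · have h5 := Function.iterate_succ_apply' F (i-1) v₀
        rw [show (i-1).succ = i from by omega] at h5
        exact h5.symm
    · have hik : i = k := by omega
      refine ⟨(F)^[l-1] v₀, ?_, ?_⟩
      · rw [hC, Finset.mem_image]; exact ⟨l-1, Finset.mem_Ico.mpr ⟨by omega, by omega⟩, rfl⟩
      · have h5 := Function.iterate_succ_apply' F (l-1) v₀
        rw [show (l-1).succ = l from by omega] at h5
        rw [← h5, hik, hkeq]
  -- bijOn
  have hbij : Set.BijOn F (C : Set V) (C : Set V) := by
    rw [← Set.Finite.surjOn_iff_bijOn_of_mapsTo C.finite_toSet (fun x hx => hmaps x hx)]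
    intro u hu
    obtain ⟨x, hx, hfx⟩ := hsurj u hu
    exact ⟨x, hx, hfx⟩
  have hcount : ∀ u : V, (C.filter (fun x => F x = u)).card = if u ∈ C then 1 else 0 := by
    intro u
    split_ifs with hu
    · rw [Finset.card_eq_one]
      obtain ⟨x, hx, hfx⟩ := hsurj u hu
      refine ⟨x, ?_⟩
      ext y
      simp only [Finset.mem_filter, Finset.mem_singleton]
      constructor
      · rintro ⟨hy, hfy⟩
        exact hbij.2.1 hy hx (by rw [hfy, hfx])
      · rintro rfl; exact ⟨hx, hfx⟩
    · rw [Finset.card_eq_zero]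
      ext y
      simp only [Finset.mem_filter, Finset.notMem_empty, iff_false, not_and]
      intro hy hfy
      exact hu (hfy ▸ hmaps y hy)
  -- the kernel vector
  rw [← Matrix.exists_vecMul_eq_zero_iff]
  refine ⟨fun u => if u.1 ∈ C then 1 else 0, ?_, ?_⟩
  · intro h
    have hk0 : (F)^[k] v₀ ∈ C := by
      rw [hC, Finset.mem_image]; exact ⟨k, Finset.mem_Ico.mpr ⟨le_refl _, hkl⟩, rfl⟩
    have := congrFun h (⟨(F)^[k] v₀, hiter k⟩ : {v : V // v ≠ r})
    simp only [if_pos hk0] at this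
    exact one_ne_zero this
  · funext u
    show (∑ v : {v : V // v ≠ r}, (if (v:V) ∈ C then (1:ℤ) else 0) * Mf r f v u) = 0
    have hfF : ∀ v : {v : V // v ≠ r}, f v = F v.1 := by
      intro v; rw [hF]; unfold Fmap; rw [dif_neg v.2]
    have hsplit : ∀ v : {v : V // v ≠ r},
        (if (v:V) ∈ C then (1:ℤ) else 0) * Mf r f v u =
        (if v = u then (if (v:V) ∈ C then (1:ℤ) else 0) else 0)
          - (if (v:V) ∈ C ∧ F v.1 = u.1 then 1 else 0) := by
      intro v
      rw [Mf, ← hfF]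
      clear hcount hbij hsurj hmaps hmemC hiter hkeq hC hF
      split_ifs <;> simp_all <;> ring
    rw [Finset.sum_congr rfl (fun v _ => hsplit v), Finset.sum_sub_distrib]
    rw [Finset.sum_ite_eq']
    simp only [Finset.mem_univ, if_pos]
    -- second sum equals card of filter
    have h2 : (∑ v : {v : V // v ≠ r}, (if (v:V) ∈ C ∧ F v.1 = u.1 then (1:ℤ) else 0))
        = if (u:V) ∈ C then 1 else 0 := by
      have e1 : (∑ v : {v : V // v ≠ r}, (if (v:V) ∈ C ∧ F v.1 = u.1 then (1:ℤ) else 0))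
          = ∑ x ∈ Finset.univ.erase r, (if x ∈ C ∧ F x = u.1 then (1:ℤ) else 0) := by
        exact (Finset.sum_subtype (Finset.univ.erase r) (fun x => by simp)
          (fun x => if x ∈ C ∧ F x = u.1 then (1:ℤ) else 0)).symm
      have e2 : ∑ x ∈ Finset.univ.erase r, (if x ∈ C ∧ F x = u.1 then (1:ℤ) else 0)
          = ∑ x : V, (if x ∈ C ∧ F x = u.1 then (1:ℤ) else 0) := by
        apply Finset.sum_erase
        rw [if_neg]
        rintro ⟨hr, -⟩
        exact hmemC r hr rfl
      have e3 : ∑ x : V, (if x ∈ C ∧ F x = u.1 then (1:ℤ) else 0)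
          = ((Finset.univ.filter (fun x => x ∈ C ∧ F x = u.1)).card : ℤ) := by
        rw [Finset.sum_boole]
      have e4 : Finset.univ.filter (fun x => x ∈ C ∧ F x = u.1)
          = C.filter (fun x => F x = u.1) := by
        ext x; simp [Finset.mem_filter]
      rw [e1, e2, e3, e4, hcount u.1]
      split_ifs <;> simp
    rw [h2]
    ring
end Det2

/-! ### The Laplacian-type matrix and its determinant expansion -/

section Lap
variable {V : Type*} [Fintype V] [DecidableEq V] (G : V → V → Prop) (r : V)

noncomputable def nbr (v : V) : Finset V := (Set.toFinite {u : V | G u v}).toFinset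

lemma mem_nbr {u v : V} : u ∈ nbr G v ↔ G u v := Set.Finite.mem_toFinset _

noncomputable def Lap (w : V → V → ℤ) :
    Matrix {v : V // v ≠ r} {v : V // v ≠ r} ℤ :=
  fun v u => ∑ x ∈ nbr G v.1, w x v.1 * ((if v = u then 1 else 0) - (if x = u.1 then 1 else 0))

lemma lap_det_expand (w : V → V → ℤ) :
    (Lap G r w).det = ∑ f ∈ Fintype.piFinset (fun v : {v : V // v ≠ r} => nbr G v.1),
      (∏ v, w (f v) v.1) * (Mf r f).det := by
  classical
  have hrow : Lap G r w = fun v => ∑ x ∈ nbr G v.1, (w x v.1) •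
      (fun u : {v : V // v ≠ r} => (if v = u then (1:ℤ) else 0) - (if x = u.1 then 1 else 0)) := by
    funext v u
    rw [Lap, Finset.sum_apply]
    simp [smul_eq_mul]
  have h1 : (Lap G r w).det = Matrix.detRowAlternating (Lap G r w) := rfl
  have h2 := (Matrix.detRowAlternating (R := ℤ)
      (n := {v : V // v ≠ r})).toMultilinearMap.map_sum_finset
    (g := fun (v : {v : V // v ≠ r}) (x : V) => (w x v.1) •
      (fun u : {v : V // v ≠ r} => (if v = u then (1:ℤ) else 0) - (if x = u.1 then 1 else 0)))
    (A := fun v => nbr G v.1)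
  simp only [AlternatingMap.coe_multilinearMap] at h2
  rw [h1, hrow, h2]
  apply Finset.sum_congr rfl
  intro f hf
  have h3 := (Matrix.detRowAlternating (R := ℤ)
      (n := {v : V // v ≠ r})).toMultilinearMap.map_smul_univ
    (fun v : {v : V // v ≠ r} => w (f v) v.1)
    (fun v => (fun u : {v : V // v ≠ r} =>
      (if v = u then (1:ℤ) else 0) - (if f v = u.1 then 1 else 0)))
  simp only [AlternatingMap.coe_multilinearMap] at h3
  rw [h3, smul_eq_mul]
  rfl

lemma lap_rowOK (w : V → V → ℤ)
    (hindeg : ∀ v : V, ({u : V | G u v} : Set V).ncard ≤ 2)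
    (hw : ∀ u v, G u v → w u v = 1 ∨ w u v = -1)
    (hopp : ∀ z u u', u ≠ u' → G u z → G u' z → w u z = - w u' z)
    (huniq : ∀ u z, G u z → (∀ u', G u' z → u' = u) → w u z = 1)
    (v : {v : V // v ≠ r}) : RowOK (Lap G r w v) := by
  classical
  have hcard : (nbr G v.1).card ≤ 2 := by
    have h := hindeg v.1
    rwa [Set.ncard_eq_toFinset_card _ (Set.toFinite _)] at h
  have h3 : (nbr G v.1).card = 0 ∨ (nbr G v.1).card = 1 ∨ (nbr G v.1).card = 2 := by omega
  rcases h3 with h | h | h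
  · rw [Finset.card_eq_zero] at h
    have : Lap G r w v = fun _ => 0 := by
      funext u; rw [Lap] at *; rw [h, Finset.sum_empty]
    rw [this]
    exact ⟨fun j => Or.inl rfl, fun j k hj _ => absurd hj.symm (by norm_num),
      fun j k hj _ => absurd hj.symm (by norm_num)⟩
  · rw [Finset.card_eq_one] at h
    obtain ⟨a, ha⟩ := h
    have hGa : G a v.1 := (mem_nbr G).mp (ha ▸ Finset.mem_singleton_self a)
    have hwa : w a v.1 = 1 := by
      refine huniq a v.1 hGa fun u' hu' => ?_
      have : u' ∈ nbr G v.1 := (mem_nbr G).mpr hu'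
      rw [ha, Finset.mem_singleton] at this; exact this
    have hrow : Lap G r w v = fun u => 1 *
        ((if v = u then (1:ℤ) else 0) - (if a = u.1 then 1 else 0)) := by
      funext u; rw [Lap] at *; rw [ha, Finset.sum_singleton, hwa]
    rw [hrow]
    exact rowOK_form 1 (Or.inl rfl) _ _
      (fun j k hj hk => hj ▸ hk ▸ rfl)
      (fun j k hj hk => Subtype.ext (hj ▸ hk ▸ rfl))
  · rw [Finset.card_eq_two] at h
    obtain ⟨a, b, hab, hset⟩ := h
    have hGa : G a v.1 := (mem_nbr G).mp (hset ▸ Finset.mem_insert_self a {b})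
    have hGb : G b v.1 := (mem_nbr G).mp
      (hset ▸ Finset.mem_insert_of_mem (Finset.mem_singleton_self b))
    have hwb : w b v.1 = - w a v.1 := hopp v.1 b a (Ne.symm hab) hGb hGa
    have hrow : Lap G r w v = fun u => (w a v.1) *
        ((if b = u.1 then (1:ℤ) else 0) - (if a = u.1 then 1 else 0)) := by
      funext u
      rw [Lap] at *; rw [hset, Finset.sum_pair hab, hwb]
      ring
    rw [hrow]
    exact rowOK_form (w a v.1) (hw a v.1 hGa) _ _
      (fun j k hj hk => Subtype.ext (hj ▸ hk ▸ rfl))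
      (fun j k hj hk => Subtype.ext (hj ▸ hk ▸ rfl))
end Lap

/-! ### Arborescences and parent functions -/

section Bij
variable {V : Type*} [Fintype V] [DecidableEq V] {G : V → V → Prop} {r : V}

noncomputable def par (A : Arborescence G r) (v : {v : V // v ≠ r}) : V :=
  ((A.uniqueIn v.1 v.2).exists.choose).1

lemma par_mem (A : Arborescence G r) (v : {v : V // v ≠ r}) : (par A v, v.1) ∈ A.arcs := by
  have hspec := (A.uniqueIn v.1 v.2).exists.choose_spec
  have : (par A v, v.1) = (A.uniqueIn v.1 v.2).exists.choose := Prod.ext rfl hspec.2.symm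
  rw [this]; exact hspec.1

lemma eq_par_of_mem (A : Arborescence G r) {a : V × V} (ha : a ∈ A.arcs)
    (v : {v : V // v ≠ r}) (h2 : a.2 = v.1) : a = (par A v, v.1) :=
  (A.uniqueIn v.1 v.2).unique ⟨ha, h2⟩ ⟨par_mem A v, rfl⟩

lemma arcs_eq_image (A : Arborescence G r) :
    A.arcs = Finset.image (fun v : {v : V // v ≠ r} => (par A v, v.1)) Finset.univ := by
  ext a
  simp only [Finset.mem_image, Finset.mem_univ, true_and]
  constructor
  · intro ha
    exact ⟨⟨a.2, A.noRoot a ha⟩, (eq_par_of_mem A ha ⟨a.2, A.noRoot a ha⟩ rfl).symm⟩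
  · rintro ⟨v, rfl⟩
    exact par_mem A v

lemma good_par (A : Arborescence G r) : Good r (par A) := by
  intro v
  refine Relation.ReflTransGen.mono ?_ _ _ (A.reach v)
  rintro x y hxy
  have hyr : y ≠ r := A.noRoot (x, y) hxy
  exact ⟨hyr, (congrArg Prod.fst (eq_par_of_mem A hxy ⟨y, hyr⟩ rfl)).symm⟩

noncomputable def ofF (G : V → V → Prop) (r : V) (f : {v : V // v ≠ r} → V)
    (hf : ∀ v, G (f v) v.1) (hgood : Good r f) : Arborescence G r where
  arcs := Finset.image (fun v : {v : V // v ≠ r} => (f v, v.1)) Finset.univ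
  sub := by
    intro a ha
    rw [Finset.mem_image] at ha
    obtain ⟨v, -, rfl⟩ := ha
    exact hf v
  noRoot := by
    intro a ha
    rw [Finset.mem_image] at ha
    obtain ⟨v, -, rfl⟩ := ha
    exact v.2
  uniqueIn := by
    intro y hy
    refine ⟨(f ⟨y, hy⟩, y), ⟨Finset.mem_image.mpr ⟨⟨y, hy⟩, Finset.mem_univ _, rfl⟩, rfl⟩, ?_⟩
    rintro a ⟨ha, h2⟩
    rw [Finset.mem_image] at ha
    obtain ⟨u, -, rfl⟩ := ha
    have : u = ⟨y, hy⟩ := Subtype.ext h2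
    rw [this]
  reach := by
    intro v
    refine Relation.ReflTransGen.mono ?_ _ _ (hgood v)
    rintro x y ⟨hy, hxy⟩
    exact Finset.mem_image.mpr ⟨⟨y, hy⟩, Finset.mem_univ _, by rw [hxy]⟩

lemma par_ofF (f : {v : V // v ≠ r} → V) (hf : ∀ v, G (f v) v.1) (hgood : Good r f) :
    par (ofF G r f hf hgood) = f := by
  funext v
  have hmem : (f v, v.1) ∈ (ofF G r f hf hgood).arcs :=
    Finset.mem_image.mpr ⟨v, Finset.mem_univ _, rfl⟩
  have h := eq_par_of_mem (ofF G r f hf hgood) hmem v rfl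
  exact (congrArg Prod.fst h).symm

lemma ofF_par (A : Arborescence G r) (hf : ∀ v, G (par A v) v.1) (hgood : Good r (par A)) :
    ofF G r (par A) hf hgood = A :=
  Arborescence.ext' (arcs_eq_image A).symm
end Bij

/-! ### Main theorem -/

/-- Let `G` be a directed graph rooted in `r` in which every vertex has
indegree at most two. Assign to each arc a weight in `{+1, -1}` such that the two arcs
entering a vertex of indegree two get opposite weights, and an arc that is the unique arc
entering its head gets weight `+1`. Then the sum over all arborescences of `G` rooted in
`r` of the product of the weights of their arcs has absolute value at most `1` (so the
numbers of arborescences of weight `+1` and of weight `-1` differ by at most one). -/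
theorem flipGraph_weight_sum_abs_le_one
    {V : Type*} [Fintype V] [DecidableEq V] (G : V → V → Prop) (r : V)
    (hindeg : ∀ v : V, ({u : V | G u v} : Set V).ncard ≤ 2)
    (w : V → V → ℤ)
    (hw : ∀ u v, G u v → w u v = 1 ∨ w u v = -1)
    (hopp : ∀ z u u', u ≠ u' → G u z → G u' z → w u z = - w u' z)
    (huniq : ∀ u z, G u z → (∀ u', G u' z → u' = u) → w u z = 1) :
    |∑ A : Arborescence G r, ∏ a ∈ A.arcs, w a.1 a.2| ≤ 1 := by
  classical
  have key : ∑ A : Arborescence G r, ∏ a ∈ A.arcs, w a.1 a.2 = (Lap G r w).det := by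
    rw [lap_det_expand]
    have step1 : ∀ f ∈ Fintype.piFinset (fun v : {v : V // v ≠ r} => nbr G v.1),
        (∏ v, w (f v) v.1) * (Mf r f).det
        = if Good r f then (∏ v, w (f v) v.1) else 0 := by
      intro f _
      by_cases hg : Good r f
      · rw [detMf_good hg, if_pos hg, mul_one]
      · rw [detMf_bad hg, if_neg hg, mul_zero]
    rw [Finset.sum_congr rfl step1, ← Finset.sum_filter]
    refine Finset.sum_bij'
      (i := fun (A : Arborescence G r) (_ : A ∈ Finset.univ) => par A)
      (j := fun f hf => ofF G r f
        (fun v => (mem_nbr G).mp ((Fintype.mem_piFinset.mp (Finset.mem_filter.mp hf).1) v))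
        ((Finset.mem_filter.mp hf).2))
      ?_ ?_ ?_ ?_ ?_
    · intro A _
      rw [Finset.mem_filter]
      refine ⟨Fintype.mem_piFinset.mpr fun v => (mem_nbr G).mpr (A.sub _ (par_mem A v)), good_par A⟩
    · intro f hf
      exact Finset.mem_univ _
    · intro A hA
      exact ofF_par A _ _
    · intro f hf
      exact par_ofF f _ _
    · intro A hA
      rw [arcs_eq_image A, Finset.prod_image]
      intro x _ y _ hxy
      have : x.1 = y.1 := congrArg Prod.snd hxy
      exact Subtype.ext this
  rw [key]
  exact tu_general _ (fun v => lap_rowOK G r w hindeg hw hopp huniq v)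
end

section
/- Let M be a square matrix with entries in {0, +1, -1} such that every column of M has at most two nonzero entries, and whenever a column has exactly two nonzero entries, those two entries have opposite signs. Then the determinant of M belongs to {-1, 0, +1}. -/
/-- Let `M` be a square integer matrix with entries in `{0, +1, -1}` such
that every column has at most two nonzero entries, and whenever a column has two nonzero
entries they have opposite signs. Then `det M ∈ {-1, 0, +1}`. -/
theorem det_mem_of_column_condition {n : ℕ} (M : Matrix (Fin n) (Fin n) ℤ)
    (hentries : ∀ i j, M i j = 0 ∨ M i j = 1 ∨ M i j = -1)
    (hcol : ∀ j, (Finset.univ.filter (fun i => M i j ≠ 0)).card ≤ 2)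
    (hopp : ∀ j i i', i ≠ i' → M i j ≠ 0 → M i' j ≠ 0 → M i j = - M i' j) :
    M.det = -1 ∨ M.det = 0 ∨ M.det = 1 := by
  induction n with
  | zero => simp
  | succ m ih =>
    by_cases hA : ∃ j, (Finset.univ.filter (fun i => M i j ≠ 0)).card ≤ 1
    · obtain ⟨j, hj⟩ := hA
      interval_cases h : (Finset.univ.filter (fun i => M i j ≠ 0)).card
      · -- zero column
        right; left
        apply Matrix.det_eq_zero_of_column_eq_zero j
        intro i
        by_contra hni
        have : i ∈ Finset.univ.filter (fun i => M i j ≠ 0) := by simp [hni]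
        rw [Finset.card_eq_zero.mp h] at this
        exact absurd this (Finset.notMem_empty _)
      · -- exactly one nonzero entry
        obtain ⟨i, hi⟩ := Finset.card_eq_one.mp h
        have hmem : ∀ k, M k j ≠ 0 → k = i := by
          intro k hk
          have : k ∈ Finset.univ.filter (fun i => M i j ≠ 0) := by simp [hk]
          rw [hi] at this; simpa using this
        have hdet := Matrix.det_succ_column M j
        have hsum : ∀ k : Fin (m+1), k ≠ i →
            (-1 : ℤ) ^ (k + j : ℕ) * M k j * Matrix.det (M.submatrix k.succAbove j.succAbove) = 0 := by
          intro k hk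
          have : M k j = 0 := by
            by_contra hne; exact hk (hmem k hne)
          simp [this]
        rw [Finset.sum_eq_single i (fun k _ hk => hsum k hk) (by simp)] at hdet
        set N := M.submatrix i.succAbove j.succAbove with hN
        have hNdet : N.det = -1 ∨ N.det = 0 ∨ N.det = 1 := by
          apply ih
          · intro a b; exact hentries _ _
          · intro b
            have hinj : Set.InjOn i.succAbove
                ((Finset.univ.filter (fun a => N a b ≠ 0)) : Finset (Fin m)) :=
              fun x _ y _ h => Fin.succAbove_right_injective h
            calc (Finset.univ.filter (fun a => N a b ≠ 0)).card
                = ((Finset.univ.filter (fun a => N a b ≠ 0)).image i.succAbove).card :=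
                  (Finset.card_image_of_injOn hinj).symm
              _ ≤ (Finset.univ.filter (fun a => M a (j.succAbove b) ≠ 0)).card := by
                  apply Finset.card_le_card
                  intro x hx
                  simp only [Finset.mem_image, Finset.mem_filter, Finset.mem_univ,
                    true_and] at hx ⊢
                  obtain ⟨a, ha, rfl⟩ := hx
                  exact ha
              _ ≤ 2 := hcol _
          · intro b a a' hne ha ha'
            exact hopp (j.succAbove b) (i.succAbove a) (i.succAbove a')
              (fun h => hne (Fin.succAbove_right_injective h)) ha ha'
        have hMij : M i j = 1 ∨ M i j = -1 := by
          rcases hentries i j with h0 | h1 | h2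
          · exfalso
            have : i ∈ Finset.univ.filter (fun a => M a j ≠ 0) := by rw [hi]; simp
            simp [h0] at this
          · exact Or.inl h1
          · exact Or.inr h2
        have hsign : (-1 : ℤ) ^ (i + j : ℕ) = 1 ∨ (-1 : ℤ) ^ (i + j : ℕ) = -1 :=
          neg_one_pow_eq_or ℤ _
        rcases hMij with h | h <;> rcases hsign with hs | hs <;>
          rcases hNdet with hd | hd | hd <;>
          simp only [hdet, h, hs, hd] <;> norm_num
    · -- every column has exactly two nonzero entries; columns sum to zero
      push_neg at hA
      right; left
      rw [← Matrix.exists_vecMul_eq_zero_iff]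
      refine ⟨fun _ => 1, ?_, ?_⟩
      · intro h
        have := congrFun h 0
        simp at this
      · funext j
        have h2 : (Finset.univ.filter (fun i => M i j ≠ 0)).card = 2 :=
          le_antisymm (hcol j) (hA j)
        obtain ⟨a, b, hab, hset⟩ := Finset.card_eq_two.mp h2
        have ha : M a j ≠ 0 := by
          have : a ∈ Finset.univ.filter (fun i => M i j ≠ 0) := by rw [hset]; simp
          simpa using this
        have hb : M b j ≠ 0 := by
          have : b ∈ Finset.univ.filter (fun i => M i j ≠ 0) := by rw [hset]; simp
          simpa using this
        have hoppo := hopp j a b hab ha hb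
        have hsum : ∑ i, M i j = 0 := by
          rw [← Finset.sum_filter_add_sum_filter_not Finset.univ (fun i => M i j ≠ 0)]
          have h1 : ∑ i ∈ Finset.univ.filter (fun i => M i j ≠ 0), M i j = 0 := by
            rw [hset, Finset.sum_insert (by simpa using hab), Finset.sum_singleton, hoppo]
            ring
          have h2' : ∑ i ∈ Finset.univ.filter (fun i => ¬ M i j ≠ 0), M i j = 0 := by
            apply Finset.sum_eq_zero
            intro x hx
            simpa using (Finset.mem_filter.mp hx).2
          rw [h1, h2', add_zero]
        simpa [Matrix.vecMul, dotProduct] using hsum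
end

section
/- Let F be the ladder of length n, consisting of two paths a_1, ..., a_n and b_1, ..., b_n together with an edge between a_i and b_i for each i. Let i, j ≤ n be distinct integers and let u be a vertex of level i (that is, u ∈ {a_i, b_i}). Then F has a Hamiltonian path starting at u and ending at some vertex of level j (that is, at a_j or at b_j). -/
/-- The ladder of length `n`: two paths `(·, false)` and `(·, true)` on `Fin n`, with a
rung between the two vertices of each level `i : Fin n`. -/
def ladderGraph (n : ℕ) : SimpleGraph (Fin n × Bool) where
  Adj u v := (u.1 = v.1 ∧ u.2 ≠ v.2) ∨
    (u.2 = v.2 ∧ (u.1.val + 1 = v.1.val ∨ v.1.val + 1 = u.1.val))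
  symm := by
    refine ⟨?_⟩
    rintro ⟨a, b⟩ ⟨c, d⟩ (⟨h1, h2⟩ | ⟨h1, h2⟩)
    · exact Or.inl ⟨h1.symm, h2.symm⟩
    · exact Or.inr ⟨h1.symm, h2.symm⟩
  loopless := by
    refine ⟨?_⟩
    rintro ⟨a, b⟩ (⟨h1, h2⟩ | ⟨h1, h2⟩)
    · exact h2 rfl
    · omega

lemma ladder_adj_iff {n : ℕ} (x y : Fin n × Bool) :
    (ladderGraph n).Adj x y ↔ ((x.1 = y.1 ∧ x.2 ≠ y.2) ∨
      (x.2 = y.2 ∧ (x.1.val + 1 = y.1.val ∨ y.1.val + 1 = x.1.val))) := Iff.rfl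

def fc (n : ℕ) (h : n ≠ 0) (x : ℕ) : Fin n := ⟨min x (n-1), by omega⟩

lemma fc_val (n : ℕ) (h : n ≠ 0) (x : ℕ) : (fc n h x).val = min x (n-1) := rfl

lemma fc_eq_fc {n : ℕ} {h : n ≠ 0} {x y : ℕ} (e : min x (n-1) = min y (n-1)) :
    fc n h x = fc n h y := Fin.ext e

section rows
variable (b : Bool) (P Q : Prop) [Decidable P] [Decidable Q]

lemma row_ne (hpq : P ↔ ¬Q) : (if P then !b else b) ≠ (if Q then !b else b) := by
  split_ifs with hP hQ <;> first | tauto | (cases b <;> simp)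

lemma row_eq (hpq : P ↔ Q) : (if P then !b else b) = (if Q then !b else b) := by
  rw [if_congr hpq rfl rfl]

lemma row_eq' (hpq : P ↔ ¬Q) : (if P then !b else b) = (if Q then b else !b) := by
  split_ifs with hP hQ <;> first | rfl | tauto

lemma row_ne' (hpq : P ↔ Q) : (if P then b else !b) ≠ (if Q then !b else b) := by
  split_ifs with hP hQ <;> first | tauto | (cases b <;> simp)

end rows

def lf (n i j : ℕ) (b : Bool) (h : n ≠ 0) (t : ℕ) : Fin n × Bool :=
  if t ≤ i then (fc n h (i - t), b)
  else if t ≤ 2*i+1 then (fc n h (t - i - 1), !b)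
  else if t < 2*j then
    (fc n h (i + 1 + (t - 2*i - 2)/2),
      if ((t - 2*i - 2)/2 + (t - 2*i - 2) % 2) % 2 = 0 then !b else b)
  else if t < n + j then (fc n h (t - j), if (j - i) % 2 = 0 then b else !b)
  else (fc n h (2*n - 1 + j - t), if (j - i) % 2 = 0 then !b else b)

variable {n i j : ℕ} {b : Bool} {h : n ≠ 0} {t : ℕ}

lemma lf1 (ht : t ≤ i) : lf n i j b h t = (fc n h (i - t), b) := by
  unfold lf; rw [if_pos ht]

lemma lf2 (h1 : i < t) (h2 : t ≤ 2*i+1) : lf n i j b h t = (fc n h (t - i - 1), !b) := by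
  unfold lf; rw [if_neg (by omega), if_pos h2]

lemma lf3 (h1 : 2*i+1 < t) (h2 : t < 2*j) :
    lf n i j b h t = (fc n h (i + 1 + (t - 2*i - 2)/2),
      if ((t - 2*i - 2)/2 + (t - 2*i - 2) % 2) % 2 = 0 then !b else b) := by
  unfold lf; rw [if_neg (by omega), if_neg (by omega), if_pos h2]

lemma lf4 (hij : i < j) (h1 : 2*j ≤ t) (h2 : t < n + j) :
    lf n i j b h t = (fc n h (t - j), if (j - i) % 2 = 0 then b else !b) := by
  unfold lf; rw [if_neg (by omega), if_neg (by omega), if_neg (by omega), if_pos h2]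

lemma lf5 (hij : i < j) (hj : j < n) (h1 : n + j ≤ t) :
    lf n i j b h t = (fc n h (2*n - 1 + j - t), if (j - i) % 2 = 0 then !b else b) := by
  unfold lf; rw [if_neg (by omega), if_neg (by omega), if_neg (by omega), if_neg (by omega)]

lemma lf_adj (hij : i < j) (hj : j < n) (ht : t + 1 < 2*n) :
    (ladderGraph n).Adj (lf n i j b h t) (lf n i j b h (t+1)) := by
  rw [ladder_adj_iff]
  have hcase : (t + 1 ≤ i) ∨ (t = i) ∨ (i < t ∧ t + 1 ≤ 2*i+1) ∨
      (t = 2*i+1 ∧ t + 1 < 2*j) ∨ (t = 2*i+1 ∧ 2*j ≤ t + 1) ∨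
      (2*i+1 < t ∧ t + 1 < 2*j) ∨ (2*i+1 < t ∧ t + 1 = 2*j) ∨
      (2*j ≤ t ∧ t + 1 < n + j) ∨ (2*j ≤ t ∧ t + 1 = n + j) ∨ (n + j ≤ t) := by omega
  rcases hcase with h1 | h1 | ⟨h1, h2⟩ | ⟨h1, h2⟩ | ⟨h1, h2⟩ | ⟨h1, h2⟩ | ⟨h1, h2⟩ |
    ⟨h1, h2⟩ | ⟨h1, h2⟩ | h1
  · -- seg1 interior
    rw [lf1 (by omega), lf1 (by omega)]
    dsimp only
    exact Or.inr ⟨rfl, Or.inr (by simp only [fc_val]; omega)⟩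
  · -- t = i, rung at column 0
    rw [lf1 (by omega), lf2 (by omega) (by omega)]
    dsimp only
    exact Or.inl ⟨fc_eq_fc (by omega), by cases b <;> simp⟩
  · -- seg2 interior
    rw [lf2 h1 (by omega), lf2 (by omega) h2]
    dsimp only
    exact Or.inr ⟨rfl, Or.inl (by simp only [fc_val]; omega)⟩
  · -- t = 2i+1 into zigzag
    rw [lf2 (by omega) (by omega), lf3 (by omega) h2]
    dsimp only
    refine Or.inr ⟨?_, Or.inl (by simp only [fc_val]; omega)⟩
    have e1 : (t + 1 - 2*i - 2) = 0 := by omega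
    rw [e1]; norm_num
  · -- t = 2i+1, j = i+1, into seg4
    rw [lf2 (by omega) (by omega), lf4 hij (by omega) (by omega)]
    dsimp only
    refine Or.inr ⟨?_, Or.inl (by simp only [fc_val]; omega)⟩
    have e1 : (j - i) % 2 = 1 := by omega
    rw [e1]; norm_num
  · -- zigzag interior
    rw [lf3 h1 (by omega), lf3 (by omega) h2]
    dsimp only
    rcases Nat.even_or_odd (t - 2*i - 2) with he | he
    · exact Or.inl ⟨fc_eq_fc (by rcases he with ⟨c, hc⟩; omega),
        row_ne _ _ _ (by rcases he with ⟨c, hc⟩; omega)⟩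
    · exact Or.inr ⟨row_eq _ _ _ (by rcases he with ⟨c, hc⟩; omega),
        Or.inl (by simp only [fc_val]; rcases he with ⟨c, hc⟩; omega)⟩
  · -- zigzag into seg4
    rw [lf3 h1 (by omega), lf4 hij (by omega) (by omega)]
    dsimp only
    refine Or.inr ⟨row_eq' _ _ _ ?_, Or.inl (by simp only [fc_val]; omega)⟩
    omega
  · -- seg4a interior
    rw [lf4 hij h1 (by omega), lf4 hij (by omega) h2]
    dsimp only
    exact Or.inr ⟨rfl, Or.inl (by simp only [fc_val]; omega)⟩
  · -- rung at column n-1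
    rw [lf4 hij h1 (by omega), lf5 hij hj (by omega)]
    dsimp only
    exact Or.inl ⟨fc_eq_fc (by omega), row_ne' _ _ _ Iff.rfl⟩
  · -- seg4b interior
    rw [lf5 hij hj h1, lf5 hij hj (by omega)]
    dsimp only
    exact Or.inr ⟨rfl, Or.inr (by simp only [fc_val]; omega)⟩

lemma lf_surj (hij : i < j) (hj : j < n) (c : ℕ) (hc : c < n) (d : Bool) :
    ∃ t, t < 2*n ∧ lf n i j b h t = (⟨c, hc⟩, d) := by
  rcases lt_or_ge i c with hci | hci
  · rcases lt_or_ge c j with hcj | hcj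
    · -- i < c < j : zigzag region
      by_cases hd : d = (if (c - i - 1) % 2 = 0 then !b else b)
      · refine ⟨2*i + 2 + 2*(c - i - 1), by omega, ?_⟩
        rw [lf3 (by omega) (by omega)]
        simp only [Prod.mk.injEq]
        constructor
        · exact Fin.ext (by simp only [fc_val]; omega)
        · have hE : ((2*i + 2 + 2*(c-i-1) - 2*i - 2)/2 +
              (2*i + 2 + 2*(c-i-1) - 2*i - 2) % 2) % 2 = 0 ↔ (c - i - 1) % 2 = 0 := by omega
          rw [if_congr hE rfl rfl]; exact hd.symm
      · refine ⟨2*i + 3 + 2*(c - i - 1), by omega, ?_⟩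
        rw [lf3 (by omega) (by omega)]
        simp only [Prod.mk.injEq]
        constructor
        · exact Fin.ext (by simp only [fc_val]; omega)
        · have hE : ((2*i + 3 + 2*(c-i-1) - 2*i - 2)/2 +
              (2*i + 3 + 2*(c-i-1) - 2*i - 2) % 2) % 2 = 0 ↔ ¬ ((c - i - 1) % 2 = 0) := by
            omega
          rw [if_congr hE rfl rfl]
          revert hd; by_cases hq : (c - i - 1) % 2 = 0 <;>
            simp [hq] <;> cases b <;> cases d <;> simp
    · -- j ≤ c : seg4 region
      by_cases hd : d = (if (j - i) % 2 = 0 then b else !b)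
      · refine ⟨c + j, by omega, ?_⟩
        rw [lf4 hij (by omega) (by omega)]
        simp only [Prod.mk.injEq]
        exact ⟨Fin.ext (by simp only [fc_val]; omega), hd.symm⟩
      · refine ⟨2*n - 1 + j - c, by omega, ?_⟩
        rw [lf5 hij hj (by omega)]
        simp only [Prod.mk.injEq]
        refine ⟨Fin.ext (by simp only [fc_val]; omega), ?_⟩
        revert hd; by_cases hq : (j - i) % 2 = 0 <;>
          simp [hq] <;> cases b <;> cases d <;> simp
  · -- c ≤ i
    by_cases hd : d = b
    · refine ⟨i - c, by omega, ?_⟩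
      rw [lf1 (by omega)]
      simp only [Prod.mk.injEq]
      exact ⟨Fin.ext (by simp only [fc_val]; omega), hd.symm⟩
    · refine ⟨i + 1 + c, by omega, ?_⟩
      rw [lf2 (by omega) (by omega)]
      simp only [Prod.mk.injEq]
      refine ⟨Fin.ext (by simp only [fc_val]; omega), ?_⟩
      revert hd; cases b <;> cases d <;> simp


def mir (n : ℕ) (h : n ≠ 0) (v : Fin n × Bool) : Fin n × Bool :=
  (fc n h (n - 1 - v.1.val), v.2)

lemma mir_adj {n : ℕ} (h : n ≠ 0) {x y : Fin n × Bool}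
    (hxy : (ladderGraph n).Adj x y) : (ladderGraph n).Adj (mir n h x) (mir n h y) := by
  rw [ladder_adj_iff] at hxy ⊢
  have hx := x.1.isLt
  have hy := y.1.isLt
  rcases hxy with ⟨h1, h2⟩ | ⟨h1, h2⟩
  · exact Or.inl ⟨by simp [mir, h1], h2⟩
  · refine Or.inr ⟨h1, ?_⟩
    simp only [mir, fc_val]
    omega

/-- walk from f 0 to f k with support map f (range (k+1)) -/
lemma walk_from {V : Type*} {G : SimpleGraph V} (f : ℕ → V) (N : ℕ)
    (hadj : ∀ t, t + 1 < N → G.Adj (f t) (f (t+1))) :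
    ∀ k, k < N → ∃ p : G.Walk (f 0) (f k), p.support = (List.range (k+1)).map f := by
  intro k
  induction k with
  | zero => intro _; exact ⟨.nil, by simp [List.range_succ]⟩
  | succ k ih =>
    intro hk
    obtain ⟨p, hp⟩ := ih (by omega)
    refine ⟨p.concat (hadj k hk), ?_⟩
    rw [SimpleGraph.Walk.support_concat, hp]
    rw [List.range_succ (n := k+1), List.map_append, List.range_succ (n := k), List.map_append]
    simp

lemma ham_of_fn {V : Type*} [Fintype V] [DecidableEq V] {G : SimpleGraph V}
    (f : ℕ → V) (N : ℕ) (hN : N = Fintype.card V) (h0 : 0 < N)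
    (hadj : ∀ t, t + 1 < N → G.Adj (f t) (f (t+1)))
    (hsurj : ∀ v, ∃ t, t < N ∧ f t = v) :
    ∃ p : G.Walk (f 0) (f (N-1)), p.IsHamiltonian := by
  obtain ⟨p, hp⟩ := walk_from f N hadj (N-1) (by omega)
  refine ⟨p, ?_⟩
  have hsupp : p.support = (List.range N).map f := by
    rw [hp]; congr 2; omega
  have hmem : ∀ v : V, v ∈ p.support := by
    intro v
    obtain ⟨t, ht, rfl⟩ := hsurj v
    rw [hsupp]
    exact List.mem_map_of_mem (List.mem_range.2 ht)
  have htf : p.support.toFinset = Finset.univ := by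
    apply Finset.eq_univ_of_forall
    intro v; simpa using hmem v
  have hlen : p.support.length = N := by rw [hsupp]; simp
  have hsum : ∑ v : V, p.support.count v = ∑ v : V, 1 := by
    rw [← htf, List.sum_toFinset_count_eq_length, htf]
    simp [hlen, hN, Finset.card_univ]
  intro v
  have hle : ∀ v ∈ Finset.univ, 1 ≤ p.support.count v :=
    fun v _ => List.count_pos_iff.2 (hmem v)
  exact ((Finset.sum_eq_sum_iff_of_le hle).1 hsum.symm v (Finset.mem_univ v)).symm

lemma ham_of_fn' {V : Type*} [Fintype V] [DecidableEq V] {G : SimpleGraph V}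
    (f : ℕ → V) (N : ℕ) (hN : N = Fintype.card V) (h0 : 0 < N)
    (hadj : ∀ t, t + 1 < N → G.Adj (f t) (f (t+1)))
    (hsurj : ∀ v, ∃ t, t < N ∧ f t = v)
    (a c : V) (ha : f 0 = a) (hc : f (N-1) = c) :
    ∃ p : G.Walk a c, p.IsHamiltonian := by
  subst ha; subst hc
  exact ham_of_fn f N hN h0 hadj hsurj

/-- In the ladder of length `n`, for any two distinct levels `i, j` and
any vertex `u` of level `i`, there is a Hamiltonian path starting at `u` and ending at
some vertex of level `j`. -/
theorem ladder_hamiltonian_path_between_levels (n : ℕ) (i j : Fin n) (hij : i ≠ j)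
    (u : Fin n × Bool) (hu : u.1 = i) :
    ∃ (v : Fin n × Bool) (p : (ladderGraph n).Walk u v),
      p.IsHamiltonian ∧ v.1 = j := by
  have hn : n ≠ 0 := by have := i.isLt; omega
  have hcard : 2*n = Fintype.card (Fin n × Bool) := by simp; omega
  obtain ⟨ui, b⟩ := u
  dsimp at hu
  have hu' : i = ui := hu.symm
  subst hu'
  have hvij : i.val ≠ j.val := fun e => hij (Fin.ext e)
  rcases Nat.lt_or_ge i.val j.val with hlt | hge
  · set f : ℕ → Fin n × Bool := lf n i.val j.val b hn with hf
    have hadj : ∀ t, t + 1 < 2*n → (ladderGraph n).Adj (f t) (f (t+1)) :=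
      fun t ht => lf_adj hlt j.isLt ht
    have hsurj : ∀ v : Fin n × Bool, ∃ t, t < 2*n ∧ f t = v := by
      rintro ⟨c, d⟩
      obtain ⟨t, ht, he⟩ := lf_surj (b := b) (h := hn) hlt j.isLt c.val c.isLt d
      exact ⟨t, ht, by rw [hf, he]⟩
    have ha : f 0 = (i, b) := by
      rw [hf, lf1 (Nat.zero_le _)]
      exact Prod.ext (Fin.ext (by simp [fc_val]; omega)) rfl
    have hlast : f (2*n - 1) = (fc n hn (2*n - 1 + j.val - (2*n-1)),
        if (j.val - i.val) % 2 = 0 then !b else b) := by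
      rw [hf, lf5 hlt j.isLt (by have := j.isLt; omega)]
    obtain ⟨p, hp⟩ := ham_of_fn' f (2*n) hcard (by omega) hadj hsurj (i, b) (f (2*n-1)) ha rfl
    refine ⟨f (2*n-1), p, hp, ?_⟩
    rw [hlast]
    exact Fin.ext (by have := j.isLt; simp [fc_val]; omega)
  · have hlt' : n - 1 - i.val < n - 1 - j.val := by have := i.isLt; omega
    have hjn : n - 1 - j.val < n := by omega
    set f : ℕ → Fin n × Bool :=
      fun t => mir n hn (lf n (n-1-i.val) (n-1-j.val) b hn t) with hf
    have hadj : ∀ t, t + 1 < 2*n → (ladderGraph n).Adj (f t) (f (t+1)) :=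
      fun t ht => mir_adj hn (lf_adj hlt' hjn ht)
    have hsurj : ∀ v : Fin n × Bool, ∃ t, t < 2*n ∧ f t = v := by
      rintro ⟨c, d⟩
      obtain ⟨t, ht, he⟩ := lf_surj (b := b) (h := hn) hlt' hjn
        (n - 1 - c.val) (by omega) d
      refine ⟨t, ht, ?_⟩
      rw [hf]; dsimp only; rw [he]
      have hcn := c.isLt
      exact Prod.ext (Fin.ext (by simp [mir, fc_val]; omega)) rfl
    have ha : f 0 = (i, b) := by
      rw [hf]; dsimp only; rw [lf1 (Nat.zero_le _)]
      have := i.isLt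
      exact Prod.ext (Fin.ext (by simp [mir, fc_val]; omega)) rfl
    obtain ⟨p, hp⟩ := ham_of_fn' f (2*n) hcard (by omega) hadj hsurj (i, b) (f (2*n-1)) ha rfl
    refine ⟨f (2*n-1), p, hp, ?_⟩
    rw [hf]; dsimp only; rw [lf5 hlt' hjn (by omega)]
    have := j.isLt
    exact Fin.ext (by simp [mir, fc_val]; omega)
end

section
/- Let G be a directed graph rooted in r and let H be a directed graph built on G, meaning that V(H) = V(G), every arc of G is an arc of H, and for every arc u → v of H that is not an arc of G, the vertex u is a descendant of v in G (every directed path in G from r to u passes through v). Then (i) the arborescences of H rooted in r are exactly the arborescences of G rooted in r (no arc of H outside G appears in any arborescence of H), and (ii) the flip graph of H rooted in r is isomorphic to the flip graph of G rooted in r. -/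
/-- `u` is a descendant of `v` in the digraph `G` rooted in `r`: every directed path
(given as the list of its vertices) from `r` to `u` in `G` passes through `v`. -/
def IsDescendant {V : Type*} (G : V → V → Prop) (r v u : V) : Prop :=
  ∀ l : List V, l.Chain' G → l.head? = some r → l.getLast? = some u → v ∈ l

lemma desc_trans {V : Type*} {G : V → V → Prop} {r u v x : V}
    (h1 : IsDescendant G r u x) (h2 : IsDescendant G r v u) : IsDescendant G r v x := by
  intro l hc hh hl
  have hu := h1 l hc hh hl
  obtain ⟨l1, l2, rfl⟩ := List.append_of_mem hu
  rcases l1 with _ | ⟨a, l1'⟩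
  · simp only [List.nil_append, List.head?_cons, Option.some.injEq] at hh
    have := h2 [u] (List.isChain_singleton u) (by simp [hh]) rfl
    simp only [List.mem_singleton] at this
    subst this
    exact List.mem_cons_self
  · have hpref : List.Chain' G ((a :: l1') ++ [u]) :=
      hc.prefix ⟨l2, by simp⟩
    have ha : a = r := by
      simp only [List.cons_append, List.head?_cons, Option.some.injEq] at hh
      exact hh
    have hv := h2 _ hpref (by simp [ha]) (by rw [List.getLast?_concat])
    rcases List.mem_append.1 hv with h | h
    · exact List.mem_append.2 (Or.inl h)
    · simp only [List.mem_singleton] at h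
      subst h
      exact List.mem_append.2 (Or.inr List.mem_cons_self)

lemma no_cycle {V : Type*} {G : V → V → Prop} {r : V} (A : Arborescence G r)
    {u v : V} (huv : (u, v) ∈ A.arcs)
    (hvu : Relation.ReflTransGen (fun x y => (x, y) ∈ A.arcs) v u) : False := by
  set R := fun x y => (x, y) ∈ A.arcs with hR
  set S := fun w => Relation.ReflTransGen R v w ∧ Relation.ReflTransGen R w v with hS
  have in_S : ∀ w, S w → ∃ s, S s ∧ (s, w) ∈ A.arcs := by
    intro w hw
    rcases Relation.ReflTransGen.cases_tail hw.1 with h | ⟨c, hc, hcw⟩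
    · subst h
      exact ⟨u, ⟨hvu, Relation.ReflTransGen.single huv⟩, huv⟩
    · exact ⟨c, ⟨hc, Relation.ReflTransGen.head hcw hw.2⟩, hcw⟩
  have hne : ∀ w, S w → w ≠ r := by
    intro w hw
    obtain ⟨s, _, harc⟩ := in_S w hw
    exact A.noRoot (s, w) harc
  have key : ∀ w, Relation.ReflTransGen R r w → ¬ S w := by
    intro w hw
    induction hw with
    | refl => exact fun h => hne r h rfl
    | tail hp harc ih =>
      rename_i p w'
      intro hw'
      obtain ⟨s, hs, harc'⟩ := in_S w' hw'
      obtain ⟨a, -, hun⟩ := A.uniqueIn w' (hne w' hw')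
      have h1 := hun (p, w') ⟨harc, rfl⟩
      have h2 := hun (s, w') ⟨harc', rfl⟩
      have h3 : p = s := by
        have h4 := h1.trans h2.symm
        exact (Prod.mk.injEq _ _ _ _ ▸ h4).1
      exact ih (h3 ▸ hs)
  exact key v (A.reach v) ⟨Relation.ReflTransGen.refl, Relation.ReflTransGen.refl⟩

lemma tree_reach {V : Type*} {G H : V → V → Prop} {r : V}
    (hback : ∀ x y, H x y → ¬ G x y → IsDescendant G r y x)
    (A : Arborescence H r) :
    ∀ u, Relation.ReflTransGen (fun x y => (x, y) ∈ A.arcs) r u →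
      ∀ v, IsDescendant G r v u →
        Relation.ReflTransGen (fun x y => (x, y) ∈ A.arcs) v u := by
  intro u hu
  induction hu with
  | refl =>
    intro v hv
    have := hv [r] (List.isChain_singleton r) rfl rfl
    simp only [List.mem_singleton] at this
    subst this; exact Relation.ReflTransGen.refl
  | tail hp harc ih =>
    rename_i x u'
    intro v hv
    by_cases hvu : v = u'
    · subst hvu; exact Relation.ReflTransGen.refl
    have hdx : IsDescendant G r v x := by
      by_cases hG : G x u'
      · intro l hc hh hl
        have hc' : List.Chain' G (l ++ [u']) := by
          rw [List.Chain', List.isChain_append]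
          refine ⟨hc, List.isChain_singleton _, ?_⟩
          intro a ha b hb
          simp only [List.head?_cons, Option.mem_some_iff] at hb
          rw [hl] at ha
          simp only [Option.mem_some_iff] at ha
          subst ha; subst hb; exact hG
        have hlne : l ≠ [] := by rintro rfl; simp at hh
        have hh' : (l ++ [u']).head? = some r := by
          rwa [List.head?_append_of_ne_nil _ hlne]
        have hv' := hv _ hc' hh' (by simp)
        rcases List.mem_append.1 hv' with h | h
        · exact h
        · simp only [List.mem_singleton] at h; exact absurd h hvu
      · exact desc_trans (hback x u' (A.sub (x, u') harc) hG) hv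
    exact Relation.ReflTransGen.tail (ih v hdx) harc

/-- Let `H` be built on `G` (rooted in `r`): same vertex set, every arc
of `G` is an arc of `H`, and the tail of every arc of `H` not in `G` is a descendant of
its head in `G`. Then (i) no arc of `H` outside `G` appears in any arborescence of `H`
(so the arborescences of `H` are exactly those of `G`), and (ii) the flip graphs of `H`
and `G` rooted in `r` are isomorphic. -/
theorem flipGraph_built_on {V : Type*} [Fintype V] [DecidableEq V]
    (G H : V → V → Prop) (r : V)
    (hGH : ∀ x y, G x y → H x y)
    (hback : ∀ x y, H x y → ¬ G x y → IsDescendant G r y x) :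
    (∀ A : Arborescence H r, ∀ a ∈ A.arcs, G a.1 a.2) ∧
      Nonempty (FlipGraph H r ≃g FlipGraph G r) := by
  have parti : ∀ A : Arborescence H r, ∀ a ∈ A.arcs, G a.1 a.2 := by
    intro A a ha
    by_contra hnG
    have hHa : H a.1 a.2 := A.sub a ha
    have hdesc : IsDescendant G r a.2 a.1 := hback a.1 a.2 hHa hnG
    have hr : Relation.ReflTransGen (fun x y => (x, y) ∈ A.arcs) a.2 a.1 :=
      tree_reach hback A a.1 (A.reach a.1) a.2 hdesc
    exact no_cycle A (by rwa [Prod.mk.eta]) hr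
  refine ⟨parti, ⟨⟨⟨fun A => ⟨A.arcs, parti A, A.noRoot, A.uniqueIn, A.reach⟩,
    fun B => ⟨B.arcs, fun a ha => hGH a.1 a.2 (B.sub a ha), B.noRoot, B.uniqueIn, B.reach⟩,
    fun A => Arborescence.ext' rfl, fun B => Arborescence.ext' rfl⟩, ?_⟩⟩⟩
  intro A B
  show (_ ≠ _ ∧ _) ↔ (_ ≠ _ ∧ _)
  constructor
  · rintro ⟨h1, h2, h3⟩
    exact ⟨fun h => h1 (by cases h; rfl), h2, h3⟩
  · rintro ⟨h1, h2, h3⟩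
    refine ⟨?_, h2, h3⟩
    intro h
    apply h1
    apply Arborescence.ext'
    have h4 := congrArg Arborescence.arcs h
    exact h4
end

section
/- Let G be a directed graph rooted in r, let rx be an arc of G out of the root, and let G' = G/rx be the directed graph obtained by contracting the arc rx into a new root r'. Let A' be an arborescence of G' rooted in r'. If the flip graph of G' rooted in r' contains a Hamiltonian path starting at A', then the subgraph of the flip graph of G rooted in r induced by the arborescences of G containing the arc rx contains a Hamiltonian path starting at any arborescence A of G containing rx whose contraction along rx equals A'. -/
/-- The contraction `G/rx` of the arc `r → x` of `G`: the vertices `r` and `x` are merged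
into a single new root (represented by `r` itself, on the vertex set `{v // v ≠ x}`),
whose outneighbours are those of `r` and of `x` (other than the new root itself) and whose
inneighbours are the vertices having an arc to `r` or to `x`; all other arcs are kept. -/
def ContractRoot {V : Type*} (G : V → V → Prop) (r x : V) :
    {v : V // v ≠ x} → {v : V // v ≠ x} → Prop := fun a b =>
  a ≠ b ∧
    ((a.1 = r ∧ (G r b.1 ∨ G x b.1)) ∨
     (b.1 = r ∧ (G a.1 r ∨ G a.1 x)) ∨
     (a.1 ≠ r ∧ b.1 ≠ r ∧ G a.1 b.1))

/-- The contraction of a set of arcs containing `(r, x)` along the arc `(r, x)`: the arc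
`(r, x)` is removed and in every remaining arc the tail `x` is renamed to `r`. -/
def contractArcs {V : Type*} [DecidableEq V] (r x : V) (s : Finset (V × V)) :
    Finset (V × V) :=
  (s.erase (r, x)).image (fun a => (if a.1 = x then r else a.1, a.2))

section Basic
variable {V : Type*} [DecidableEq V] {G : V → V → Prop} {r : V}

theorem Arborescence.eq_of_head {T : Arborescence G r} {a b : V × V}
    (ha : a ∈ T.arcs) (hb : b ∈ T.arcs) (h : a.2 = b.2) : a = b := by
  obtain ⟨c, -, hc⟩ := T.uniqueIn a.2 (T.noRoot a ha)
  exact (hc a ⟨ha, rfl⟩).trans (hc b ⟨hb, h.symm⟩).symm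

theorem Arborescence.no_loop {T : Arborescence G r} {a : V × V}
    (ha : a ∈ T.arcs) : a.1 ≠ a.2 := by
  have key : ∀ v, Relation.ReflTransGen (fun x y => (x, y) ∈ T.arcs) r v →
      (v, v) ∈ T.arcs → False := by
    intro v h
    induction h with
    | refl => exact fun hm => T.noRoot _ hm rfl
    | @tail b c _ hbc ih =>
      intro hm
      have hbceq : (b, c) = (c, c) := T.eq_of_head hbc hm rfl
      have hb : b = c := by simpa [Prod.ext_iff] using hbceq
      subst hb
      exact ih hm
  intro h
  obtain ⟨a1, a2⟩ := a
  dsimp at h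
  subst h
  exact key a1 (T.reach a1) ha

theorem Arborescence.exists_inarc {T : Arborescence G r} {v : V} (hv : v ≠ r) :
    ∃ a ∈ T.arcs, a.2 = v := by
  obtain ⟨a, ha, -⟩ := T.uniqueIn v hv
  exact ⟨a, ha.1, ha.2⟩

/-- The arc set of an arborescence is in bijection with the non-root vertices. -/
theorem Arborescence.card_arcs [Fintype V] (T : Arborescence G r) :
    T.arcs.card = (Finset.univ.filter (fun v : V => v ≠ r)).card := by
  apply Finset.card_bij (fun a _ => a.2)
  · intro a ha; simp [T.noRoot a ha]
  · intro a ha b hb h; exact T.eq_of_head ha hb h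
  · intro v hv
    obtain ⟨a, ha, h2⟩ := T.exists_inarc (by simpa using hv)
    exact ⟨a, ha, h2⟩

end Basic

/-- Hypercube Hamiltonian path lemma: if `g` embeds the subsets of a finite set `s`
into a graph `H` such that toggling one element gives adjacent vertices, then from any
starting subset there is a path covering exactly the image of the powerset of `s`. -/
theorem cube_ham {α W : Type*} [DecidableEq α] (H : SimpleGraph W)
    (s : Finset α) :
    ∀ (g : Finset α → W)
      (_ : ∀ t₁, t₁ ⊆ s → ∀ t₂, t₂ ⊆ s → g t₁ = g t₂ → t₁ = t₂)
      (_ : ∀ t, t ⊆ s → ∀ a ∈ s, a ∉ t → H.Adj (g t) (g (insert a t)))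
      (start : Finset α) (_ : start ⊆ s),
    ∃ tend, tend ⊆ s ∧ ∃ p : H.Walk (g start) (g tend),
      p.support.Nodup ∧ (∀ z ∈ p.support, ∃ t, t ⊆ s ∧ g t = z) ∧
      (∀ t, t ⊆ s → g t ∈ p.support) := by
  classical
  induction s using Finset.induction_on with
  | empty =>
    intro g hinj hadj start hstart
    have hs : start = ∅ := Finset.subset_empty.mp hstart
    subst hs
    refine ⟨∅, le_refl _, SimpleGraph.Walk.nil, by simp, ?_, ?_⟩
    · intro z hz; simp at hz; exact ⟨∅, le_refl _, hz.symm⟩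
    · intro t ht; simp [Finset.subset_empty.mp ht]
  | @insert a s ha ih =>
    intro g hinj hadj start hstart
    -- restricted hypotheses for the two half-cubes
    have hinj₁ : ∀ t₁, t₁ ⊆ s → ∀ t₂, t₂ ⊆ s → g t₁ = g t₂ → t₁ = t₂ := fun t₁ h₁ t₂ h₂ h =>
      hinj t₁ (h₁.trans (Finset.subset_insert a s)) t₂ (h₂.trans (Finset.subset_insert a s)) h
    have hadj₁ : ∀ t, t ⊆ s → ∀ b ∈ s, b ∉ t → H.Adj (g t) (g (insert b t)) := fun t ht b hb hbt =>
      hadj t (ht.trans (Finset.subset_insert a s)) b (Finset.mem_insert_of_mem hb) hbt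
    set g₂ : Finset α → W := fun t => g (insert a t) with hg₂
    have hinj₂ : ∀ t₁, t₁ ⊆ s → ∀ t₂, t₂ ⊆ s → g₂ t₁ = g₂ t₂ → t₁ = t₂ := by
      intro t₁ h₁ t₂ h₂ h
      have := hinj _ (Finset.insert_subset_insert a h₁) _ (Finset.insert_subset_insert a h₂) h
      have h1 : t₁ = (insert a t₁).erase a := by
        rw [Finset.erase_insert]; intro hc; exact ha (h₁ hc)
      have h2 : t₂ = (insert a t₂).erase a := by
        rw [Finset.erase_insert]; intro hc; exact ha (h₂ hc)
      rw [h1, h2, this]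
    have hadj₂ : ∀ t, t ⊆ s → ∀ b ∈ s, b ∉ t → H.Adj (g₂ t) (g₂ (insert b t)) := by
      intro t ht b hb hbt
      have hba : b ≠ a := fun h => ha (h ▸ hb)
      have := hadj (insert a t) (Finset.insert_subset_insert a (ht.trans (Finset.subset_insert a s)) |>.trans (by rw [Finset.insert_idem]))
        b (Finset.mem_insert_of_mem hb) (by simp [hba, hbt])
      simpa [hg₂, Finset.insert_comm] using this
    have disj : ∀ z₁, (∃ t, t ⊆ s ∧ g t = z₁) → ∀ z₂, (∃ t, t ⊆ s ∧ g₂ t = z₂) → z₁ ≠ z₂ := by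
      rintro z₁ ⟨t₁, h₁, rfl⟩ z₂ ⟨t₂, h₂, rfl⟩ h
      have := hinj t₁ (h₁.trans (Finset.subset_insert a s)) (insert a t₂)
        (Finset.insert_subset_insert a h₂) h
      exact ha (h₁ (this ▸ Finset.mem_insert_self a t₂))
    by_cases hmem : a ∈ start
    · -- start in the upper half: traverse it first, then the lower half
      have hs' : start.erase a ⊆ s := fun b hb => by
        rcases Finset.mem_erase.mp hb with ⟨hba, hbs⟩
        rcases Finset.mem_insert.mp (hstart hbs) with h | h
        · exact absurd h hba
        · exact h
      obtain ⟨e₁, he₁, p₁, hnd₁, hcov₁, hall₁⟩ := ih g₂ hinj₂ hadj₂ (start.erase a) hs'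
      have hedge : H.Adj (g₂ e₁) (g e₁) :=
        (hadj e₁ (he₁.trans (Finset.subset_insert a s)) a (Finset.mem_insert_self a s)
          (fun h => ha (he₁ h))).symm
      obtain ⟨e₂, he₂, p₂, hnd₂, hcov₂, hall₂⟩ := ih g hinj₁ hadj₁ e₁ he₁
      have hstart_eq : g start = g₂ (start.erase a) := by
        rw [hg₂]; congr 1; rw [Finset.insert_erase hmem]
      set p : H.Walk (g start) (g e₂) :=
        (p₁.copy hstart_eq.symm rfl).append (SimpleGraph.Walk.cons hedge p₂) with hp
      have hsupp : p.support = p₁.support ++ p₂.support := by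
        rw [hp, SimpleGraph.Walk.support_append, SimpleGraph.Walk.support_cons,
          SimpleGraph.Walk.support_copy, List.tail_cons]
      refine ⟨e₂, he₂.trans (Finset.subset_insert a s), p, ?_, ?_, ?_⟩
      · rw [hsupp, List.nodup_append]
        refine ⟨hnd₁, hnd₂, fun z hz₁ z' hz₂ hzz => ?_⟩
        rw [← hzz] at hz₂
        obtain ⟨t₁, ht₁, hg₁⟩ := hcov₁ z hz₁
        obtain ⟨t₂, ht₂, hg₂'⟩ := hcov₂ z hz₂
        exact disj z ⟨t₂, ht₂, hg₂'⟩ z ⟨t₁, ht₁, hg₁⟩ rfl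
      · intro z hz
        rw [hsupp, List.mem_append] at hz
        rcases hz with hz | hz
        · obtain ⟨t, ht, hg⟩ := hcov₁ z hz
          exact ⟨insert a t, Finset.insert_subset_insert a ht, hg⟩
        · obtain ⟨t, ht, hg⟩ := hcov₂ z hz
          exact ⟨t, ht.trans (Finset.subset_insert a s), hg⟩
      · intro t ht
        rw [hsupp, List.mem_append]
        by_cases hat : a ∈ t
        · left
          have : g t = g₂ (t.erase a) := by rw [hg₂]; congr 1; rw [Finset.insert_erase hat]
          rw [this]
          exact hall₁ (t.erase a) (fun b hb => by
            rcases Finset.mem_erase.mp hb with ⟨hba, hbs⟩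
            rcases Finset.mem_insert.mp (ht hbs) with h | h
            · exact absurd h hba
            · exact h)
        · right
          exact hall₂ t (fun b hb => by
            rcases Finset.mem_insert.mp (ht hb) with h | h
            · exact absurd (h ▸ hb) hat
            · exact h)
    · -- start in the lower half
      have hs' : start ⊆ s := fun b hb => by
        rcases Finset.mem_insert.mp (hstart hb) with h | h
        · exact absurd (h ▸ hb) hmem
        · exact h
      obtain ⟨e₁, he₁, p₁, hnd₁, hcov₁, hall₁⟩ := ih g hinj₁ hadj₁ start hs'
      have hedge : H.Adj (g e₁) (g₂ e₁) :=
        hadj e₁ (he₁.trans (Finset.subset_insert a s)) a (Finset.mem_insert_self a s)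
          (fun h => ha (he₁ h))
      obtain ⟨e₂, he₂, p₂, hnd₂, hcov₂, hall₂⟩ := ih g₂ hinj₂ hadj₂ e₁ he₁
      set p : H.Walk (g start) (g₂ e₂) :=
        p₁.append (SimpleGraph.Walk.cons hedge p₂) with hp
      have hsupp : p.support = p₁.support ++ p₂.support := by
        rw [hp, SimpleGraph.Walk.support_append, SimpleGraph.Walk.support_cons,
          List.tail_cons]
      refine ⟨insert a e₂, Finset.insert_subset_insert a he₂, p, ?_, ?_, ?_⟩
      · rw [hsupp, List.nodup_append]
        refine ⟨hnd₁, hnd₂, fun z hz₁ z' hz₂ hzz => ?_⟩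
        rw [← hzz] at hz₂
        obtain ⟨t₁, ht₁, hg₁⟩ := hcov₁ z hz₁
        obtain ⟨t₂, ht₂, hg₂'⟩ := hcov₂ z hz₂
        exact disj z ⟨t₁, ht₁, hg₁⟩ z ⟨t₂, ht₂, hg₂'⟩ rfl
      · intro z hz
        rw [hsupp, List.mem_append] at hz
        rcases hz with hz | hz
        · obtain ⟨t, ht, hg⟩ := hcov₁ z hz
          exact ⟨t, ht.trans (Finset.subset_insert a s), hg⟩
        · obtain ⟨t, ht, hg⟩ := hcov₂ z hz
          exact ⟨insert a t, Finset.insert_subset_insert a ht, hg⟩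
      · intro t ht
        rw [hsupp, List.mem_append]
        by_cases hat : a ∈ t
        · right
          have : g t = g₂ (t.erase a) := by rw [hg₂]; congr 1; rw [Finset.insert_erase hat]
          rw [this]
          exact hall₂ (t.erase a) (fun b hb => by
            rcases Finset.mem_erase.mp hb with ⟨hba, hbs⟩
            rcases Finset.mem_insert.mp (ht hbs) with h | h
            · exact absurd h hba
            · exact h)
        · left
          exact hall₁ t (fun b hb => by
            rcases Finset.mem_insert.mp (ht hb) with h | h
            · exact absurd (h ▸ hb) hat
            · exact h)

/-- Lifting a Hamiltonian path along a "fibration" of graphs: if every fiber of `f` can be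
traversed by a path of `H` from any starting point, and every quotient-edge can be followed
from any point of a fiber, then any path of `Q` lifts to a path of `H` covering exactly the
fibers over its support. -/
theorem lift_ham {W U : Type*} {H : SimpleGraph W} {Q : SimpleGraph U} (f : W → U)
    (hfib : ∀ w : W, ∃ e : W, ∃ p : H.Walk w e, p.support.Nodup ∧
      (∀ z ∈ p.support, f z = f w) ∧ (∀ z, f z = f w → z ∈ p.support))
    (hb : ∀ (w : W) (u' : U), Q.Adj (f w) u' → ∃ w', f w' = u' ∧ H.Adj w w') :
    ∀ {u b : U} (q : Q.Walk u b), q.IsPath → ∀ w : W, f w = u →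
      ∃ (e : W) (p : H.Walk w e), p.support.Nodup ∧
        (∀ z ∈ p.support, f z ∈ q.support) ∧ (∀ z, f z ∈ q.support → z ∈ p.support) := by
  intro u b q
  induction q with
  | nil =>
    intro _ w hw
    obtain ⟨e, p, hnd, h1, h2⟩ := hfib w
    refine ⟨e, p, hnd, fun z hz => by simp [h1 z hz, hw], fun z hz => ?_⟩
    simp only [SimpleGraph.Walk.support_nil, List.mem_singleton] at hz
    exact h2 z (by rw [hz, hw])
  | @cons u u₂ b hadj q ih =>
    intro hp w hw
    obtain ⟨e₁, p₁, hnd₁, h1, h2⟩ := hfib w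
    have he₁ : f e₁ = u := by
      have := h1 e₁ (SimpleGraph.Walk.end_mem_support p₁)
      rw [this, hw]
    obtain ⟨w₂, hw₂, hadj₂⟩ := hb e₁ u₂ (by rw [he₁]; exact hadj)
    have hp' := (SimpleGraph.Walk.cons_isPath_iff hadj q).mp hp
    obtain ⟨e, p₂, hnd₂, h1', h2'⟩ := ih hp'.1 w₂ hw₂
    set p : H.Walk w e := p₁.append (SimpleGraph.Walk.cons hadj₂ p₂) with hpdef
    have hsupp : p.support = p₁.support ++ p₂.support := by
      rw [hpdef, SimpleGraph.Walk.support_append, SimpleGraph.Walk.support_cons,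
        List.tail_cons]
    refine ⟨e, p, ?_, ?_, ?_⟩
    · rw [hsupp, List.nodup_append]
      refine ⟨hnd₁, hnd₂, fun z hz₁ z' hz₂ hzz => ?_⟩
      rw [← hzz] at hz₂
      have hz1 : f z = u := by rw [h1 z hz₁, hw]
      have hz2 : f z ∈ q.support := h1' z hz₂
      exact hp'.2 (hz1 ▸ hz2)
    · intro z hz
      rw [hsupp, List.mem_append] at hz
      rw [SimpleGraph.Walk.support_cons]
      rcases hz with hz | hz
      · rw [h1 z hz, hw]; exact List.mem_cons_self
      · exact List.mem_cons_of_mem _ (h1' z hz)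
    · intro z hz
      rw [SimpleGraph.Walk.support_cons, List.mem_cons] at hz
      rw [hsupp, List.mem_append]
      rcases hz with hz | hz
      · exact Or.inl (h2 z (by rw [hz, hw]))
      · exact Or.inr (h2' z hz)

/-! ### The contraction of an arborescence containing the root arc -/

section Contract
variable {V : Type*} [Fintype V] [DecidableEq V] {G : V → V → Prop} {r x : V}

/-- The tail-renaming map on arcs. -/
def mMap (r x : V) : V × V → V × V := fun a => (if a.1 = x then r else a.1, a.2)

/-- Forgetting the subtype structure of an arc of the contracted digraph. -/
def toVmap (x : V) : {v : V // v ≠ x} × {v : V // v ≠ x} → V × V := fun a => (a.1.1, a.2.1)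

theorem toVmap_inj : Function.Injective (toVmap (V := V) x) := by
  rintro ⟨⟨a, _⟩, ⟨b, _⟩⟩ ⟨⟨c, _⟩, ⟨d, _⟩⟩ h
  simpa [toVmap, Prod.ext_iff, Subtype.ext_iff] using h

theorem mem_contractArcs {s : Finset (V × V)} {c : V × V} :
    c ∈ contractArcs r x s ↔ ∃ b, b ∈ s ∧ b ≠ (r, x) ∧ mMap r x b = c := by
  simp only [contractArcs, Finset.mem_image, Finset.mem_erase]
  constructor
  · rintro ⟨b, ⟨h1, h2⟩, h3⟩; exact ⟨b, h2, h1, h3⟩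
  · rintro ⟨b, h2, h1, h3⟩; exact ⟨b, ⟨h1, h2⟩, h3⟩

theorem Arborescence.head_ne_x {T : Arborescence G r} (hT : (r, x) ∈ T.arcs)
    {a : V × V} (ha : a ∈ T.arcs) (h : a ≠ (r, x)) : a.2 ≠ x :=
  fun hx => h (T.eq_of_head ha hT hx)

/-- The arc set of the contraction of an arborescence. -/
def cArcs (r x : V) (s : Finset (V × V)) : Finset ({v : V // v ≠ x} × {v : V // v ≠ x}) :=
  Finset.univ.filter (fun a => toVmap x a ∈ contractArcs r x s)

theorem mem_cArcs {s : Finset (V × V)} {a : {v : V // v ≠ x} × {v : V // v ≠ x}} :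
    a ∈ cArcs r x s ↔ ∃ b, b ∈ s ∧ b ≠ (r, x) ∧ mMap r x b = toVmap x a := by
  simp only [cArcs, Finset.mem_filter, Finset.mem_univ, true_and, mem_contractArcs]

theorem cArcs_image (hne : r ≠ x) {s : Finset (V × V)}
    (hs : ∀ b ∈ s, b ≠ (r, x) → b.2 ≠ x) :
    (cArcs r x s).image (toVmap x) = contractArcs r x s := by
  ext c
  simp only [Finset.mem_image]
  constructor
  · rintro ⟨a, ha, rfl⟩
    exact mem_contractArcs.mpr (mem_cArcs.mp ha)
  · intro hc
    obtain ⟨b, hb, hbne, hbm⟩ := mem_contractArcs.mp hc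
    have h1 : c.1 ≠ x := by
      rw [← hbm]; dsimp [mMap]; split_ifs with h
      · exact hne
      · exact h
    have h2 : c.2 ≠ x := by rw [← hbm]; exact hs b hb hbne
    refine ⟨(⟨c.1, h1⟩, ⟨c.2, h2⟩), ?_, rfl⟩
    exact mem_cArcs.mpr ⟨b, hb, hbne, hbm⟩

variable (hne : r ≠ x)

/-- The contraction of an arborescence of `G` containing the arc `(r, x)` is an
arborescence of the contracted digraph. -/
def contractT (T : {T : Arborescence G r // (r, x) ∈ T.arcs}) :
    Arborescence (ContractRoot G r x) ⟨r, hne⟩ where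
  arcs := cArcs r x T.1.arcs
  sub := by
    intro a ha
    obtain ⟨b, hb, hbne, hbm⟩ := mem_cArcs.mp ha
    have hfst : (if b.1 = x then r else b.1) = a.1.1 := congrArg Prod.fst hbm
    have hsnd : b.2 = a.2.1 := congrArg Prod.snd hbm
    have hGb := T.1.sub b hb
    have hb2r : b.2 ≠ r := T.1.noRoot b hb
    have hb2x : b.2 ≠ x := T.1.head_ne_x T.2 hb hbne
    by_cases hbx : b.1 = x
    · rw [if_pos hbx] at hfst
      refine ⟨fun h => hb2r (by rw [hsnd, ← congrArg Subtype.val h, ← hfst]), ?_⟩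
      exact Or.inl ⟨hfst.symm, Or.inr (by rw [← hsnd]; exact hbx ▸ hGb)⟩
    · rw [if_neg hbx] at hfst
      have hab : a.1.1 = b.1 := hfst.symm
      by_cases hbr : b.1 = r
      · refine ⟨fun h => hb2r (by rw [hsnd, ← congrArg Subtype.val h, hab, hbr]), ?_⟩
        exact Or.inl ⟨hab.trans hbr, Or.inl (by rw [← hsnd]; exact hbr ▸ hGb)⟩
      · refine ⟨fun h => T.1.no_loop hb (by rw [← hab, congrArg Subtype.val h, ← hsnd]), ?_⟩
        refine Or.inr (Or.inr ⟨fun hh => hbr (by rw [← hab]; exact hh),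
          fun hh => hb2r (by rw [hsnd]; exact hh), by rw [hab, ← hsnd]; exact hGb⟩)
  noRoot := by
    intro a ha h
    obtain ⟨b, hb, hbne, hbm⟩ := mem_cArcs.mp ha
    have hsnd : b.2 = a.2.1 := congrArg Prod.snd hbm
    exact T.1.noRoot b hb (by rw [hsnd, congrArg Subtype.val h])
  uniqueIn := by
    intro v hv
    have hvr : v.1 ≠ r := fun h => hv (Subtype.ext h)
    obtain ⟨c, hc, hc2⟩ := Arborescence.exists_inarc (T := T.1) hvr
    have hcne : c ≠ (r, x) := fun h => v.2 (by rw [← hc2, h])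
    have htail : (if c.1 = x then r else c.1) ≠ x := by
      split_ifs with h
      · exact hne
      · exact h
    refine ⟨(⟨if c.1 = x then r else c.1, htail⟩, v), ⟨?_, rfl⟩, ?_⟩
    · exact mem_cArcs.mpr ⟨c, hc, hcne, by simp [mMap, toVmap, hc2]⟩
    · rintro a' ⟨ha', rfl⟩
      obtain ⟨b', hb', hbne', hbm'⟩ := mem_cArcs.mp ha'
      have hsnd : b'.2 = a'.2.1 := congrArg Prod.snd hbm' 
      have : b' = c := T.1.eq_of_head hb' hc (by rw [hsnd, hc2])
      subst this
      apply toVmap_inj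
      rw [← hbm']
      simp [mMap, toVmap, hsnd]
  reach := by
    rintro ⟨v, hv⟩
    have key : ∀ v, Relation.ReflTransGen (fun a b => (a, b) ∈ T.1.arcs) r v →
        ∀ hv : v ≠ x, Relation.ReflTransGen
          (fun a b : {v : V // v ≠ x} => (a, b) ∈ cArcs r x T.1.arcs) ⟨r, hne⟩ ⟨v, hv⟩ := by
      intro v h
      induction h with
      | refl => intro hv; exact Relation.ReflTransGen.refl
      | @tail a b _ harc ih =>
        intro hvb
        by_cases hax : a = x
        · refine Relation.ReflTransGen.single ?_
          refine mem_cArcs.mpr ⟨(a, b), harc, fun h => hvb (congrArg Prod.snd h), ?_⟩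
          simp [mMap, toVmap, hax]
        · refine (ih hax).tail ?_
          refine mem_cArcs.mpr ⟨(a, b), harc, fun h => hvb (congrArg Prod.snd h), ?_⟩
          simp [mMap, toVmap, hax]
    exact key v (T.1.reach v) hv

theorem contractT_image (T : {T : Arborescence G r // (r, x) ∈ T.arcs}) :
    ((contractT hne T).arcs).image (toVmap x) = contractArcs r x T.1.arcs :=
  cArcs_image hne (fun b hb hbne => T.1.head_ne_x T.2 hb hbne)

theorem contractT_eq_of {T : {T : Arborescence G r // (r, x) ∈ T.arcs}}
    {A' : Arborescence (ContractRoot G r x) ⟨r, hne⟩}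
    (h : contractArcs r x T.1.arcs = A'.arcs.image (toVmap x)) : contractT hne T = A' := by
  apply Arborescence.ext'
  apply Finset.image_injective (toVmap_inj (x := x))
  rw [contractT_image, h]

theorem contractT_eq_contractT {T S : {T : Arborescence G r // (r, x) ∈ T.arcs}}
    (h : contractArcs r x T.1.arcs = contractArcs r x S.1.arcs) :
    contractT hne T = contractT hne S := by
  apply Arborescence.ext'
  simp only [contractT, cArcs, h]

theorem contractArcs_eq_of_contractT_eq {T S : {T : Arborescence G r // (r, x) ∈ T.arcs}}
    (h : contractT hne T = contractT hne S) :
    contractArcs r x T.1.arcs = contractArcs r x S.1.arcs := by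
  rw [← contractT_image hne T, ← contractT_image hne S, h]

end Contract

/-! ### Generic flip lemmas -/

section Flip
variable {V : Type*} [DecidableEq V] {G : V → V → Prop} {r : V}

theorem flip_adj {A B : Arborescence G r} {old new : V × V}
    (hold : old ∈ A.arcs) (hnew : new ∉ A.arcs)
    (hB : B.arcs = insert new (A.arcs.erase old)) : (FlipGraph G r).Adj A B := by
  have honew : old ≠ new := fun h => hnew (h ▸ hold)
  have hAB : A ≠ B := fun h => hnew (by rw [h, hB]; exact Finset.mem_insert_self _ _)
  show A ≠ B ∧ (A.arcs \ B.arcs).card = 1 ∧ (B.arcs \ A.arcs).card = 1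
  refine ⟨hAB, ?_, ?_⟩
  · have : A.arcs \ B.arcs = {old} := by
      ext z
      simp only [hB, Finset.mem_sdiff, Finset.mem_insert, Finset.mem_erase,
        Finset.mem_singleton, not_or, not_and]
      constructor
      · rintro ⟨hz, h2, h3⟩
        by_contra hzo
        exact (h3 hzo) hz
      · rintro rfl
        exact ⟨hold, honew, fun h => absurd h (not_not_intro rfl)⟩
    rw [this, Finset.card_singleton]
  · have : B.arcs \ A.arcs = {new} := by
      ext z
      simp only [hB, Finset.mem_sdiff, Finset.mem_insert, Finset.mem_erase,
        Finset.mem_singleton]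
      constructor
      · rintro ⟨hz | ⟨h1, h2⟩, h3⟩
        · exact hz
        · exact absurd h2 h3
      · rintro rfl
        exact ⟨Or.inl rfl, hnew⟩
    rw [this, Finset.card_singleton]

theorem adj_decomp {A B : Arborescence G r} (h : (FlipGraph G r).Adj A B) :
    ∃ old new, old ∈ A.arcs ∧ new ∉ A.arcs ∧ new ∈ B.arcs ∧ old ∉ B.arcs ∧
      old.2 = new.2 ∧ B.arcs = insert new (A.arcs.erase old) := by
  obtain ⟨hAB, h1, h2⟩ := (h : A ≠ B ∧ (A.arcs \ B.arcs).card = 1 ∧ (B.arcs \ A.arcs).card = 1)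
  obtain ⟨old, hold⟩ := Finset.card_eq_one.mp h1
  obtain ⟨new, hnew⟩ := Finset.card_eq_one.mp h2
  have holdm : old ∈ A.arcs ∧ old ∉ B.arcs := by
    have := hold ▸ Finset.mem_singleton_self old
    exact Finset.mem_sdiff.mp this
  have hnewm : new ∈ B.arcs ∧ new ∉ A.arcs := by
    have := hnew ▸ Finset.mem_singleton_self new
    exact Finset.mem_sdiff.mp this
  have hsd1 : ∀ z, z ∈ A.arcs → z ∉ B.arcs → z = old := by
    intro z hz1 hz2
    have : z ∈ A.arcs \ B.arcs := Finset.mem_sdiff.mpr ⟨hz1, hz2⟩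
    rwa [hold, Finset.mem_singleton] at this
  have hsd2 : ∀ z, z ∈ B.arcs → z ∉ A.arcs → z = new := by
    intro z hz1 hz2
    have : z ∈ B.arcs \ A.arcs := Finset.mem_sdiff.mpr ⟨hz1, hz2⟩
    rwa [hnew, Finset.mem_singleton] at this
  have hheads : old.2 = new.2 := by
    by_contra hne2
    obtain ⟨c, hc, hc2⟩ := Arborescence.exists_inarc (T := B) (A.noRoot old holdm.1)
    have hcA : c ∈ A.arcs := by
      by_contra hcA
      exact hne2 ((congrArg Prod.snd (hsd2 c hc hcA)).symm.trans hc2).symm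
    have : c = old := A.eq_of_head hcA holdm.1 hc2
    exact holdm.2 (this ▸ hc)
  refine ⟨old, new, holdm.1, hnewm.2, hnewm.1, holdm.2, hheads, ?_⟩
  ext z
  simp only [Finset.mem_insert, Finset.mem_erase]
  constructor
  · intro hz
    by_cases hzA : z ∈ A.arcs
    · refine Or.inr ⟨fun hzo => holdm.2 (hzo ▸ hz), hzA⟩
    · exact Or.inl (hsd2 z hz hzA)
  · rintro (rfl | ⟨hzo, hzA⟩)
    · exact hnewm.1
    · by_contra hzB
      exact hzo (hsd1 z hzA hzB)
end Flip

/-! ### The toggle construction within a fiber -/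

section Toggle
variable {V : Type*} [Fintype V] [DecidableEq V] {G : V → V → Prop} {r x : V}

def togMap (r x : V) (t : Finset V) (a : V × V) : V × V :=
  if a.2 ∈ t then (if a.1 = r then x else r, a.2) else a

theorem togMap_snd {t : Finset V} {a : V × V} : (togMap r x t a).2 = a.2 := by
  unfold togMap; split <;> rfl

open scoped Classical in
/-- The set of vertices whose in-arc comes from the merged root and which can take either
tail `r` or tail `x`. -/
noncomputable def ambSet (G : V → V → Prop) (r x : V) (T : Arborescence G r) : Finset V :=
  Finset.univ.filter (fun v => v ≠ x ∧ ((r, v) ∈ T.arcs ∨ (x, v) ∈ T.arcs) ∧ G r v ∧ G x v)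

theorem mem_ambSet {T : Arborescence G r} {v : V} :
    v ∈ ambSet G r x T ↔ v ≠ x ∧ ((r, v) ∈ T.arcs ∨ (x, v) ∈ T.arcs) ∧ G r v ∧ G x v := by
  classical
  simp [ambSet]

theorem ambSet_ne_root {T : Arborescence G r} {v : V} (hv : v ∈ ambSet G r x T) : v ≠ r := by
  rcases (mem_ambSet.mp hv).2.1 with h | h
  · exact T.noRoot _ h
  · exact T.noRoot _ h

theorem ambSet_inarc {T : Arborescence G r} {v : V} (hv : v ∈ ambSet G r x T)
    {a : V × V} (ha : a ∈ T.arcs) (hav : a.2 = v) : a = (r, v) ∨ a = (x, v) := by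
  rcases (mem_ambSet.mp hv).2.1 with h | h
  · exact Or.inl (T.eq_of_head ha h hav)
  · exact Or.inr (T.eq_of_head ha h hav)

theorem togMap_rx {t : Finset V} {T : Arborescence G r} (ht : t ⊆ ambSet G r x T) :
    togMap r x t (r, x) = (r, x) := by
  have : x ∉ t := fun h => (mem_ambSet.mp (ht h)).1 rfl
  simp [togMap, this]

/-- Toggling the tails (between `r` and `x`) of the in-arcs of a set of ambiguous
vertices of an arborescence yields an arborescence. -/
def togT (T : Arborescence G r) (hT : (r, x) ∈ T.arcs) (t : Finset V)
    (ht : t ⊆ ambSet G r x T) : Arborescence G r where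
  arcs := T.arcs.image (togMap r x t)
  sub := by
    intro b hb
    obtain ⟨a, ha, rfl⟩ := Finset.mem_image.mp hb
    unfold togMap
    split_ifs with h1 h2
    · exact (mem_ambSet.mp (ht h1)).2.2.2
    · exact (mem_ambSet.mp (ht h1)).2.2.1
    · exact T.sub a ha
  noRoot := by
    intro b hb
    obtain ⟨a, ha, rfl⟩ := Finset.mem_image.mp hb
    rw [togMap_snd]
    exact T.noRoot a ha
  uniqueIn := by
    intro v hv
    obtain ⟨c, hc, hc2⟩ := Arborescence.exists_inarc (T := T) hv
    refine ⟨togMap r x t c, ⟨Finset.mem_image_of_mem _ hc, by rw [togMap_snd]; exact hc2⟩, ?_⟩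
    rintro b ⟨hb, hb2⟩
    obtain ⟨a, ha, rfl⟩ := Finset.mem_image.mp hb
    rw [togMap_snd] at hb2
    rw [T.eq_of_head ha hc (hb2.trans hc2.symm)]
  reach := by
    have hrx' : (r, x) ∈ T.arcs.image (togMap r x t) := by
      rw [← togMap_rx ht]
      exact Finset.mem_image_of_mem _ hT
    intro v
    have key := T.reach v
    induction key with
    | refl => exact Relation.ReflTransGen.refl
    | @tail a b _ harc ih =>
      by_cases hbt : b ∈ t
      · have htog : togMap r x t (a, b) ∈ T.arcs.image (togMap r x t) :=
          Finset.mem_image_of_mem _ harc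
        unfold togMap at htog
        rw [if_pos hbt] at htog
        dsimp only at htog
        split_ifs at htog with h2
        · exact (Relation.ReflTransGen.single hrx').tail htog
        · exact Relation.ReflTransGen.single htog
      · refine ih.tail ?_
        have htog : togMap r x t (a, b) ∈ T.arcs.image (togMap r x t) :=
          Finset.mem_image_of_mem _ harc
        unfold togMap at htog
        rwa [if_neg hbt] at htog

theorem togT_mem_rx {T : Arborescence G r} (hT : (r, x) ∈ T.arcs) {t : Finset V}
    (ht : t ⊆ ambSet G r x T) : (r, x) ∈ (togT T hT t ht).arcs := by
  show (r, x) ∈ T.arcs.image (togMap r x t)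
  rw [← togMap_rx ht]
  exact Finset.mem_image_of_mem _ hT

theorem togT_empty {T : Arborescence G r} (hT : (r, x) ∈ T.arcs) :
    (togT T hT ∅ (Finset.empty_subset _)).arcs = T.arcs := by
  show T.arcs.image (togMap r x ∅) = T.arcs
  ext b
  simp [togMap]

theorem mMap_togMap {T : Arborescence G r} {t : Finset V}
    (ht : t ⊆ ambSet G r x T) {a : V × V} (ha : a ∈ T.arcs) :
    mMap r x (togMap r x t a) = mMap r x a := by
  obtain ⟨a1, a2⟩ := a
  unfold togMap
  split_ifs with h1 h2
  · show mMap r x (x, a2) = mMap r x (a1, a2)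
    rw [show a1 = r from h2]
    simp [mMap]
  · rcases ambSet_inarc (ht h1) ha rfl with h | h
    · exact absurd (Prod.ext_iff.mp h).1 h2
    · show mMap r x (r, a2) = mMap r x (a1, a2)
      rw [show a1 = x from (Prod.ext_iff.mp h).1]
      simp [mMap]
  · rfl

theorem togT_contract {T : Arborescence G r} (hT : (r, x) ∈ T.arcs) {t : Finset V}
    (ht : t ⊆ ambSet G r x T) :
    contractArcs r x (togT T hT t ht).arcs = contractArcs r x T.arcs := by
  ext c
  simp only [mem_contractArcs]
  constructor
  · rintro ⟨b, hb, hbne, rfl⟩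
    obtain ⟨a, ha, rfl⟩ := Finset.mem_image.mp hb
    refine ⟨a, ha, ?_, (mMap_togMap ht ha).symm⟩
    rintro rfl
    exact hbne (togMap_rx ht)
  · rintro ⟨a, ha, hane, rfl⟩
    refine ⟨togMap r x t a, Finset.mem_image_of_mem _ ha, ?_, mMap_togMap ht ha⟩
    intro h
    have : a.2 = x := by rw [← togMap_snd (r := r) (x := x) (t := t) (a := a), h]
    exact hane (T.eq_of_head ha hT this)

theorem togT_inj (hne : r ≠ x) {T : Arborescence G r} (hT : (r, x) ∈ T.arcs)
    {t₁ t₂ : Finset V} (h₁ : t₁ ⊆ ambSet G r x T) (h₂ : t₂ ⊆ ambSet G r x T)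
    (h : (togT T hT t₁ h₁).arcs = (togT T hT t₂ h₂).arcs) : t₁ = t₂ := by
  have key : ∀ (t₁ t₂ : Finset V), t₁ ⊆ ambSet G r x T → t₂ ⊆ ambSet G r x T →
      T.arcs.image (togMap r x t₁) = T.arcs.image (togMap r x t₂) → ∀ v ∈ t₁, v ∈ t₂ := by
    intro t₁ t₂ h₁ h₂ h v hv
    by_contra hv2
    obtain hc | hc := (mem_ambSet.mp (h₁ hv)).2.1
    · have hmem : togMap r x t₁ (r, v) ∈ T.arcs.image (togMap r x t₂) :=
        h ▸ Finset.mem_image_of_mem _ hc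
      obtain ⟨a, ha, hae⟩ := Finset.mem_image.mp hmem
      have hhead : a.2 = v := by
        have h' := congrArg Prod.snd hae
        rwa [togMap_snd, togMap_snd] at h'
      rw [T.eq_of_head ha hc hhead] at hae
      simp only [togMap, if_neg hv2, if_pos hv, if_pos rfl] at hae
      exact hne (Prod.ext_iff.mp hae).1
    · have hmem : togMap r x t₁ (x, v) ∈ T.arcs.image (togMap r x t₂) :=
        h ▸ Finset.mem_image_of_mem _ hc
      obtain ⟨a, ha, hae⟩ := Finset.mem_image.mp hmem
      have hhead : a.2 = v := by
        have h' := congrArg Prod.snd hae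
        rwa [togMap_snd, togMap_snd] at h'
      rw [T.eq_of_head ha hc hhead] at hae
      simp only [togMap, if_neg hv2, if_pos hv] at hae
      split_ifs at hae with hxr
      · exact hne hxr.symm
      · exact hne ((Prod.ext_iff.mp hae).1).symm
  exact Finset.Subset.antisymm (fun v hv => key t₁ t₂ h₁ h₂ h v hv)
    (fun v hv => key t₂ t₁ h₂ h₁ h.symm v hv)

theorem togT_adj (hne : r ≠ x) {T : Arborescence G r} (hT : (r, x) ∈ T.arcs)
    {t : Finset V} (ht : t ⊆ ambSet G r x T) {a : V} (ha : a ∈ ambSet G r x T)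
    (hat : a ∉ t) (hins : insert a t ⊆ ambSet G r x T) :
    (FlipGraph G r).Adj (togT T hT t ht) (togT T hT (insert a t) hins) := by
  obtain ⟨c, hc, hc2⟩ := Arborescence.exists_inarc (T := T) (ambSet_ne_root ha)
  obtain ⟨c1, c2⟩ := c
  dsimp at hc2
  rw [hc2] at hc
  have hctail : c1 = r ∨ c1 = x := by
    rcases ambSet_inarc ha hc rfl with h | h
    · exact Or.inl (Prod.ext_iff.mp h).1
    · exact Or.inr (Prod.ext_iff.mp h).1
  have hctogt : togMap r x t (c1, a) = (c1, a) := by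
    show (if a ∈ t then ((if c1 = r then x else r), a) else (c1, a)) = (c1, a)
    rw [if_neg hat]
  have hnewval : togMap r x (insert a t) (c1, a) = ((if c1 = r then x else r), a) := by
    show (if a ∈ insert a t then ((if c1 = r then x else r), a) else (c1, a)) = _
    rw [if_pos (Finset.mem_insert_self a t)]
  have hflipne : (if c1 = r then x else r) ≠ c1 := by
    rcases hctail with h | h
    · rw [if_pos h, h]; exact hne.symm
    · rw [h]
      split_ifs with h2
      · exact absurd h2.symm hne
      · exact hne
  have hnewne : togMap r x (insert a t) (c1, a) ≠ (c1, a) := by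
    rw [hnewval]
    intro hcon
    exact hflipne (Prod.ext_iff.mp hcon).1
  have hsame : ∀ b ∈ T.arcs, b ≠ (c1, a) → togMap r x (insert a t) b = togMap r x t b := by
    intro b hb hbc
    have hba : b.2 ≠ a := fun h => hbc (T.eq_of_head hb hc h)
    unfold togMap
    exact if_congr (by simp [Finset.mem_insert, hba]) rfl rfl
  apply flip_adj (old := (c1, a)) (new := togMap r x (insert a t) (c1, a))
  · rw [← hctogt]
    exact Finset.mem_image_of_mem _ hc
  · intro hmem
    obtain ⟨b, hb, hbe⟩ := Finset.mem_image.mp hmem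
    have hhead : b.2 = a := by
      have h' := congrArg Prod.snd hbe
      rwa [togMap_snd, hnewval] at h'
    rw [T.eq_of_head hb hc hhead, hctogt] at hbe
    exact hnewne hbe.symm
  · show T.arcs.image (togMap r x (insert a t)) =
      insert (togMap r x (insert a t) (c1, a)) ((T.arcs.image (togMap r x t)).erase (c1, a))
    ext z
    simp only [Finset.mem_image, Finset.mem_insert, Finset.mem_erase]
    constructor
    · rintro ⟨b, hb, rfl⟩
      by_cases hbc : b = (c1, a)
      · subst hbc; exact Or.inl rfl
      · refine Or.inr ⟨?_, ⟨b, hb, (hsame b hb hbc).symm⟩⟩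
        intro hzc
        have hh : b.2 = a := by
          have h' := congrArg Prod.snd hzc
          rwa [togMap_snd] at h'
        exact hbc (T.eq_of_head hb hc hh)
    · rintro (rfl | ⟨hzc, b, hb, rfl⟩)
      · exact ⟨(c1, a), hc, rfl⟩
      · by_cases hbc : b = (c1, a)
        · subst hbc; rw [hctogt] at hzc; exact absurd rfl hzc
        · exact ⟨b, hb, hsame b hb hbc⟩

theorem togT_surj (hne : r ≠ x) {T : Arborescence G r} (hT : (r, x) ∈ T.arcs)
    (S : Arborescence G r) (hS : (r, x) ∈ S.arcs)
    (hcon : contractArcs r x S.arcs = contractArcs r x T.arcs) :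
    ∃ (t : Finset V) (ht : t ⊆ ambSet G r x T), (togT T hT t ht).arcs = S.arcs := by
  classical
  set t := (ambSet G r x T).filter
    (fun v => ¬(((x, v) ∈ S.arcs) ↔ ((x, v) ∈ T.arcs))) with htdef
  have htsub : t ⊆ ambSet G r x T := Finset.filter_subset _ _
  have hmemt : ∀ v, v ∈ t ↔ v ∈ ambSet G r x T ∧
      ¬(((x, v) ∈ S.arcs) ↔ ((x, v) ∈ T.arcs)) := fun v => Finset.mem_filter
  refine ⟨t, htsub, ?_⟩
  have hmain : ∀ b ∈ T.arcs, togMap r x t b ∈ S.arcs := by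
    rintro ⟨b1, v⟩ hb
    by_cases hbrx : ((b1, v) : V × V) = (r, x)
    · rw [hbrx, togMap_rx htsub]; exact hS
    · have hvx : v ≠ x := T.head_ne_x hT hb hbrx
      have hvr : v ≠ r := T.noRoot _ hb
      obtain ⟨c, hcS, hc2⟩ := Arborescence.exists_inarc (T := S) hvr
      obtain ⟨c1, c2⟩ := c
      dsimp at hc2
      rw [hc2] at hcS
      have hmm : mMap r x (b1, v) ∈ contractArcs r x S.arcs := by
        rw [hcon]; exact mem_contractArcs.mpr ⟨(b1, v), hb, hbrx, rfl⟩
      obtain ⟨c', hc', hcne', hce'⟩ := mem_contractArcs.mp hmm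
      have hc'2 : c'.2 = v := congrArg Prod.snd hce'
      have hcc : c' = (c1, v) := S.eq_of_head hc' hcS hc'2
      rw [hcc] at hce'
      have htails : (if c1 = x then r else c1) = (if b1 = x then r else b1) :=
        congrArg Prod.fst hce'
      have hTuniq : ∀ z, (z, v) ∈ T.arcs → z = b1 := fun z hz =>
        congrArg Prod.fst (T.eq_of_head hz hb rfl)
      have hSuniq : ∀ z, (z, v) ∈ S.arcs → z = c1 := fun z hz =>
        congrArg Prod.fst (S.eq_of_head hz hcS rfl)
      show (if v ∈ t then ((if b1 = r then x else r), v) else (b1, v)) ∈ S.arcs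
      by_cases hb1 : b1 = x
      · rw [if_pos hb1] at htails
        by_cases hc1 : c1 = x
        · have hbc : b1 = c1 := hb1.trans hc1.symm
          have hvt : v ∉ t := by
            rw [hmemt]
            rintro ⟨-, hiff⟩
            refine hiff ⟨fun _ => by simpa [hb1] using hb, fun _ => by simpa [hc1] using hcS⟩
          rw [if_neg hvt, show b1 = c1 from hbc]
          exact hcS
        · rw [if_neg hc1] at htails
          have hvamb : v ∈ ambSet G r x T := mem_ambSet.mpr
            ⟨hvx, Or.inr (by simpa [hb1] using hb),
             by simpa [htails] using S.sub _ hcS, by simpa [hb1] using T.sub _ hb⟩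
          have hvt : v ∈ t := by
            rw [hmemt]
            refine ⟨hvamb, fun hiff => ?_⟩
            have hxvS : (x, v) ∈ S.arcs := hiff.mpr (by simpa [hb1] using hb)
            exact hc1 (hSuniq x hxvS).symm
          rw [if_pos hvt, if_neg (fun h : b1 = r => hne (h.symm.trans hb1))]
          exact htails ▸ hcS
      · rw [if_neg hb1] at htails
        by_cases hc1 : c1 = x
        · rw [if_pos hc1] at htails
          have hb1r : b1 = r := htails.symm
          have hvamb : v ∈ ambSet G r x T := mem_ambSet.mpr
            ⟨hvx, Or.inl (by simpa [hb1r] using hb),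
             by simpa [hb1r] using T.sub _ hb, by simpa [hc1] using S.sub _ hcS⟩
          have hvt : v ∈ t := by
            rw [hmemt]
            refine ⟨hvamb, fun hiff => ?_⟩
            have hxvS : (x, v) ∈ S.arcs := by simpa [hc1] using hcS
            exact hne ((hTuniq x (hiff.mp hxvS)).trans hb1r).symm
          rw [if_pos hvt, if_pos hb1r]
          exact hc1 ▸ hcS
        · rw [if_neg hc1] at htails
          have hvt : v ∉ t := by
            rw [hmemt]
            rintro ⟨-, hiff⟩
            exact hiff ⟨fun h => absurd (hSuniq x h).symm hc1,
              fun h => absurd (hTuniq x h).symm hb1⟩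
          rw [if_neg hvt, show b1 = c1 from htails.symm]
          exact hcS
  have hsub : (togT T hT t htsub).arcs ⊆ S.arcs := by
    intro z hz
    obtain ⟨b, hb, rfl⟩ := Finset.mem_image.mp hz
    exact hmain b hb
  have hinj : Set.InjOn (togMap r x t) ↑T.arcs := by
    intro p hp q hq hpq
    have hpq2 : p.2 = q.2 := by
      have h' := congrArg Prod.snd hpq
      rwa [togMap_snd, togMap_snd] at h'
    exact T.eq_of_head hp hq hpq2
  have hcard : S.arcs.card ≤ ((togT T hT t htsub).arcs).card := by
    show S.arcs.card ≤ (T.arcs.image (togMap r x t)).card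
    rw [Finset.card_image_of_injOn hinj, T.card_arcs, ← S.card_arcs]
  exact Finset.eq_of_subset_of_card_le hsub hcard

end Toggle

/-! ### Lifting a flip of the contracted graph -/

section Transition
variable {V : Type*} [Fintype V] [DecidableEq V] {G : V → V → Prop} {r x : V}

theorem mMap_inj_arcs {T : Arborescence G r} {a b : V × V}
    (ha : a ∈ T.arcs) (hb : b ∈ T.arcs) (h : mMap r x a = mMap r x b) : a = b := by
  have h2 : (mMap r x a).2 = (mMap r x b).2 := congrArg Prod.snd h
  exact T.eq_of_head ha hb h2

theorem reach_of_contract (hne : r ≠ x) {s : Finset (V × V)} (hs : (r, x) ∈ s)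
    {A'' : Arborescence (ContractRoot G r x) ⟨r, hne⟩}
    (hcon : contractArcs r x s = A''.arcs.image (toVmap x)) :
    ∀ v, Relation.ReflTransGen (fun a b => (a, b) ∈ s) r v := by
  have key : ∀ v' : {v : V // v ≠ x},
      Relation.ReflTransGen (fun a b => (a, b) ∈ A''.arcs) ⟨r, hne⟩ v' →
      Relation.ReflTransGen (fun a b => (a, b) ∈ s) r v'.1 := by
    intro v' h
    induction h with
    | refl => exact Relation.ReflTransGen.refl
    | @tail a' b' _ harc ih =>
      have hmem : toVmap x (a', b') ∈ contractArcs r x s := by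
        rw [hcon]; exact Finset.mem_image_of_mem _ harc
      obtain ⟨c, hc, hcne, hcm⟩ := mem_contractArcs.mp hmem
      obtain ⟨cc1, cc2⟩ := c
      have hsnd : cc2 = b'.1 := congrArg Prod.snd hcm
      have hfst : (if cc1 = x then r else cc1) = a'.1 := congrArg Prod.fst hcm
      by_cases hcx : cc1 = x
      · refine (Relation.ReflTransGen.single hs).tail ?_
        show (x, b'.1) ∈ s
        have heq : ((cc1, cc2) : V × V) = (x, b'.1) := by rw [hcx, hsnd]
        exact heq ▸ hc
      · refine ih.tail ?_
        show (a'.1, b'.1) ∈ s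
        have heq : ((cc1, cc2) : V × V) = (a'.1, b'.1) := by
          rw [hsnd]
          refine Prod.ext ?_ rfl
          rw [← hfst, if_neg hcx]
        exact heq ▸ hc
  intro v
  by_cases hvx : v = x
  · subst hvx; exact Relation.ReflTransGen.single hs
  · exact key ⟨v, hvx⟩ (A''.reach ⟨v, hvx⟩)

theorem transition (hne : r ≠ x) {T : Arborescence G r} (hT : (r, x) ∈ T.arcs)
    {u' : Arborescence (ContractRoot G r x) ⟨r, hne⟩}
    (hadj : (FlipGraph (ContractRoot G r x) (⟨r, hne⟩ : {v : V // v ≠ x})).Adj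
      (contractT hne ⟨T, hT⟩) u') :
    ∃ (S : Arborescence G r) (hS : (r, x) ∈ S.arcs),
      contractT hne ⟨S, hS⟩ = u' ∧ (FlipGraph G r).Adj T S := by
  classical
  obtain ⟨old', new', holdu, hnewu, hnewu', holdu', hheads, hB⟩ := adj_decomp hadj
  have hvr : new'.2.1 ≠ r := fun h => u'.noRoot new' hnewu' (Subtype.ext h)
  have hvx : new'.2.1 ≠ x := new'.2.2
  obtain ⟨old, holdT, hold2⟩ := Arborescence.exists_inarc (T := T) hvr
  have holdrx : old ≠ (r, x) := fun h => hvx (by rw [← hold2, h])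
  have hmo : mMap r x old = toVmap x old' := by
    have h1 : mMap r x old ∈ ((contractT hne ⟨T, hT⟩).arcs).image (toVmap x) := by
      rw [contractT_image hne]
      exact mem_contractArcs.mpr ⟨old, holdT, holdrx, rfl⟩
    obtain ⟨γ, hγ, hγm⟩ := Finset.mem_image.mp h1
    have hγ2 : γ.2 = old'.2 := by
      apply Subtype.ext
      have h2 : γ.2.1 = old.2 := congrArg Prod.snd hγm
      rw [h2, hold2, ← hheads]
    rw [← hγm, (contractT hne ⟨T, hT⟩).eq_of_head hγ holdu hγ2]
  obtain ⟨-, hdisj⟩ := u'.sub new' hnewu'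
  have hnt : ∃ nt, G nt new'.2.1 ∧ mMap r x (nt, new'.2.1) = toVmap x new' := by
    rcases hdisj with ⟨h1, h2⟩ | ⟨h1, -⟩ | ⟨h1, -, h3⟩
    · rcases h2 with hGr | hGx
      · refine ⟨r, hGr, ?_⟩
        show ((if r = x then r else r : V), new'.2.1) = (new'.1.1, new'.2.1)
        rw [h1, ite_self]
      · refine ⟨x, hGx, ?_⟩
        show ((if x = x then r else x : V), new'.2.1) = (new'.1.1, new'.2.1)
        rw [h1, if_pos rfl]
    · exact absurd h1 hvr
    · refine ⟨new'.1.1, h3, ?_⟩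
      show ((if new'.1.1 = x then r else new'.1.1 : V), new'.2.1) = (new'.1.1, new'.2.1)
      rw [if_neg new'.1.2]
  obtain ⟨nt, hGnt, hmn⟩ := hnt
  have hnewrx : ((nt, new'.2.1) : V × V) ≠ (r, x) := fun h => hvx (congrArg Prod.snd h)
  have hnewold : ((nt, new'.2.1) : V × V) ∉ T.arcs := by
    intro hmem
    have heq : ((nt, new'.2.1) : V × V) = old :=
      T.eq_of_head hmem holdT (show new'.2.1 = old.2 from hold2.symm)
    have heq2 : toVmap x new' = toVmap x old' := by rw [← hmn, ← hmo, heq]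
    exact holdu' (toVmap_inj heq2 ▸ hnewu')
  have holdne : old ≠ (nt, new'.2.1) := fun h => hnewold (h ▸ holdT)
  have hrxold : ((r, x) : V × V) ≠ old := fun h => hvx (by rw [← hold2, ← h])
  have hrxmem : (r, x) ∈ insert ((nt, new'.2.1) : V × V) (T.arcs.erase old) :=
    Finset.mem_insert_of_mem (Finset.mem_erase.mpr ⟨hrxold, hT⟩)
  have hconS : contractArcs r x (insert ((nt, new'.2.1) : V × V) (T.arcs.erase old)) =
      u'.arcs.image (toVmap x) := by
    ext z
    constructor
    · intro hz
      obtain ⟨b, hb, hbrx, hbm⟩ := mem_contractArcs.mp hz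
      rcases Finset.mem_insert.mp hb with rfl | hb'
      · rw [← hbm, hmn]
        exact Finset.mem_image_of_mem _ hnewu'
      · obtain ⟨hbo, hbT⟩ := Finset.mem_erase.mp hb'
        have h1 : mMap r x b ∈ ((contractT hne ⟨T, hT⟩).arcs).image (toVmap x) := by
          rw [contractT_image hne]
          exact mem_contractArcs.mpr ⟨b, hbT, hbrx, rfl⟩
        obtain ⟨γ, hγ, hγm⟩ := Finset.mem_image.mp h1
        have hγo : γ ≠ old' := by
          rintro rfl
          exact hbo (mMap_inj_arcs hbT holdT (by rw [← hγm, hmo]))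
        have : γ ∈ u'.arcs := by
          rw [hB]
          exact Finset.mem_insert_of_mem (Finset.mem_erase.mpr ⟨hγo, hγ⟩)
        rw [← hbm, ← hγm]
        exact Finset.mem_image_of_mem _ this
    · intro hz
      obtain ⟨γ, hγ, rfl⟩ := Finset.mem_image.mp hz
      rw [hB] at hγ
      rcases Finset.mem_insert.mp hγ with heq | hγ'
      · rw [heq]
        exact mem_contractArcs.mpr ⟨(nt, new'.2.1), Finset.mem_insert_self _ _, hnewrx, hmn⟩
      · obtain ⟨hγo, hγu⟩ := Finset.mem_erase.mp hγ'
        have h1 : toVmap x γ ∈ contractArcs r x T.arcs := by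
          have h0 := Finset.mem_image_of_mem (toVmap x) hγu
          rwa [contractT_image hne ⟨T, hT⟩] at h0
        obtain ⟨b, hbT, hbrx, hbm⟩ := mem_contractArcs.mp h1
        have hbo : b ≠ old := by
          rintro rfl
          exact hγo (toVmap_inj (by rw [← hbm, hmo]))
        exact mem_contractArcs.mpr ⟨b,
          Finset.mem_insert_of_mem (Finset.mem_erase.mpr ⟨hbo, hbT⟩), hbrx, hbm⟩
  set S : Arborescence G r := {
    arcs := insert ((nt, new'.2.1) : V × V) (T.arcs.erase old)
    sub := by
      intro b hb
      rcases Finset.mem_insert.mp hb with rfl | hb'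
      · exact hGnt
      · exact T.sub b (Finset.mem_of_mem_erase hb')
    noRoot := by
      intro b hb
      rcases Finset.mem_insert.mp hb with rfl | hb'
      · exact hvr
      · exact T.noRoot b (Finset.mem_of_mem_erase hb')
    uniqueIn := by
      intro z hz
      by_cases hzv : z = new'.2.1
      · refine ⟨(nt, new'.2.1), ⟨Finset.mem_insert_self _ _, hzv.symm⟩, ?_⟩
        rintro y ⟨hy, hy2⟩
        rcases Finset.mem_insert.mp hy with heq | hy'
        · exact heq
        · obtain ⟨hyo, hyT⟩ := Finset.mem_erase.mp hy'
          exact absurd (T.eq_of_head hyT holdT ((hy2.trans hzv).trans hold2.symm)) hyo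
      · obtain ⟨c, hcT, hc2⟩ := Arborescence.exists_inarc (T := T) hz
        have hco : c ≠ old := fun h => hzv (by rw [← hc2, h, hold2])
        refine ⟨c, ⟨Finset.mem_insert_of_mem (Finset.mem_erase.mpr ⟨hco, hcT⟩), hc2⟩, ?_⟩
        rintro y ⟨hy, hy2⟩
        rcases Finset.mem_insert.mp hy with heq | hy'
        · rw [heq] at hy2
          exact absurd (show z = new'.2.1 from hy2.symm) hzv
        · exact T.eq_of_head (Finset.mem_of_mem_erase hy') hcT (hy2.trans hc2.symm)
    reach := reach_of_contract hne hrxmem hconS }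
  refine ⟨S, hrxmem, contractT_eq_of hne hconS, ?_⟩
  exact flip_adj holdT hnewold rfl

end Transition


/-- Let `rx` be an arc of `G` out of the root `r` and `G' = G/rx` the
contraction of `rx` into a new root `r'`. Let `A'` be an arborescence of `G'` rooted in
`r'`. If the flip graph of `G'` rooted in `r'` has a Hamiltonian path starting at `A'`,
then the subgraph of the flip graph of `G` rooted in `r` induced by the arborescences
containing `rx` has a Hamiltonian path starting at any arborescence `A` containing `rx`
with `A/rx = A'`. -/
theorem flipGraph_contract_hamiltonian_path {V : Type*} [Fintype V] [DecidableEq V]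
    (G : V → V → Prop) (r x : V) (hrx : G r x) (hne : r ≠ x)
    (A' : Arborescence (ContractRoot G r x) ⟨r, hne⟩)
    (hham : ∃ (B' : Arborescence (ContractRoot G r x) ⟨r, hne⟩)
      (p : (FlipGraph (ContractRoot G r x) (⟨r, hne⟩ : {v : V // v ≠ x})).Walk A' B'),
      p.IsHamiltonian)
    (A : Arborescence G r) (hA : (r, x) ∈ A.arcs)
    (hAA' : contractArcs r x A.arcs = A'.arcs.image (fun a => (a.1.1, a.2.1))) :
    ∃ (B : {T : Arborescence G r // (r, x) ∈ T.arcs})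
      (p : ((FlipGraph G r).induce {T : Arborescence G r | (r, x) ∈ T.arcs}).Walk ⟨A, hA⟩ B),
      p.IsHamiltonian := by
  classical
  obtain ⟨B', q, hq⟩ := hham
  set H := (FlipGraph G r).induce {T : Arborescence G r | (r, x) ∈ T.arcs} with hHdef
  set f : {T : Arborescence G r // (r, x) ∈ T.arcs} →
      Arborescence (ContractRoot G r x) ⟨r, hne⟩ :=
    fun T => contractT hne ⟨T.1, T.2⟩ with hfdef
  have hfib : ∀ w : {T : Arborescence G r // (r, x) ∈ T.arcs},
      ∃ e, ∃ p : H.Walk w e, p.support.Nodup ∧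
        (∀ z ∈ p.support, f z = f w) ∧ (∀ z, f z = f w → z ∈ p.support) := by
    rintro ⟨T, hT⟩
    set s := ambSet G r x T with hsdef
    set g : Finset V → {T : Arborescence G r // (r, x) ∈ T.arcs} :=
      fun t => if h : t ⊆ s then ⟨togT T hT t h, togT_mem_rx hT h⟩ else ⟨T, hT⟩ with hgdef
    have hgval : ∀ t (h : t ⊆ s), g t = ⟨togT T hT t h, togT_mem_rx hT h⟩ := by
      intro t h; rw [hgdef]; exact dif_pos h
    have hinj : ∀ t₁, t₁ ⊆ s → ∀ t₂, t₂ ⊆ s → g t₁ = g t₂ → t₁ = t₂ := by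
      intro t₁ h₁ t₂ h₂ h
      rw [hgval t₁ h₁, hgval t₂ h₂] at h
      exact togT_inj hne hT h₁ h₂ (congrArg (fun z => z.1.arcs) h)
    have hadjg : ∀ t, t ⊆ s → ∀ a ∈ s, a ∉ t → H.Adj (g t) (g (insert a t)) := by
      intro t ht a ha hat
      have hins : insert a t ⊆ s := Finset.insert_subset_iff.mpr ⟨ha, ht⟩
      rw [hgval t ht, hgval (insert a t) hins]
      exact togT_adj hne hT ht ha hat hins
    obtain ⟨tend, htend, p, hnd, hc1, hc2⟩ :=
      cube_ham H s g hinj hadjg ∅ (Finset.empty_subset s)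
    have hg0 : g ∅ = ⟨T, hT⟩ := by
      rw [hgval ∅ (Finset.empty_subset s)]
      exact Subtype.ext (Arborescence.ext' (togT_empty hT))
    have hfg : ∀ t (h : t ⊆ s), f (g t) = f ⟨T, hT⟩ := by
      intro t h
      rw [hgval t h]
      exact contractT_eq_contractT hne (togT_contract hT h)
    refine ⟨g tend, p.copy hg0 rfl, ?_, ?_, ?_⟩
    · rw [SimpleGraph.Walk.support_copy]; exact hnd
    · intro z hz
      rw [SimpleGraph.Walk.support_copy] at hz
      obtain ⟨t, ht, rfl⟩ := hc1 z hz
      exact hfg t ht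
    · intro z hz
      rw [SimpleGraph.Walk.support_copy]
      obtain ⟨Z, hZ⟩ := z
      have hcon : contractArcs r x Z.arcs = contractArcs r x T.arcs :=
        contractArcs_eq_of_contractT_eq hne hz
      obtain ⟨t, ht, harcs⟩ := togT_surj hne hT Z hZ hcon
      have hgz : g t = ⟨Z, hZ⟩ := by
        rw [hgval t ht]
        exact Subtype.ext (Arborescence.ext' harcs)
      rw [← hgz]
      exact hc2 t ht
  have hb : ∀ w u',
      (FlipGraph (ContractRoot G r x) (⟨r, hne⟩ : {v : V // v ≠ x})).Adj (f w) u' →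
      ∃ w', f w' = u' ∧ H.Adj w w' := by
    rintro ⟨T, hT⟩ u' hadj
    obtain ⟨S, hS, hfS, hAdj⟩ := transition hne hT hadj
    exact ⟨⟨S, hS⟩, hfS, hAdj⟩
  have hf0 : f ⟨A, hA⟩ = A' := contractT_eq_of hne hAA'
  obtain ⟨e, p, hnd, hcov1, hcov2⟩ := lift_ham f hfib hb q hq.isPath ⟨A, hA⟩ hf0
  refine ⟨e, p, ?_⟩
  intro z
  have hmem : f z ∈ q.support := by
    have h1 := hq (f z)
    by_contra hmem'
    rw [List.count_eq_zero_of_not_mem hmem'] at h1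
    simp at h1
  exact @List.count_eq_one_of_mem _ instBEqOfDecidableEq _ _ _ hnd (hcov2 z hmem)
end

section
/- Let G be a directed graph rooted in r, let rx be an arc of G out of the root, and let G' = G/rx be the graph obtained by contracting rx into a new root r'. Let T' be an arborescence of G' rooted in r'. Let M_{T'} be the set of vertices z that are outneighbours of both r and x in G and such that the arc r'z belongs to T', and let H_{T'} be the set of arborescences T of G rooted in r that contain the arc rx and satisfy T/rx = T'. Then H_{T'} induces in the flip graph of G rooted in r a subgraph isomorphic to a hypercube of dimension |M_{T'}|. -/
/-- The hypercube graph of dimension `d`: vertices are binary strings of length `d`, two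
vertices being adjacent when they differ in exactly one coordinate. -/
def hypercubeGraph (d : ℕ) : SimpleGraph (Fin d → Bool) where
  Adj u v := (Finset.univ.filter (fun i => u i ≠ v i)).card = 1
  symm := by
    constructor
    intro u v h
    simpa [ne_comm] using h
  loopless := by
    constructor
    intro u h
    simp at h
section Helpers

variable {V : Type*} [DecidableEq V]

/-- tail choice: for a contracted arc out of the root with head `b`, choose tail `x` or `r`
according to the bit `c` (when both are possible). -/
def pk (G : V → V → Prop) [DecidableRel G] (r x b : V) (c : Bool) : V :=
  if G x b ∧ (c = true ∨ ¬ G r b) then x else r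

variable {G : V → V → Prop} [DecidableRel G] {r x : V} {hne : r ≠ x}

theorem pk_or (c : Bool) (b : V) : pk G r x b c = r ∨ pk G r x b c = x := by
  unfold pk; split <;> simp

theorem pk_G {b : V} (h : G r b ∨ G x b) (c : Bool) : G (pk G r x b c) b := by
  unfold pk; split
  · exact (by tauto : G x b)
  · rcases h with h | h
    · exact h
    · tauto

theorem pk_true {b : V} (h : G x b) : pk G r x b true = x := by simp [pk, h]

theorem pk_false {b : V} (h : G r b) : pk G r x b false = r := by simp [pk, h]

theorem pk_ne_iff (hne : r ≠ x) {b : V} {c₁ c₂ : Bool} :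
    pk G r x b c₁ ≠ pk G r x b c₂ ↔ G r b ∧ G x b ∧ c₁ ≠ c₂ := by
  by_cases hgx : G x b <;> by_cases hgr : G r b <;> cases c₁ <;> cases c₂ <;>
    simp [pk, hgx, hgr, hne, hne.symm]

theorem pk_eq_x_iff (hne : r ≠ x) {b : V} {c : Bool} (hgr : G r b) (hgx : G x b) :
    pk G r x b c = x ↔ c = true := by
  cases c <;> simp [pk, hgr, hgx, hne]

/-- The arc set of `T'` viewed in `V`. -/
def SS (T' : Arborescence (ContractRoot G r x) ⟨r, hne⟩) : Finset (V × V) :=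
  T'.arcs.image fun a => (a.1.1, a.2.1)

variable (T' : Arborescence (ContractRoot G r x) ⟨r, hne⟩)

theorem mem_SS {p : V × V} : p ∈ SS T' ↔ ∃ q ∈ T'.arcs, q.1.1 = p.1 ∧ q.2.1 = p.2 := by
  simp [SS, Prod.ext_iff]

theorem ss_snd_ne_x {p : V × V} (hp : p ∈ SS T') : p.2 ≠ x := by
  rcases (mem_SS T').1 hp with ⟨q, _, _, h2⟩
  exact h2 ▸ q.2.2

theorem ss_fst_ne_x {p : V × V} (hp : p ∈ SS T') : p.1 ≠ x := by
  rcases (mem_SS T').1 hp with ⟨q, _, h1, _⟩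
  exact h1 ▸ q.1.2

theorem ss_snd_ne_r {p : V × V} (hp : p ∈ SS T') : p.2 ≠ r := by
  rcases (mem_SS T').1 hp with ⟨q, hq, _, h2⟩
  intro h
  exact T'.noRoot q hq (Subtype.ext (h2.trans h))

theorem ss_head_unique {a a' b : V} (h : (a, b) ∈ SS T') (h' : (a', b) ∈ SS T') : a = a' := by
  rcases (mem_SS T').1 h with ⟨q, hq, hq1, hq2⟩
  rcases (mem_SS T').1 h' with ⟨q', hq', hq1', hq2'⟩
  dsimp only at hq1 hq2 hq1' hq2'
  have hbr : q.2 ≠ (⟨r, hne⟩ : {v // v ≠ x}) := fun hh => ss_snd_ne_r T' h (by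
    simpa [hh] using hq2.symm)
  obtain ⟨u, -, hu⟩ := T'.uniqueIn q.2 hbr
  have e1 : q = q' := by
    have := hu q ⟨hq, rfl⟩
    have h2 := hu q' ⟨hq', Subtype.ext (by rw [hq2', hq2])⟩
    rw [this, h2]
  rw [← hq1, ← hq1', e1]

theorem ss_r_mem {z : {v : V // v ≠ x}} :
    (r, z.1) ∈ SS T' ↔ ((⟨r, hne⟩ : {v : V // v ≠ x}), z) ∈ T'.arcs := by
  constructor
  · intro h
    rcases (mem_SS T').1 h with ⟨q, hq, hq1, hq2⟩
    have : q = (⟨r, hne⟩, z) := Prod.ext (Subtype.ext hq1) (Subtype.ext hq2)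
    exact this ▸ hq
  · intro h
    exact (mem_SS T').2 ⟨(⟨r, hne⟩, z), h, rfl, rfl⟩

theorem ss_fst_r_G {b : V} (h : (r, b) ∈ SS T') : G r b ∨ G x b := by
  rcases (mem_SS T').1 h with ⟨q, hq, hq1, hq2⟩
  dsimp only at hq1 hq2
  rcases (T'.sub q hq).2 with ⟨_, hc⟩ | ⟨hc, _⟩ | ⟨hc, _⟩
  · exact hq2 ▸ hc
  · exact absurd (Subtype.ext hc) (T'.noRoot q hq)
  · exact absurd hq1 hc

theorem ss_fst_ne_r_G {a b : V} (h : (a, b) ∈ SS T') (har : a ≠ r) : G a b := by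
  rcases (mem_SS T').1 h with ⟨q, hq, hq1, hq2⟩
  dsimp only at hq1 hq2
  rcases (T'.sub q hq).2 with ⟨hc, _⟩ | ⟨hc, _⟩ | ⟨_, _, hc⟩
  · exact absurd (hq1 ▸ hc) har
  · exact absurd (Subtype.ext hc) (T'.noRoot q hq)
  · exact hq1 ▸ hq2 ▸ hc

end Helpers
section Helpers2

variable {V : Type*} [DecidableEq V] {G : V → V → Prop} [DecidableRel G] {r x : V}
  {hne : r ≠ x}

/-- The arc set of the arborescence of `G` determined by `T'` and the choice function `F`. -/
def arcsOf (T' : Arborescence (ContractRoot G r x) ⟨r, hne⟩) (F : V → Bool) :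
    Finset (V × V) :=
  insert (r, x)
    ((SS T').image fun a => (if a.1 = r then pk G r x a.2 (F a.2) else a.1, a.2))

variable (T' : Arborescence (ContractRoot G r x) ⟨r, hne⟩) (F : V → Bool)

theorem mem_arcsOf {p : V × V} :
    p ∈ arcsOf T' F ↔ p = (r, x) ∨
      ∃ a ∈ SS T', p = (if a.1 = r then pk G r x a.2 (F a.2) else a.1, a.2) := by
  simp [arcsOf, eq_comm]

theorem mem_arcsOf_snd_x {p : V × V} (hp : p ∈ arcsOf T' F) (h2 : p.2 = x) : p = (r, x) := by
  rcases (mem_arcsOf T' F).1 hp with h | ⟨a, ha, h⟩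
  · exact h
  · exact absurd (by rw [h] at h2; exact h2) (ss_snd_ne_x T' ha)

theorem arcsOf_head_unique {p q : V × V} (hp : p ∈ arcsOf T' F) (hq : q ∈ arcsOf T' F)
    (h : p.2 = q.2) : p = q := by
  by_cases hx : p.2 = x
  · rw [mem_arcsOf_snd_x T' F hp hx, mem_arcsOf_snd_x T' F hq (h ▸ hx)]
  · rcases (mem_arcsOf T' F).1 hp with h1 | ⟨a, ha, h1⟩
    · exact absurd (by rw [h1]) hx
    · rcases (mem_arcsOf T' F).1 hq with h2 | ⟨a', ha', h2⟩
      · rw [h1] at hx h; rw [h2] at h; exact absurd h hx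
      · have hsnd : a.2 = a'.2 := by rw [h1, h2] at h; exact h
        have ha2 : (a'.1, a.2) ∈ SS T' := by rw [hsnd]; exact ha'
        have hfst : a.1 = a'.1 := ss_head_unique T' ha ha2
        have : a = a' := Prod.ext hfst hsnd
        rw [h1, h2, this]

theorem mem_arcsOf_x_head {z : {v : V // v ≠ x}} (hz : ((⟨r, hne⟩ : {v : V // v ≠ x}), z) ∈ T'.arcs)
    (hgr : G r z.1) (hgx : G x z.1) :
    ((x, z.1) ∈ arcsOf T' F ↔ F z.1 = true) := by
  have hss : (r, z.1) ∈ SS T' := (ss_r_mem T').2 hz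
  constructor
  · intro h
    rcases (mem_arcsOf T' F).1 h with h1 | ⟨a, ha, h1⟩
    · exact absurd (congrArg Prod.snd h1) z.2
    · have h2 : a.2 = z.1 := (congrArg Prod.snd h1).symm
      have h3 : a.1 = r := ss_head_unique T' (h2 ▸ (show (a.1, a.2) ∈ SS T' from ha)) hss
      have h4 : x = pk G r x z.1 (F z.1) := by
        have := congrArg Prod.fst h1
        dsimp at this
        rwa [if_pos h3, h2] at this
      exact (pk_eq_x_iff hne hgr hgx).1 h4.symm
  · intro h
    refine (mem_arcsOf T' F).2 (Or.inr ⟨(r, z.1), hss, ?_⟩)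
    dsimp
    rw [if_pos rfl, h, pk_true hgx]

/-- `arcsOf` really is an arborescence. -/
def arbOf (hrx : G r x) : Arborescence G r where
  arcs := arcsOf T' F
  sub := by
    intro p hp
    rcases (mem_arcsOf T' F).1 hp with h | ⟨a, ha, h⟩
    · rw [h]; exact hrx
    · rw [h]
      dsimp
      split
      · next h1 => exact pk_G (ss_fst_r_G T' (h1 ▸ (show (a.1, a.2) ∈ SS T' from ha))) _
      · next h1 => exact ss_fst_ne_r_G T' (show (a.1, a.2) ∈ SS T' from ha) h1
  noRoot := by
    intro p hp
    rcases (mem_arcsOf T' F).1 hp with h | ⟨a, ha, h⟩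
    · rw [h]; exact fun hh => hne hh.symm
    · rw [h]; exact show a.2 ≠ r from ss_snd_ne_r T' ha
  uniqueIn := by
    intro v hv
    by_cases hx : v = x
    · subst hx
      exact ⟨(r, v), ⟨(mem_arcsOf T' F).2 (Or.inl rfl), rfl⟩,
        fun q ⟨hq, hq2⟩ => mem_arcsOf_snd_x T' F hq hq2⟩
    · obtain ⟨q, hq, -⟩ := T'.uniqueIn ⟨v, hx⟩ (fun hh => hv (congrArg Subtype.val hh))
      have hss : (q.1.1, v) ∈ SS T' := (mem_SS T').2 ⟨q, hq.1, rfl, by rw [hq.2]⟩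
      refine ⟨((if q.1.1 = r then pk G r x v (F v) else q.1.1), v),
        ⟨(mem_arcsOf T' F).2 (Or.inr ⟨(q.1.1, v), hss, rfl⟩), rfl⟩, ?_⟩
      intro p ⟨hp, hp2⟩
      exact arcsOf_head_unique T' F hp ((mem_arcsOf T' F).2
        (Or.inr ⟨(q.1.1, v), hss, rfl⟩)) (by rw [hp2])
  reach := by
    have key : ∀ v' : {v : V // v ≠ x},
        Relation.ReflTransGen (fun a b => (a, b) ∈ T'.arcs) ⟨r, hne⟩ v' →
        Relation.ReflTransGen (fun u b => (u, b) ∈ arcsOf T' F) r v'.1 := by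
      intro v' h
      induction h with
      | refl => exact Relation.ReflTransGen.refl
      | tail h1 h2 ih =>
        next b' c' =>
        have hss : (b'.1, c'.1) ∈ SS T' := (mem_SS T').2 ⟨(b', c'), h2, rfl, rfl⟩
        have harc : ((if b'.1 = r then pk G r x c'.1 (F c'.1) else b'.1), c'.1) ∈ arcsOf T' F :=
          (mem_arcsOf T' F).2 (Or.inr ⟨(b'.1, c'.1), hss, rfl⟩)
        by_cases hbr : b'.1 = r
        · rw [if_pos hbr] at harc
          rcases pk_or (G := G) (r := r) (x := x) (F c'.1) c'.1 with hpk | hpk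
          · rw [hpk] at harc
            exact Relation.ReflTransGen.single harc
          · rw [hpk] at harc
            exact Relation.ReflTransGen.tail
              (Relation.ReflTransGen.single ((mem_arcsOf T' F).2 (Or.inl rfl))) harc
        · rw [if_neg hbr] at harc
          exact Relation.ReflTransGen.tail ih harc
    intro v
    by_cases hx : v = x
    · subst hx
      exact Relation.ReflTransGen.single ((mem_arcsOf T' F).2 (Or.inl rfl))
    · exact key ⟨v, hx⟩ (T'.reach ⟨v, hx⟩)

theorem contract_arcsOf : contractArcs r x (arcsOf T' F) = SS T' := by
  unfold contractArcs arcsOf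
  rw [Finset.erase_insert]
  · rw [Finset.image_image]
    refine (Finset.image_congr ?_).trans Finset.image_id
    intro a ha
    dsimp
    by_cases h1 : a.1 = r
    · rw [if_pos h1]
      rcases pk_or (G := G) (r := r) (x := x) (F a.2) a.2 with hpk | hpk <;> rw [hpk]
      · rw [if_neg hne]
        exact Prod.ext h1.symm rfl
      · rw [if_pos rfl]
        exact Prod.ext h1.symm rfl
    · rw [if_neg h1, if_neg (ss_fst_ne_x T' ha)]
  · intro hmem
    rcases Finset.mem_image.1 hmem with ⟨a, ha, h⟩
    exact ss_snd_ne_x T' ha (congrArg Prod.snd h)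

end Helpers2
section Helpers3

variable {V : Type*} [DecidableEq V] {G : V → V → Prop} [DecidableRel G] {r x : V}
  {hne : r ≠ x}

variable (T' : Arborescence (ContractRoot G r x) ⟨r, hne⟩)

theorem arcsOf_congr {F₁ F₂ : V → Bool}
    (h : ∀ b, (r, b) ∈ SS T' → G r b → G x b → F₁ b = F₂ b) :
    arcsOf T' F₁ = arcsOf T' F₂ := by
  unfold arcsOf
  congr 1
  refine Finset.image_congr ?_
  intro a ha
  dsimp
  by_cases h1 : a.1 = r
  · rw [if_pos h1, if_pos h1]
    by_cases h2 : G r a.2 ∧ G x a.2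
    · rw [h a.2 (h1 ▸ (show (a.1, a.2) ∈ SS T' from ha)) h2.1 h2.2]
    · by_contra hcon
      have : pk G r x a.2 (F₁ a.2) ≠ pk G r x a.2 (F₂ a.2) := fun hh => hcon (by rw [hh])
      exact h2 ⟨((pk_ne_iff hne).1 this).1, ((pk_ne_iff hne).1 this).2.1⟩
  · rw [if_neg h1, if_neg h1]

/-- Every arborescence in the fiber is of the form `arcsOf`. -/
theorem fiber_eq (T : Arborescence G r) (h1 : (r, x) ∈ T.arcs)
    (h2 : contractArcs r x T.arcs = SS T') :
    T.arcs = arcsOf T' (fun b => decide ((x, b) ∈ T.arcs)) := by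
  set F : V → Bool := fun b => decide ((x, b) ∈ T.arcs) with hF
  -- facts about arcs of T
  have head_x : ∀ p ∈ T.arcs, p.2 = x → p = (r, x) := by
    intro p hp hpx
    obtain ⟨u, -, hu⟩ := T.uniqueIn x (fun hh => hne hh.symm)
    rw [hu p ⟨hp, hpx⟩, hu (r, x) ⟨h1, rfl⟩]
  have key : ∀ p ∈ T.arcs.erase (r, x),
      ((if (if p.1 = x then r else p.1) = r then pk G r x p.2 (F p.2)
        else (if p.1 = x then r else p.1)), p.2) = p := by
    intro p hp
    have hpT : p ∈ T.arcs := Finset.mem_of_mem_erase hp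
    have hpx : p.2 ≠ x := by
      intro hh
      have heq := head_x p hpT hh
      rw [heq] at hp
      exact Finset.notMem_erase _ _ hp
    have hpr : p.2 ≠ r := T.noRoot p hpT
    by_cases hu1 : p.1 = x
    · have hFx : F p.2 = true := by
        simp only [hF, decide_eq_true_iff]
        rw [← hu1]; exact hpT
      rw [if_pos hu1, if_pos rfl, hFx, pk_true (by rw [← hu1]; exact T.sub p hpT)]
      exact Prod.ext hu1.symm rfl
    · rw [if_neg hu1]
      by_cases hu2 : p.1 = r
      · have hFx : F p.2 = false := by
          simp only [hF, decide_eq_false_iff_not]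
          intro hcon
          obtain ⟨u, -, hu⟩ := T.uniqueIn p.2 hpr
          have e1 := hu (x, p.2) ⟨hcon, rfl⟩
          have e2 := hu p ⟨hpT, rfl⟩
          have e3 : (x, p.2) = p := e1.trans e2.symm
          exact hu1 (congrArg Prod.fst e3).symm
        rw [if_pos hu2, hFx, pk_false (by rw [← hu2]; exact T.sub p hpT)]
        exact Prod.ext hu2.symm rfl
      · rw [if_neg hu2]
  -- now compute
  have himg : T.arcs.erase (r, x) =
      (SS T').image fun a => (if a.1 = r then pk G r x a.2 (F a.2) else a.1, a.2) := by
    rw [← h2]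
    unfold contractArcs
    rw [Finset.image_image]
    refine Finset.eq_of_subset_of_card_le ?_ ?_
    · intro p hp
      refine Finset.mem_image.2 ⟨p, hp, ?_⟩
      exact key p hp
    · exact le_trans (Finset.card_image_le) (le_refl _)
  calc T.arcs = insert (r, x) (T.arcs.erase (r, x)) := (Finset.insert_erase h1).symm
    _ = arcsOf T' F := by rw [himg]; rfl

theorem sdiff_arcsOf (F₁ F₂ : V → Bool) :
    (arcsOf T' F₁ \ arcsOf T' F₂) =
      ((SS T').filter fun a => a.1 = r ∧ G r a.2 ∧ G x a.2 ∧ F₁ a.2 ≠ F₂ a.2).image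
        (fun a => (pk G r x a.2 (F₁ a.2), a.2)) := by
  ext p
  simp only [Finset.mem_sdiff, Finset.mem_image, Finset.mem_filter]
  constructor
  · rintro ⟨hp1, hp2⟩
    rcases (mem_arcsOf T' F₁).1 hp1 with h | ⟨a, ha, h⟩
    · exact absurd ((mem_arcsOf T' F₂).2 (Or.inl h)) hp2
    · have hain : (if a.1 = r then pk G r x a.2 (F₂ a.2) else a.1, a.2) ∈ arcsOf T' F₂ :=
        (mem_arcsOf T' F₂).2 (Or.inr ⟨a, ha, rfl⟩)
      by_cases h1 : a.1 = r
      · rw [if_pos h1] at h hain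
        have hne2 : pk G r x a.2 (F₁ a.2) ≠ pk G r x a.2 (F₂ a.2) := by
          intro hh
          rw [← hh] at hain
          exact hp2 (h ▸ hain)
        obtain ⟨hgr, hgx, hFne⟩ := (pk_ne_iff hne).1 hne2
        exact ⟨a, ⟨ha, h1, hgr, hgx, hFne⟩, h.symm⟩
      · rw [if_neg h1] at h hain
        exact absurd (h ▸ hain) hp2
  · rintro ⟨a, ⟨ha, h1, hgr, hgx, hFne⟩, h⟩
    subst h
    have hne2 : pk G r x a.2 (F₁ a.2) ≠ pk G r x a.2 (F₂ a.2) :=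
      (pk_ne_iff hne).2 ⟨hgr, hgx, hFne⟩
    constructor
    · refine (mem_arcsOf T' F₁).2 (Or.inr ⟨a, ha, ?_⟩)
      rw [if_pos h1]
    · intro hcon
      have hmem1 : (if a.1 = r then pk G r x a.2 (F₂ a.2) else a.1, a.2) ∈ arcsOf T' F₂ :=
        (mem_arcsOf T' F₂).2 (Or.inr ⟨a, ha, rfl⟩)
      rw [if_pos h1] at hmem1
      have := arcsOf_head_unique T' F₂ hcon hmem1 rfl
      exact hne2 (congrArg Prod.fst this)

theorem card_sdiff_arcsOf (F₁ F₂ : V → Bool) :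
    (arcsOf T' F₁ \ arcsOf T' F₂).card =
      ((SS T').filter fun a => a.1 = r ∧ G r a.2 ∧ G x a.2 ∧ F₁ a.2 ≠ F₂ a.2).card := by
  rw [sdiff_arcsOf T' F₁ F₂]
  refine Finset.card_image_of_injOn ?_
  intro a ha b hb hab
  simp only [Finset.mem_coe, Finset.mem_filter] at ha hb
  have hab' : (pk G r x a.2 (F₁ a.2), a.2) = (pk G r x b.2 (F₁ b.2), b.2) := hab
  exact Prod.ext (ha.2.1.trans hb.2.1.symm) (Prod.mk.inj hab').2

end Helpers3
section Helpers4

variable {V : Type*} [Fintype V] [DecidableEq V] {G : V → V → Prop} [DecidableRel G]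
  {r x : V} {hne : r ≠ x}

/-- The set `M` of shared outneighbours used in the statement. -/
def MM (T' : Arborescence (ContractRoot G r x) ⟨r, hne⟩) : Finset {v : V // v ≠ x} :=
  Finset.univ.filter
    (fun z : {v : V // v ≠ x} =>
      G r z.1 ∧ G x z.1 ∧ ((⟨r, hne⟩ : {v : V // v ≠ x}), z) ∈ T'.arcs)

variable (T' : Arborescence (ContractRoot G r x) ⟨r, hne⟩)

theorem mem_MM {z : {v : V // v ≠ x}} :
    z ∈ MM T' ↔ G r z.1 ∧ G x z.1 ∧ ((⟨r, hne⟩ : {v : V // v ≠ x}), z) ∈ T'.arcs := by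
  simp [MM]

/-- The choice function on `V` induced by a binary string indexed by `M`. -/
noncomputable def toG (f : Fin (MM T').card → Bool) : V → Bool := fun v =>
  if h : ∃ i, (((MM T').equivFin.symm i : {z // z ∈ MM T'}) : {v : V // v ≠ x}).1 = v then
    f h.choose
  else false

theorem toG_spec (f : Fin (MM T').card → Bool) (z : {v : V // v ≠ x}) (hz : z ∈ MM T') :
    toG T' f z.1 = f ((MM T').equivFin ⟨z, hz⟩) := by
  have hex : ∃ i, (((MM T').equivFin.symm i : {z // z ∈ MM T'}) : {v : V // v ≠ x}).1 = z.1 :=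
    ⟨(MM T').equivFin ⟨z, hz⟩, by simp⟩
  unfold toG
  rw [dif_pos hex]
  congr 1
  have h := hex.choose_spec
  have h2 : (MM T').equivFin.symm hex.choose = ⟨z, hz⟩ := Subtype.ext (Subtype.ext h)
  rw [← h2, Equiv.apply_symm_apply]

theorem card_filter_eq (f₁ f₂ : Fin (MM T').card → Bool) :
    ((SS T').filter fun a => a.1 = r ∧ G r a.2 ∧ G x a.2 ∧ toG T' f₁ a.2 ≠ toG T' f₂ a.2).card
      = (Finset.univ.filter fun i => f₁ i ≠ f₂ i).card := by
  refine Finset.card_bij'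
    (fun a ha => (MM T').equivFin ⟨⟨a.2, ss_snd_ne_x T' (Finset.mem_filter.1 ha).1⟩, by
      obtain ⟨haS, h1, hgr, hgx, -⟩ := Finset.mem_filter.1 ha
      refine (mem_MM T').2 ⟨hgr, hgx, (ss_r_mem T').1 ?_⟩
      have h := haS
      rw [show a = (r, a.2) from Prod.ext h1 rfl] at h
      exact h⟩)
    (fun i _ => (r, (((MM T').equivFin.symm i : {z // z ∈ MM T'}) : {v : V // v ≠ x}).1))
    ?_ ?_ ?_ ?_
  · intro a ha
    obtain ⟨haS, h1, hgr, hgx, hF⟩ := Finset.mem_filter.1 ha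
    have hm : (⟨a.2, ss_snd_ne_x T' haS⟩ : {v : V // v ≠ x}) ∈ MM T' := by
      refine (mem_MM T').2 ⟨hgr, hgx, (ss_r_mem T').1 ?_⟩
      have h := haS
      rw [show a = (r, a.2) from Prod.ext h1 rfl] at h
      exact h
    simp only [Finset.mem_filter, Finset.mem_univ, true_and]
    intro hcon
    apply hF
    calc toG T' f₁ a.2 = f₁ ((MM T').equivFin ⟨⟨a.2, ss_snd_ne_x T' haS⟩, hm⟩) :=
          toG_spec T' f₁ _ hm
      _ = f₂ ((MM T').equivFin ⟨⟨a.2, ss_snd_ne_x T' haS⟩, hm⟩) := hcon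
      _ = toG T' f₂ a.2 := (toG_spec T' f₂ _ hm).symm
  · intro i hi
    set z : {z // z ∈ MM T'} := (MM T').equivFin.symm i with hz
    obtain ⟨hgr, hgx, hT⟩ := (mem_MM T').1 z.2
    refine Finset.mem_filter.2 ⟨(ss_r_mem T').2 hT, rfl, hgr, hgx, ?_⟩
    rw [toG_spec T' f₁ z.1 z.2, toG_spec T' f₂ z.1 z.2]
    have hzz : (⟨z.1, z.2⟩ : {z // z ∈ MM T'}) = z := rfl
    rw [hzz, hz, Equiv.apply_symm_apply]
    simpa using (Finset.mem_filter.1 hi).2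
  · intro a ha
    obtain ⟨haS, h1, -, -, -⟩ := Finset.mem_filter.1 ha
    rw [Equiv.symm_apply_apply]
    exact Prod.ext h1.symm rfl
  · intro i hi
    dsimp only
    apply (MM T').equivFin.symm.injective
    rw [Equiv.symm_apply_apply]

end Helpers4


/-- Let `rx` be an arc of `G` out of the root `r`, `G' = G/rx` the
contraction of `rx` into a new root `r'`, and `T'` an arborescence of `G'` rooted in
`r'`. Let `M` be the set of vertices `z` that are outneighbours of both `r` and `x` in
`G` with `r'z` an arc of `T'`, and let `H` be the set of arborescences `T` of `G` rooted
in `r` containing `rx` with `T/rx = T'`. Then `H` induces in the flip graph of `G`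
rooted in `r` a subgraph isomorphic to the hypercube of dimension `|M|`. -/
theorem flipGraph_contract_fiber_hypercube {V : Type*} [Fintype V] [DecidableEq V]
    (G : V → V → Prop) [DecidableRel G] (r x : V) (hrx : G r x) (hne : r ≠ x)
    (T' : Arborescence (ContractRoot G r x) ⟨r, hne⟩) :
    Nonempty
      ((FlipGraph G r).induce
          {T : Arborescence G r | (r, x) ∈ T.arcs ∧
            contractArcs r x T.arcs = T'.arcs.image (fun a => (a.1.1, a.2.1))} ≃g
        hypercubeGraph
          (Finset.univ.filter
            (fun z : {v : V // v ≠ x} =>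
              G r z.1 ∧ G x z.1 ∧ ((⟨r, hne⟩ : {v : V // v ≠ x}), z) ∈ T'.arcs)).card) := by
  refine ⟨RelIso.symm ⟨?_, ?_⟩⟩
  case refine_1 =>
    refine
      { toFun := fun f => ⟨arbOf T' (toG T' f) hrx,
          Finset.mem_insert_self _ _, contract_arcsOf T' (toG T' f)⟩
        invFun := fun T i =>
          decide ((x,
            (((MM T').equivFin.symm i : {z // z ∈ MM T'}) : {v : V // v ≠ x}).1) ∈ T.1.arcs)
        left_inv := ?_
        right_inv := ?_ }
    · intro f
      funext i
      set z : {z // z ∈ MM T'} := (MM T').equivFin.symm i with hz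
      obtain ⟨hgr, hgx, hT⟩ := (mem_MM T').1 z.2
      have hspec : toG T' f z.1.1 = f i := by
        rw [toG_spec T' f z.1 z.2]
        congr 1
        exact (MM T').equivFin.apply_symm_apply i
      have hiff : ((x, z.1.1) ∈ arcsOf T' (toG T' f)) ↔ (f i = true) := by
        rw [← hspec]
        exact mem_arcsOf_x_head T' (toG T' f) hT hgr hgx
      dsimp only
      cases hfi : f i with
      | false => exact decide_eq_false (fun hP => by rw [hfi] at hiff; simp at hiff; exact hiff hP)
      | true => exact decide_eq_true (hiff.2 hfi)
    · intro T
      refine Subtype.ext (Arborescence.ext' ?_)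
      dsimp only
      refine Eq.trans (arcsOf_congr T' ?_) (fiber_eq T' T.1 T.2.1 T.2.2).symm
      intro b hb hgr hgx
      have hbx : b ≠ x := ss_snd_ne_x T' hb
      have hm : (⟨b, hbx⟩ : {v : V // v ≠ x}) ∈ MM T' :=
        (mem_MM T').2 ⟨hgr, hgx, (ss_r_mem T').1 hb⟩
      refine (toG_spec T' _ ⟨b, hbx⟩ hm).trans ?_
      simp only [Equiv.symm_apply_apply]
  case refine_2 =>
    intro f g
    show ((arbOf T' (toG T' f) hrx) ≠ (arbOf T' (toG T' g) hrx) ∧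
        (arcsOf T' (toG T' f) \ arcsOf T' (toG T' g)).card = 1 ∧
        (arcsOf T' (toG T' g) \ arcsOf T' (toG T' f)).card = 1)
      ↔ (Finset.univ.filter (fun i => f i ≠ g i)).card = 1
    have h1 : (arcsOf T' (toG T' f) \ arcsOf T' (toG T' g)).card =
        (Finset.univ.filter (fun i => f i ≠ g i)).card :=
      (card_sdiff_arcsOf T' _ _).trans (card_filter_eq T' f g)
    have h2 : (arcsOf T' (toG T' g) \ arcsOf T' (toG T' f)).card =
        (Finset.univ.filter (fun i => f i ≠ g i)).card :=
      (card_sdiff_arcsOf T' _ _).trans ((card_filter_eq T' g f).trans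
        (congrArg Finset.card (by delta MM; ext i; simp [ne_comm])))
    constructor
    · rintro ⟨-, hc, -⟩
      rw [← h1]; exact hc
    · intro hk
      refine ⟨?_, h1.trans hk, h2.trans hk⟩
      intro heq
      have harcs : arcsOf T' (toG T' f) = arcsOf T' (toG T' g) :=
        congrArg Arborescence.arcs heq
      rw [harcs, Finset.sdiff_self, Finset.card_empty] at h1
      exact absurd (h1.trans hk) (by simp)
end

section
/- Let G be a directed graph rooted in r, let uw be an arc of G, and let G' be the directed graph obtained from G by subdividing the arc uw, that is, by replacing uw by a new vertex v and the two arcs u → v and v → w. Then the flip graph of G' rooted in r is isomorphic to the flip graph of G rooted in r. -/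
/-- The directed graph obtained from `G` by subdividing the arc `u → w`: the arc `u → w`
is removed and replaced by a new vertex `Sum.inr ()` together with the arcs
`u → Sum.inr ()` and `Sum.inr () → w`. -/
def Subdivide {V : Type*} [DecidableEq V] (G : V → V → Prop) (u w : V) :
    (V ⊕ Unit) → (V ⊕ Unit) → Prop
  | Sum.inl a, Sum.inl b => G a b ∧ (a, b) ≠ (u, w)
  | Sum.inl a, Sum.inr _ => a = u
  | Sum.inr _, Sum.inl b => b = w
  | Sum.inr _, Sum.inr _ => False

open Relation

set_option linter.unusedSectionVars false

namespace FlipSub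

variable {V : Type*} [Fintype V] [DecidableEq V]

open Classical in
noncomputable def toArcs (u w : V) (A : Finset (V × V)) :
    Finset ((V ⊕ Unit) × (V ⊕ Unit)) :=
  Finset.univ.filter fun p =>
    match p with
    | (Sum.inl a, Sum.inl b) => (a, b) ∈ A ∧ (a, b) ≠ (u, w)
    | (Sum.inl a, Sum.inr _) => a = u
    | (Sum.inr _, Sum.inl b) => b = w ∧ (u, w) ∈ A
    | (Sum.inr _, Sum.inr _) => False

open Classical in
noncomputable def ofArcs (u w : V) (A' : Finset ((V ⊕ Unit) × (V ⊕ Unit))) :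
    Finset (V × V) :=
  Finset.univ.filter fun p =>
    (Sum.inl p.1, Sum.inl p.2) ∈ A' ∨ (p = (u, w) ∧ (Sum.inr (), Sum.inl w) ∈ A')

variable {u w : V}

lemma mem_toArcs_ll {A : Finset (V × V)} {a b : V} :
    (Sum.inl a, Sum.inl b) ∈ toArcs u w A ↔ (a, b) ∈ A ∧ (a, b) ≠ (u, w) := by
  simp [toArcs]

lemma mem_toArcs_lr {A : Finset (V × V)} {a : V} {x : Unit} :
    (Sum.inl a, Sum.inr x) ∈ toArcs u w A ↔ a = u := by
  simp [toArcs]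

lemma mem_toArcs_rl {A : Finset (V × V)} {x : Unit} {b : V} :
    (Sum.inr x, Sum.inl b) ∈ toArcs u w A ↔ b = w ∧ (u, w) ∈ A := by
  simp [toArcs]

lemma mem_toArcs_rr {A : Finset (V × V)} {x y : Unit} :
    (Sum.inr x, Sum.inr y) ∉ toArcs u w A := by
  simp [toArcs]

lemma mem_ofArcs {A' : Finset ((V ⊕ Unit) × (V ⊕ Unit))} {a b : V} :
    (a, b) ∈ ofArcs u w A' ↔
      (Sum.inl a, Sum.inl b) ∈ A' ∨ ((a, b) = (u, w) ∧ (Sum.inr (), Sum.inl w) ∈ A') := by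
  simp [ofArcs]

variable {G : V → V → Prop} {r : V}

/-- Every arborescence of the subdivision contains the arc `u → v`. -/
lemma mem_uv (A' : Arborescence (Subdivide G u w) (Sum.inl r)) :
    (Sum.inl u, Sum.inr ()) ∈ A'.arcs := by
  obtain ⟨c, ⟨hc, hc2⟩, -⟩ := A'.uniqueIn (Sum.inr ()) (by simp)
  obtain ⟨c1, c2⟩ := c
  dsimp at hc2; subst hc2
  rcases c1 with a | x
  · have ha : a = u := A'.sub _ hc
    subst ha; exact hc
  · exact absurd (A'.sub _ hc) (by cases x; exact id)

/-- The arborescence never contains the (non-)arc `u → w` on the `inl` side. -/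
lemma not_mem_lw (A' : Arborescence (Subdivide G u w) (Sum.inl r)) :
    (Sum.inl u, Sum.inl w) ∉ A'.arcs := fun h => (A'.sub _ h).2 rfl

lemma mem_cases (A' : Arborescence (Subdivide G u w) (Sum.inl r))
    {p : (V ⊕ Unit) × (V ⊕ Unit)} (hp : p ∈ A'.arcs) :
    (∃ a b, p = (Sum.inl a, Sum.inl b) ∧ (a, b) ≠ (u, w)) ∨
      p = (Sum.inl u, Sum.inr ()) ∨ p = (Sum.inr (), Sum.inl w) := by
  obtain ⟨c1, c2⟩ := p
  rcases c1 with a | x <;> rcases c2 with b | y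
  · exact Or.inl ⟨a, b, rfl, (A'.sub _ hp).2⟩
  · cases y
    have : a = u := A'.sub _ hp
    subst this; exact Or.inr (Or.inl rfl)
  · cases x
    have : b = w := A'.sub _ hp
    subst this; exact Or.inr (Or.inr rfl)
  · exact absurd (A'.sub _ hp) (by cases x; cases y; exact id)

noncomputable def toSub (huw : G u w) (A : Arborescence G r) :
    Arborescence (Subdivide G u w) (Sum.inl r) where
  arcs := toArcs u w A.arcs
  sub := by
    rintro ⟨c1, c2⟩ hp
    rcases c1 with a | x <;> rcases c2 with b | y
    · rw [mem_toArcs_ll] at hp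
      exact ⟨A.sub _ hp.1, hp.2⟩
    · exact mem_toArcs_lr.1 hp
    · exact (mem_toArcs_rl.1 hp).1
    · exact absurd hp mem_toArcs_rr
  noRoot := by
    rintro ⟨c1, c2⟩ hp h
    rcases c2 with b | y
    · rcases c1 with a | x
      · rw [mem_toArcs_ll] at hp
        exact A.noRoot _ hp.1 (by simpa using h)
      · rw [mem_toArcs_rl] at hp
        obtain ⟨rfl, huwA⟩ := hp
        exact A.noRoot _ huwA (by simpa using h)
    · simp at h
  uniqueIn := by
    rintro (x | x) hx
    · have hxr : x ≠ r := fun h => hx (by rw [h])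
      obtain ⟨c, ⟨hcA, hc2⟩, hcu⟩ := A.uniqueIn x hxr
      by_cases hc : c = (u, w)
      · subst hc
        dsimp at hc2; subst hc2
        refine ⟨(Sum.inr (), Sum.inl w), ⟨mem_toArcs_rl.2 ⟨rfl, hcA⟩, rfl⟩, ?_⟩
        rintro ⟨p1, p2⟩ ⟨hp, hp2⟩
        dsimp at hp2; subst hp2
        rcases p1 with a | z
        · rw [mem_toArcs_ll] at hp
          exact absurd (hcu _ ⟨hp.1, rfl⟩) hp.2
        · cases z; rfl
      · obtain ⟨c1, c2⟩ := c
        dsimp at hc2; subst hc2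
        refine ⟨(Sum.inl c1, Sum.inl c2), ⟨mem_toArcs_ll.2 ⟨hcA, hc⟩, rfl⟩, ?_⟩
        rintro ⟨p1, p2⟩ ⟨hp, hp2⟩
        dsimp at hp2; subst hp2
        rcases p1 with a | z
        · rw [mem_toArcs_ll] at hp
          have h1 := hcu _ ⟨hp.1, rfl⟩
          rw [Prod.ext_iff]
          exact ⟨by simpa using congrArg Prod.fst h1, rfl⟩
        · rw [mem_toArcs_rl] at hp
          obtain ⟨rfl, huwA⟩ := hp
          exact absurd (hcu _ ⟨huwA, rfl⟩).symm hc
    · cases x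
      refine ⟨(Sum.inl u, Sum.inr ()), ⟨mem_toArcs_lr.2 rfl, rfl⟩, ?_⟩
      rintro ⟨p1, p2⟩ ⟨hp, hp2⟩
      dsimp at hp2; subst hp2
      rcases p1 with a | z
      · have : a = u := mem_toArcs_lr.1 hp
        subst this; rfl
      · exact absurd hp mem_toArcs_rr
  reach := by
    have key : ∀ x : V, ReflTransGen (fun p q => (p, q) ∈ toArcs u w A.arcs)
        (Sum.inl r) (Sum.inl x) := by
      intro x
      induction A.reach x with
      | refl => exact .refl
      | tail hs harc ih =>
        rename_i b c
        by_cases h : (b, c) = (u, w)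
        · exact (ih.tail (show (Sum.inl b, (Sum.inr () : V ⊕ Unit)) ∈ toArcs u w A.arcs
              from mem_toArcs_lr.2 (congrArg Prod.fst h))).tail
            (mem_toArcs_rl.2 ⟨congrArg Prod.snd h, h ▸ harc⟩)
        · exact ih.tail (mem_toArcs_ll.2 ⟨harc, h⟩)
    rintro (x | x)
    · exact key x
    · cases x
      exact (key u).tail (mem_toArcs_lr.2 rfl)

noncomputable def ofSub (huw : G u w) (A' : Arborescence (Subdivide G u w) (Sum.inl r)) :
    Arborescence G r where
  arcs := ofArcs u w A'.arcs
  sub := by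
    rintro ⟨a, b⟩ hp
    rcases mem_ofArcs.1 hp with h | ⟨h, -⟩
    · exact (A'.sub _ h).1
    · obtain ⟨rfl, rfl⟩ := Prod.mk.injEq .. ▸ h
      exact huw
  noRoot := by
    rintro ⟨a, b⟩ hp h
    dsimp at h; subst h
    rcases mem_ofArcs.1 hp with h | ⟨h, hw⟩
    · exact A'.noRoot _ h (by simp)
    · obtain ⟨rfl, rfl⟩ := Prod.mk.injEq .. ▸ h
      exact A'.noRoot _ hw (by simp)
  uniqueIn := by
    intro x hx
    obtain ⟨c, ⟨hcA, hc2⟩, hcu⟩ := A'.uniqueIn (Sum.inl x) (by simpa using hx)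
    obtain ⟨c1, c2⟩ := c
    dsimp at hc2; subst hc2
    rcases c1 with a | z
    · refine ⟨(a, x), ⟨mem_ofArcs.2 (Or.inl hcA), rfl⟩, ?_⟩
      rintro ⟨p1, p2⟩ ⟨hp, hp2⟩
      dsimp at hp2; subst hp2
      rcases mem_ofArcs.1 hp with h | ⟨h, hw⟩
      · have := hcu _ ⟨h, rfl⟩
        rw [Prod.ext_iff]
        exact ⟨by simpa using congrArg Prod.fst this, rfl⟩
      · obtain ⟨rfl, rfl⟩ := Prod.mk.injEq .. ▸ h
        exact absurd (hcu _ ⟨hw, rfl⟩) (by simp)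
    · cases z
      have hxw : x = w := A'.sub _ hcA
      refine ⟨(u, x), ⟨mem_ofArcs.2 (Or.inr ⟨by rw [hxw], hxw ▸ hcA⟩), rfl⟩, ?_⟩
      rintro ⟨p1, p2⟩ ⟨hp, hp2⟩
      dsimp at hp2; subst hp2
      rcases mem_ofArcs.1 hp with h | ⟨h, hw⟩
      · exact absurd (hcu _ ⟨h, rfl⟩) (by simp)
      · rw [Prod.ext_iff]
        exact ⟨by simpa using congrArg Prod.fst h, rfl⟩
  reach := by
    have key : ∀ y, ReflTransGen (fun p q => (p, q) ∈ A'.arcs) (Sum.inl r) y →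
        ReflTransGen (fun p q => (p, q) ∈ ofArcs u w A'.arcs) r
          (Sum.elim id (fun _ => u) y) := by
      intro y hy
      induction hy with
      | refl => exact .refl
      | tail hs harc ih =>
        rename_i b c
        rcases b with a | z <;> rcases c with b | y'
        · exact ih.tail (mem_ofArcs.2 (Or.inl harc))
        · have : a = u := A'.sub _ harc
          subst this; exact ih
        · cases z
          have : b = w := A'.sub _ harc
          subst this
          exact ih.tail (mem_ofArcs.2 (Or.inr ⟨rfl, harc⟩))
        · exact absurd (A'.sub _ harc) (by cases z; cases y'; exact id)
    intro x
    exact key (Sum.inl x) (A'.reach (Sum.inl x))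

lemma ofArcs_toArcs (A : Finset (V × V)) : ofArcs u w (toArcs u w A) = A := by
  ext ⟨a, b⟩
  rw [mem_ofArcs, mem_toArcs_ll, mem_toArcs_rl]
  by_cases h : (a, b) = (u, w)
  · obtain ⟨rfl, rfl⟩ := Prod.mk.injEq .. ▸ h
    tauto
  · tauto

lemma toArcs_ofArcs (A' : Arborescence (Subdivide G u w) (Sum.inl r)) :
    toArcs u w (ofArcs u w A'.arcs) = A'.arcs := by
  ext ⟨c1, c2⟩
  rcases c1 with a | x <;> rcases c2 with b | y
  · rw [mem_toArcs_ll, mem_ofArcs]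
    constructor
    · rintro ⟨h | ⟨h, hw⟩, hne⟩
      · exact h
      · exact absurd h hne
    · intro h
      refine ⟨Or.inl h, fun he => ?_⟩
      obtain ⟨rfl, rfl⟩ := Prod.mk.injEq .. ▸ he
      exact not_mem_lw A' h
  · cases y
    rw [mem_toArcs_lr]
    constructor
    · rintro rfl; exact mem_uv A'
    · intro h; exact A'.sub _ h
  · cases x
    rw [mem_toArcs_rl, mem_ofArcs]
    constructor
    · rintro ⟨rfl, h | ⟨-, hw⟩⟩
      · exact absurd h (not_mem_lw A')
      · exact hw
    · intro h
      have : b = w := A'.sub _ h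
      subst this
      exact ⟨rfl, Or.inr ⟨rfl, h⟩⟩
  · simp only [mem_toArcs_rr, false_iff]
    intro h
    exact absurd (A'.sub _ h) (by cases x; cases y; exact id)

noncomputable def equivSub (huw : G u w) :
    Arborescence (Subdivide G u w) (Sum.inl r) ≃ Arborescence G r where
  toFun := ofSub huw
  invFun := toSub huw
  left_inv A' := Arborescence.ext' (toArcs_ofArcs A')
  right_inv A := Arborescence.ext' (ofArcs_toArcs A.arcs)

def proj (u w : V) : (V ⊕ Unit) × (V ⊕ Unit) → V × V := fun p =>
  (Sum.elim id (fun _ => u) p.1, Sum.elim id (fun _ => w) p.2)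

lemma diff_image (A' B' : Arborescence (Subdivide G u w) (Sum.inl r)) :
    ofArcs u w A'.arcs \ ofArcs u w B'.arcs = (A'.arcs \ B'.arcs).image (proj u w) := by
  ext ⟨a, b⟩
  simp only [Finset.mem_sdiff, Finset.mem_image, mem_ofArcs]
  constructor
  · rintro ⟨hA, hB⟩
    rcases hA with h | ⟨he, hw⟩
    · refine ⟨(Sum.inl a, Sum.inl b), ⟨h, fun hb => hB (Or.inl hb)⟩, rfl⟩
    · exact ⟨(Sum.inr (), Sum.inl w), ⟨hw, fun hb => hB (Or.inr ⟨he, hb⟩)⟩,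
        by rw [he]; rfl⟩
  · rintro ⟨p, ⟨hpA, hpB⟩, hproj⟩
    rcases mem_cases A' hpA with ⟨a', b', rfl, hne⟩ | rfl | rfl
    · simp only [proj, Sum.elim_inl, id] at hproj
      obtain ⟨rfl, rfl⟩ := Prod.mk.injEq .. ▸ hproj
      refine ⟨Or.inl hpA, ?_⟩
      rintro (h | ⟨he, hw⟩)
      · exact hpB h
      · exact hne he
    · exact absurd (mem_uv B') hpB
    · simp only [proj, Sum.elim_inr, Sum.elim_inl, id] at hproj
      obtain ⟨rfl, rfl⟩ := Prod.mk.injEq .. ▸ hproj.symm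
      refine ⟨Or.inr ⟨rfl, hpA⟩, ?_⟩
      rintro (h | ⟨-, hw⟩)
      · exact not_mem_lw B' h
      · exact hpB hw
  
lemma proj_injOn (A' B' : Arborescence (Subdivide G u w) (Sum.inl r)) :
    Set.InjOn (proj u w) (A'.arcs \ B'.arcs : Finset _) := by
  intro p hp q hq hpq
  simp only [Finset.coe_sdiff, Set.mem_diff, Finset.mem_coe] at hp hq
  rcases mem_cases A' hp.1 with ⟨a, b, rfl, hne⟩ | rfl | rfl
  · rcases mem_cases A' hq.1 with ⟨a', b', rfl, hne'⟩ | rfl | rfl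
    · simp only [proj, Sum.elim_inl, id, Prod.mk.injEq] at hpq
      rw [hpq.1, hpq.2]
    · exact absurd (mem_uv B') hq.2
    · simp only [proj, Sum.elim_inl, Sum.elim_inr, id, Prod.mk.injEq] at hpq
      exact absurd (Prod.ext hpq.1 hpq.2) hne
  · exact absurd (mem_uv B') hp.2
  · rcases mem_cases A' hq.1 with ⟨a', b', rfl, hne'⟩ | rfl | rfl
    · simp only [proj, Sum.elim_inl, Sum.elim_inr, id, Prod.mk.injEq] at hpq
      exact absurd (Prod.ext hpq.1.symm hpq.2.symm) hne'
    · exact absurd (mem_uv B') hq.2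
    · rfl

lemma card_diff (A' B' : Arborescence (Subdivide G u w) (Sum.inl r)) :
    (ofArcs u w A'.arcs \ ofArcs u w B'.arcs).card = (A'.arcs \ B'.arcs).card := by
  rw [diff_image, Finset.card_image_of_injOn (proj_injOn A' B')]

end FlipSub

/-- Let `uw` be an arc of `G`, rooted in `r`, and let `G'` be obtained
from `G` by subdividing the arc `uw`. Then the flip graph of `G'` rooted in `r` is
isomorphic to the flip graph of `G` rooted in `r`. -/
theorem flipGraph_subdivide {V : Type*} [Fintype V] [DecidableEq V]
    (G : V → V → Prop) (r : V) (u w : V) (huw : G u w) :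
    Nonempty (FlipGraph (Subdivide G u w) (Sum.inl r) ≃g FlipGraph G r) := by
  refine ⟨{ toEquiv := FlipSub.equivSub huw, map_rel_iff' := ?_ }⟩
  intro A' B'
  constructor
  · rintro ⟨hne, h1, h2⟩
    exact ⟨fun h => hne (congrArg _ h),
      (FlipSub.card_diff A' B').symm.trans h1,
      (FlipSub.card_diff B' A').symm.trans h2⟩
  · rintro ⟨hne, h1, h2⟩
    exact ⟨fun h => hne ((FlipSub.equivSub huw).injective h),
      (FlipSub.card_diff A' B').trans h1,
      (FlipSub.card_diff B' A').trans h2⟩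
end

section
/- Let G be a directed multigraph rooted in r, let e be an arc of G, and let G' be the directed multigraph obtained from G by duplicating e, i.e., adding a new parallel arc e' with the same head and tail as e. If the flip graph of G rooted in r admits a Hamiltonian path, then the flip graph of G' rooted in r admits a Hamiltonian path; likewise, if the flip graph of G rooted in r admits a Hamiltonian cycle, then the flip graph of G' rooted in r admits a Hamiltonian cycle. -/
/-- A directed multigraph is given by an arc type `E` with tail and head maps
`tail head : E → V`. An arborescence rooted in `r` is a finite set of arcs such that
no arc enters `r`, every vertex other than `r` has exactly one entering arc, and every
vertex is reachable from `r` along the arcs. -/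
structure MultiArborescence {V E : Type*} (tail head : E → V) (r : V) where
  arcs : Finset E
  noRoot : ∀ e ∈ arcs, head e ≠ r
  uniqueIn : ∀ v, v ≠ r → ∃! e, e ∈ arcs ∧ head e = v
  reach : ∀ v, Relation.ReflTransGen (fun x y => ∃ e ∈ arcs, tail e = x ∧ head e = y) r v

theorem MultiArborescence.ext' {V E : Type*} {tail head : E → V} {r : V}
    {A B : MultiArborescence tail head r} (h : A.arcs = B.arcs) : A = B := by
  cases A; cases B; cases h; rfl

instance {V E : Type*} [DecidableEq E] (tail head : E → V) (r : V) :
    DecidableEq (MultiArborescence tail head r) := fun A B =>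
  decidable_of_iff (A.arcs = B.arcs) ⟨MultiArborescence.ext', fun h => h ▸ rfl⟩

/-- The flip graph of a directed multigraph rooted in `r`: two arborescences are adjacent
when their arc sets differ in exactly one arc. -/
def MultiFlipGraph {V E : Type*} [DecidableEq E] (tail head : E → V) (r : V) :
    SimpleGraph (MultiArborescence tail head r) where
  Adj A B := A ≠ B ∧ (A.arcs \ B.arcs).card = 1 ∧ (B.arcs \ A.arcs).card = 1
  symm := ⟨fun A B ⟨h1, h2, h3⟩ => ⟨h1.symm, h3, h2⟩⟩
  loopless := ⟨fun A h => h.1 rfl⟩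

namespace DupArc

open SimpleGraph Walk

variable {V E : Type*} [DecidableEq E] {tail head : E → V} {r : V} (e : E)

local notation "T" => MultiArborescence tail head r
local notation "T'" => MultiArborescence (Sum.elim tail fun _ : Unit => tail e)
  (Sum.elim head fun _ : Unit => head e) r
local notation "G" => MultiFlipGraph tail head r
local notation "G'" => MultiFlipGraph (Sum.elim tail fun _ : Unit => tail e)
  (Sum.elim head fun _ : Unit => head e) r

lemma flip_adj_iff {A B : T} : (MultiFlipGraph tail head r).Adj A B ↔
    A ≠ B ∧ (A.arcs \ B.arcs).card = 1 ∧ (B.arcs \ A.arcs).card = 1 := Iff.rfl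

/-- the arc renaming used by `lift`. -/
def g (c : Bool) (x : E) : E ⊕ Unit := if x = e ∧ c = true then Sum.inr () else Sum.inl x

lemma g_inj (c : Bool) : Function.Injective (g e c) := by
  intro x y h
  unfold g at h
  split_ifs at h <;> simp_all

lemma g_eq_inr {c : Bool} {x : E} : g e c x = Sum.inr () ↔ x = e ∧ c = true := by
  unfold g; split_ifs with h <;> simp [h]

lemma g_eq_g {c c' : Bool} {x y : E} (h : g e c x = g e c' y) : y = x ∨ (x = e ∧ y = e) := by
  unfold g at h; split_ifs at h <;> simp_all

lemma head'_g (c : Bool) (x : E) :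
    (Sum.elim head fun _ : Unit => head e) (g e c x) = head x := by
  unfold g; split_ifs with h
  · simp [h.1]
  · rfl

lemma tail'_g (c : Bool) (x : E) :
    (Sum.elim tail fun _ : Unit => tail e) (g e c x) = tail x := by
  unfold g; split_ifs with h
  · simp [h.1]
  · rfl

/-- Lift an arborescence of `G` to one of `G'`, choosing (if `c = true`) the duplicate
copy of `e` when present. -/
def lift (c : Bool) (A : T) : MultiArborescence (Sum.elim tail fun _ : Unit => tail e)
    (Sum.elim head fun _ : Unit => head e) r where
  arcs := A.arcs.image (g e c)
  noRoot := by
    intro y hy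
    obtain ⟨x, hx, rfl⟩ := Finset.mem_image.1 hy
    rw [head'_g]; exact A.noRoot x hx
  uniqueIn := by
    intro v hv
    obtain ⟨x, ⟨hx, hxv⟩, hu⟩ := A.uniqueIn v hv
    refine ⟨g e c x, ⟨Finset.mem_image_of_mem _ hx, by rw [head'_g, hxv]⟩, ?_⟩
    rintro y ⟨hy, hyv⟩
    obtain ⟨x', hx', rfl⟩ := Finset.mem_image.1 hy
    rw [head'_g] at hyv
    rw [hu x' ⟨hx', hyv⟩]
  reach := by
    intro v
    refine Relation.ReflTransGen.mono ?_ r v (A.reach v)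
    rintro x y ⟨a, ha, h1, h2⟩
    exact ⟨g e c a, Finset.mem_image_of_mem _ ha, by rw [tail'_g]; exact h1,
      by rw [head'_g]; exact h2⟩

/-- Project an arborescence of `G'` down to one of `G`. -/
def proj (A' : T') : T where
  arcs := A'.arcs.image (Sum.elim id fun _ : Unit => e)
  noRoot := by
    intro x hx
    obtain ⟨y, hy, rfl⟩ := Finset.mem_image.1 hx
    cases y <;> exact A'.noRoot _ hy
  uniqueIn := by
    intro v hv
    obtain ⟨y, ⟨hy, hyv⟩, hu⟩ := A'.uniqueIn v hv
    refine ⟨_, ⟨Finset.mem_image_of_mem _ hy, by cases y <;> exact hyv⟩, ?_⟩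
    rintro x ⟨hx, hxv⟩
    obtain ⟨y', hy', rfl⟩ := Finset.mem_image.1 hx
    have hh : Sum.elim head (fun _ : Unit => head e) y' = v := by cases y' <;> exact hxv
    rw [hu y' ⟨hy', hh⟩]
  reach := by
    intro v
    refine Relation.ReflTransGen.mono ?_ r v (A'.reach v)
    rintro x y ⟨a, ha, h1, h2⟩
    exact ⟨_, Finset.mem_image_of_mem _ ha, by cases a <;> exact h1,
      by cases a <;> exact h2⟩

lemma proj_lift (c : Bool) (A : T) : proj e (lift e c A) = A := by
  apply MultiArborescence.ext'
  show (A.arcs.image (g e c)).image (Sum.elim id fun _ : Unit => e) = A.arcs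
  rw [Finset.image_image]
  have : (Sum.elim id fun _ : Unit => e) ∘ g e c = id := by
    funext x; simp only [Function.comp_apply]; unfold g; split_ifs with h
    · simp [h.1]
    · rfl
  rw [this, Finset.image_id]

lemma inr_mem_lift {c : Bool} {A : T} :
    Sum.inr () ∈ (lift e c A).arcs ↔ c = true ∧ e ∈ A.arcs := by
  show Sum.inr () ∈ A.arcs.image (g e c) ↔ _
  simp only [Finset.mem_image]
  constructor
  · rintro ⟨x, hx, hgx⟩
    obtain ⟨rfl, hc⟩ := (g_eq_inr e).1 hgx
    exact ⟨hc, hx⟩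
  · rintro ⟨hc, hx⟩
    exact ⟨e, hx, (g_eq_inr e).2 ⟨rfl, hc⟩⟩

lemma lift_eq_of_not_mem {A : T} (h : e ∉ A.arcs) (c c' : Bool) : lift e c A = lift e c' A := by
  apply MultiArborescence.ext'
  show A.arcs.image (g e c) = A.arcs.image (g e c')
  apply Finset.image_congr
  intro x hx
  have hxe : x ≠ e := fun hh => h (hh ▸ hx)
  unfold g; simp [hxe]

lemma lift_eq_lift {c c' : Bool} {A B : T} :
    lift e c A = lift e c' B ↔ A = B ∧ (e ∈ A.arcs → c = c') := by
  constructor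
  · intro h
    have hAB : A = B := by
      have := congrArg (proj e) h
      rwa [proj_lift, proj_lift] at this
    subst hAB
    refine ⟨rfl, fun he => ?_⟩
    have := congrArg (fun X : MultiArborescence (Sum.elim tail fun _ : Unit => tail e)
      (Sum.elim head fun _ : Unit => head e) r => Sum.inr () ∈ X.arcs) h
    simp only [inr_mem_lift, he, and_true, eq_iff_iff] at this
    cases c <;> cases c' <;> simp_all
  · rintro ⟨rfl, hc⟩
    by_cases he : e ∈ A.arcs
    · rw [hc he]
    · exact lift_eq_of_not_mem e he c c'

lemma not_both (A' : T') : ¬(Sum.inl e ∈ A'.arcs ∧ Sum.inr () ∈ A'.arcs) := by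
  rintro ⟨h1, h2⟩
  by_cases hr : head e = r
  · exact A'.noRoot _ h1 hr
  · obtain ⟨y, _, hu⟩ := A'.uniqueIn (head e) hr
    have e1 : Sum.inl e = y := hu _ ⟨h1, rfl⟩
    have e2 : Sum.inr () = y := hu _ ⟨h2, rfl⟩
    rw [← e2] at e1
    exact Sum.inl_ne_inr e1

lemma lift_surj (A' : T') : ∃ c A, lift e c A = A' := by
  by_cases h : Sum.inr () ∈ A'.arcs
  · refine ⟨true, proj e A', MultiArborescence.ext' ?_⟩
    show (A'.arcs.image (Sum.elim id fun _ : Unit => e)).image (g e true) = A'.arcs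
    rw [Finset.image_image]
    have : ∀ y ∈ A'.arcs, (g e true ∘ Sum.elim id fun _ : Unit => e) y = id y := by
      rintro (x | u) hy
      · have hxe : x ≠ e := by
          intro hh
          exact not_both e A' ⟨hh ▸ hy, h⟩
        simp [g, hxe]
      · simp [g]
    rw [Finset.image_congr this, Finset.image_id]
  · refine ⟨false, proj e A', MultiArborescence.ext' ?_⟩
    show (A'.arcs.image (Sum.elim id fun _ : Unit => e)).image (g e false) = A'.arcs
    rw [Finset.image_image]
    have : ∀ y ∈ A'.arcs, (g e false ∘ Sum.elim id fun _ : Unit => e) y = id y := by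
      rintro (x | u) hy
      · simp [g]
      · exact absurd hy h
    rw [Finset.image_congr this, Finset.image_id]

lemma mem_lift {c : Bool} {A : T} {y : E ⊕ Unit} :
    y ∈ (lift e c A).arcs ↔ ∃ x ∈ A.arcs, g e c x = y := Finset.mem_image

lemma sdiff_lift {c c' : Bool} {A B : T} (hc : e ∈ A.arcs → e ∈ B.arcs → c = c') :
    (lift e c A).arcs \ (lift e c' B).arcs = (A.arcs \ B.arcs).image (g e c) := by
  ext y
  simp only [Finset.mem_sdiff, Finset.mem_image, mem_lift]
  constructor
  · rintro ⟨⟨x, hxA, rfl⟩, hnot⟩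
    refine ⟨x, ⟨hxA, fun hxB => hnot ?_⟩, rfl⟩
    by_cases hxe : x = e
    · subst hxe
      rw [hc hxA hxB]
      exact ⟨x, hxB, rfl⟩
    · refine ⟨x, hxB, ?_⟩
      simp [g, hxe]
  · rintro ⟨x, ⟨hxA, hxB⟩, rfl⟩
    refine ⟨⟨x, hxA, rfl⟩, ?_⟩
    rintro ⟨b, hbB, hb⟩
    rcases g_eq_g e hb with h | ⟨hbe, hxe⟩
    · exact hxB (h ▸ hbB)
    · exact hxB (hxe ▸ hbe ▸ hbB)

lemma adj_lift {c c' : Bool} {A B : T} (h : (MultiFlipGraph tail head r).Adj A B)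
    (hc : e ∈ A.arcs → e ∈ B.arcs → c = c') :
    (MultiFlipGraph (Sum.elim tail fun _ : Unit => tail e)
      (Sum.elim head fun _ : Unit => head e) r).Adj (lift e c A) (lift e c' B) := by
  obtain ⟨hne, h1, h2⟩ := h
  refine ⟨fun hh => hne ((lift_eq_lift e).1 hh).1, ?_, ?_⟩
  · rw [sdiff_lift e hc, Finset.card_image_of_injective _ (g_inj e c), h1]
  · rw [sdiff_lift e (fun hb ha => (hc ha hb).symm),
      Finset.card_image_of_injective _ (g_inj e c'), h2]

lemma sdiff_swap {c c' : Bool} {A : T} (he : e ∈ A.arcs) (hcc : c ≠ c') :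
    (lift e c A).arcs \ (lift e c' A).arcs = {g e c e} := by
  ext y
  simp only [Finset.mem_sdiff, Finset.mem_singleton, mem_lift]
  have hgg : g e c' e ≠ g e c e := by
    cases c <;> cases c' <;> simp_all [g]
  constructor
  · rintro ⟨⟨x, hxA, rfl⟩, hnot⟩
    by_cases hxe : x = e
    · rw [hxe]
    · exact absurd ⟨x, hxA, by simp [g, hxe]⟩ hnot
  · rintro rfl
    refine ⟨⟨e, he, rfl⟩, ?_⟩
    rintro ⟨b, hbB, hb⟩
    rcases g_eq_g e hb with h | ⟨hbe, _⟩
    · exact hgg (h ▸ hb)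
    · exact hgg (hbe ▸ hb)

lemma adj_swap {c c' : Bool} {A : T} (he : e ∈ A.arcs) (hcc : c ≠ c') :
    (MultiFlipGraph (Sum.elim tail fun _ : Unit => tail e)
      (Sum.elim head fun _ : Unit => head e) r).Adj (lift e c A) (lift e c' A) := by
  refine ⟨fun hh => hcc (((lift_eq_lift e).1 hh).2 he), ?_, ?_⟩
  · rw [sdiff_swap e he hcc]; simp
  · rw [sdiff_swap e he hcc.symm]; simp

/-- The choice of copy of `e` at the *start* of the lifted walk, if the exit choice at the
end is `c`. -/
def sCh : {A B : T} → (MultiFlipGraph tail head r).Walk A B → Bool → Bool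
  | A, _, .nil, c => if e ∈ A.arcs then !c else c
  | A, _, .cons _ q, c => if e ∈ A.arcs then !(sCh q c) else sCh q c

/-- The lifted walk: traverses both copies of each arborescence containing `e`. -/
def toWalk : {A B : T} → (p : (MultiFlipGraph tail head r).Walk A B) → (c : Bool) →
    (MultiFlipGraph (Sum.elim tail fun _ : Unit => tail e)
      (Sum.elim head fun _ : Unit => head e) r).Walk (lift e (sCh e p c) A) (lift e c B)
  | A, _, .nil, c =>
    if he : e ∈ A.arcs then
      (Walk.cons (adj_swap (c := !c) (c' := c) e he (by simp)) Walk.nil).copy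
        (by rw [show sCh e (.nil : (MultiFlipGraph tail head r).Walk A A) c
          = if e ∈ A.arcs then !c else c from rfl, if_pos he]) rfl
    else
      (Walk.nil (u := lift e c A)).copy
        (by rw [show sCh e (.nil : (MultiFlipGraph tail head r).Walk A A) c
          = if e ∈ A.arcs then !c else c from rfl, if_neg he]) rfl
  | A, _, .cons h q, c =>
    if he : e ∈ A.arcs then
      (Walk.cons (adj_swap (c := !(sCh e q c)) (c' := sCh e q c) e he (by simp))
        (Walk.cons (adj_lift e h (fun _ _ => rfl)) (toWalk q c))).copy
        (by rw [show sCh e (.cons h q) c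
          = if e ∈ A.arcs then !(sCh e q c) else sCh e q c from rfl, if_pos he]) rfl
    else
      (Walk.cons (adj_lift e h (fun _ _ => rfl)) (toWalk q c)).copy
        (by rw [show sCh e (.cons h q) c
          = if e ∈ A.arcs then !(sCh e q c) else sCh e q c from rfl, if_neg he]) rfl

lemma count_lift_pair {D A : T} {cx a b : Bool} (he : e ∈ A.arcs) (hab : a ≠ b) :
    List.count (lift e cx D) [lift e a A, lift e b A] = List.count D [A] := by
  by_cases hD : D = A
  · subst hD
    cases cx <;> cases a <;> cases b <;>
      simp_all [List.count_cons, lift_eq_lift, he]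
  · have hAD : A ≠ D := fun h => hD h.symm
    simp [List.count_cons, lift_eq_lift, hAD, hD]

lemma count_lift_single {D A : T} {cx a : Bool} (he : e ∉ A.arcs) :
    List.count (lift e cx D) [lift e a A] = List.count D [A] := by
  by_cases hD : D = A
  · subst hD
    simp [List.count_cons, lift_eq_lift, he]
  · have hAD : A ≠ D := fun h => hD h.symm
    simp [List.count_cons, lift_eq_lift, hAD, hD]

lemma count_toWalk {A B : T} (p : (MultiFlipGraph tail head r).Walk A B) (c cx : Bool) (D : T) :
    (toWalk e p c).support.count (lift e cx D) = p.support.count D := by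
  induction p with
  | @nil A1 =>
    by_cases he : e ∈ A1.arcs
    · have key := count_lift_pair (D := D) (cx := cx) (a := !c) (b := c) (A := A1) e he (by simp)
      simpa [toWalk, he, List.count_cons] using key
    · have key := count_lift_single (D := D) (cx := cx) (a := c) (A := A1) e he
      simpa [toWalk, he, List.count_cons] using key
  | @cons A1 B1 C1 h q ih =>
    by_cases he : e ∈ A1.arcs
    · have key := count_lift_pair (D := D) (cx := cx) (a := !(sCh e q c)) (b := sCh e q c)
        (A := A1) e he (by simp)
      simp only [toWalk, dif_pos he, support_copy, support_cons, List.count_cons] at key ⊢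
      simp only [List.count_nil] at key
      omega
    · have key := count_lift_single (D := D) (cx := cx) (a := sCh e q c) (A := A1) e he
      simp only [toWalk, dif_neg he, support_copy, support_cons, List.count_cons] at key ⊢
      simp only [List.count_nil] at key
      omega

lemma lift_inj (c : Bool) : Function.Injective (fun A : T => lift e c A) :=
  fun A B h => ((lift_eq_lift e).1 h).1

lemma lift_true_ne_false {X Y : T} (hX : e ∈ X.arcs) : lift e true X ≠ lift e false Y := by
  intro h
  obtain ⟨rfl, hc⟩ := (lift_eq_lift e).1 h
  exact Bool.noConfusion (hc hX)

lemma loop_path_length {α : Type*} {H : SimpleGraph α} {v : α} (Q : H.Walk v v)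
    (h : Q.IsPath) : Q.length = 0 := by
  cases Q with
  | nil => rfl
  | cons h' R =>
    exact absurd (R.end_mem_support) ((Walk.cons_isPath_iff h' R).1 h).2

lemma endpoint_edge {α : Type*} {H : SimpleGraph α} {x y : α} (P : H.Walk x y)
    (hP : P.IsPath) (hlen : P.length ≠ 1) : s(x, y) ∉ P.edges := by
  intro hmem
  cases P with
  | nil => simp at hmem
  | cons h' Q =>
    rw [Walk.edges_cons, List.mem_cons] at hmem
    rcases hmem with hh | hh
    · rw [Sym2.eq_iff] at hh
      rcases hh with ⟨-, rfl⟩ | ⟨rfl, -⟩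
      · have := loop_path_length Q ((Walk.cons_isPath_iff h' Q).1 hP).1
        simp [this] at hlen
      · exact h'.ne rfl
    · exact ((Walk.cons_isPath_iff h' Q).1 hP).2 (Q.fst_mem_support_of_mem_edges hh)

lemma ham_cycle_case2 {A₀ : T} (he₀ : e ∉ A₀.arcs) {B1 : T}
    (hAB : (MultiFlipGraph tail head r).Adj A₀ B1)
    (q : (MultiFlipGraph tail head r).Walk B1 A₀) (hq : q.IsHamiltonian)
    (hlen : 3 ≤ q.support.length) :
    ∃ (X : MultiArborescence (Sum.elim tail fun _ : Unit => tail e)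
        (Sum.elim head fun _ : Unit => head e) r)
      (w : (MultiFlipGraph (Sum.elim tail fun _ : Unit => tail e)
        (Sum.elim head fun _ : Unit => head e) r).Walk X X), w.IsHamiltonianCycle := by
  classical
  let w := toWalk e q false
  have hwham : ∀ X, w.support.count X = 1 := fun X => by
    obtain ⟨cx, D, rfl⟩ := lift_surj e X
    rw [count_toWalk]; exact hq D
  have hwpath : w.IsPath :=
    Walk.IsPath.mk' (List.nodup_iff_count_le_one.2 fun X => le_of_eq (hwham X))
  have hadj : (MultiFlipGraph (Sum.elim tail fun _ : Unit => tail e)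
      (Sum.elim head fun _ : Unit => head e) r).Adj (lift e false A₀) (lift e (sCh e q false) B1) :=
    adj_lift e hAB (fun hA _ => absurd hA he₀)
  refine ⟨_, Walk.cons hadj w, ?_⟩
  rw [Walk.isHamiltonianCycle_iff_isCycle_and_support_count_tail_eq_one]
  constructor
  · rw [Walk.cons_isCycle_iff]
    refine ⟨hwpath, ?_⟩
    have hne1 : w.length ≠ 1 := by
      intro h1
      have hsub : q.support.toFinset.image (lift e false) ⊆ w.support.toFinset := by
        intro X hX
        simp only [Finset.mem_image, List.mem_toFinset] at hX ⊢
        obtain ⟨D, hD, rfl⟩ := hX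
        rw [← List.count_pos_iff, count_toWalk]
        exact List.count_pos_iff.2 hD
      have h3 : 3 ≤ (q.support.toFinset.image (lift e false)).card := by
        rw [Finset.card_image_of_injective _ (lift_inj e false),
          List.toFinset_card_of_nodup hq.isPath.support_nodup]
        exact hlen
      have h4 : w.support.toFinset.card ≤ w.support.length := List.toFinset_card_le _
      have h5 : w.support.length = w.length + 1 := Walk.length_support w
      have := Finset.card_le_card hsub
      omega
    have := endpoint_edge w hwpath hne1
    rw [Sym2.eq_swap] at this
    exact this
  · intro X
    rw [Walk.support_cons, List.tail_cons]
    exact hwham X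

lemma ham_cycle_case1 (hall : ∀ D : T, e ∈ D.arcs) {A B1 : T}
    (hAB : (MultiFlipGraph tail head r).Adj A B1)
    (q : (MultiFlipGraph tail head r).Walk B1 A) (hq : q.IsHamiltonian) :
    ∃ (X : MultiArborescence (Sum.elim tail fun _ : Unit => tail e)
        (Sum.elim head fun _ : Unit => head e) r)
      (w : (MultiFlipGraph (Sum.elim tail fun _ : Unit => tail e)
        (Sum.elim head fun _ : Unit => head e) r).Walk X X), w.IsHamiltonianCycle := by
  classical
  let lfh : (MultiFlipGraph tail head r) →g (MultiFlipGraph (Sum.elim tail fun _ : Unit => tail e)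
      (Sum.elim head fun _ : Unit => head e) r) :=
    ⟨lift e false, fun h => adj_lift e h (fun _ _ => rfl)⟩
  let lth : (MultiFlipGraph tail head r) →g (MultiFlipGraph (Sum.elim tail fun _ : Unit => tail e)
      (Sum.elim head fun _ : Unit => head e) r) :=
    ⟨lift e true, fun h => adj_lift e h (fun _ _ => rfl)⟩
  let c1 := q.map lfh
  let c2 := (q.map lth).reverse
  let P := (c2.concat (adj_swap e (hall B1) (by simp))).append c1
  have hPsupp : P.support = (q.support.map (lift e true)).reverse ++
      [lift e false B1] ++ (q.support.map (lift e false)).tail := by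
    show ((c2.concat _).append c1).support = _
    rw [Walk.support_append, Walk.support_concat, Walk.support_reverse, Walk.support_map,
      Walk.support_map]
    simp [List.concat_eq_append, List.append_assoc]
    rfl
  have hqB : q.support = B1 :: q.support.tail := Walk.support_eq_cons q
  have hcount : ∀ X, P.support.count X = 1 := by
    intro X
    obtain ⟨cx, D, rfl⟩ := lift_surj e X
    rw [hPsupp]
    rw [List.count_append, List.count_append, List.count_reverse]
    have htail : (q.support.map (lift e false)).tail = q.support.tail.map (lift e false) := by
      rw [hqB]; simp
    rw [htail]
    have hDq : q.support.count D = 1 := hq D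
    have hDt : q.support.tail.count D = if D = B1 then 0 else 1 := by
      rw [hqB, List.count_cons] at hDq
      simp only [beq_iff_eq] at hDq
      by_cases hDB : D = B1
      · subst hDB; simp at hDq ⊢; omega
      · have hne : ¬ B1 = D := fun h => hDB h.symm
        simp only [hne, if_false] at hDq
        simp only [hDB, if_false]
        omega
    cases cx with
    | true =>
      rw [List.count_map_of_injective _ _ (lift_inj e true)]
      have hz1 : List.count (lift e true D) [lift e false B1] = 0 := by
        rw [List.count_eq_zero, List.mem_singleton]
        exact fun hh => lift_true_ne_false e (hall D) hh
      have hz2 : (q.support.tail.map (lift e false)).count (lift e true D) = 0 := by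
        rw [List.count_eq_zero]
        intro hmem
        obtain ⟨Y, _, hY⟩ := List.mem_map.1 hmem
        exact lift_true_ne_false e (hall D) hY.symm
      rw [hz2, hDq, hz1]
    | false =>
      have hz : (q.support.map (lift e true)).count (lift e false D) = 0 := by
        rw [List.count_eq_zero]
        intro hmem
        obtain ⟨Y, _, hY⟩ := List.mem_map.1 hmem
        exact lift_true_ne_false e (hall Y) hY
      rw [hz, List.count_map_of_injective _ _ (lift_inj e false), hDt]
      have hone : List.count (lift e false D) [lift e false B1] = if D = B1 then 1 else 0 := by
        by_cases hDB : D = B1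
        · subst hDB; simp
        · rw [List.count_eq_zero.2, if_neg hDB]
          rw [List.mem_singleton]
          intro hh
          exact hDB ((lift_eq_lift e).1 hh).1
      rw [hone]
      by_cases hDB : D = B1 <;> simp [hDB]
  have hPpath : P.IsPath :=
    Walk.IsPath.mk' (List.nodup_iff_count_le_one.2 fun X => le_of_eq (hcount X))
  refine ⟨_, Walk.cons (adj_swap e (hall A) (show false ≠ true by simp)) P, ?_⟩
  rw [Walk.isHamiltonianCycle_iff_isCycle_and_support_count_tail_eq_one]
  constructor
  · rw [Walk.cons_isCycle_iff]
    refine ⟨hPpath, ?_⟩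
    intro hmem
    have hPedges : P.edges = (q.edges.map (Sym2.map (lift e true))).reverse ++
        [s(lift e true B1, lift e false B1)] ++ q.edges.map (Sym2.map (lift e false)) := by
      show ((c2.concat _).append c1).edges = _
      rw [Walk.edges_append, Walk.edges_concat, Walk.edges_reverse, Walk.edges_map,
        Walk.edges_map]
      simp [List.concat_eq_append, List.append_assoc]
      rfl
    rw [hPedges, List.mem_append, List.mem_append, List.mem_reverse] at hmem
    rcases hmem with (hmem | hmem) | hmem
    · obtain ⟨ed, hed, hmap⟩ := List.mem_map.1 hmem
      induction ed using Sym2.ind with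
      | _ X Y =>
        rw [Sym2.map_pair_eq, Sym2.eq_iff] at hmap
        rcases hmap with ⟨h1, -⟩ | ⟨-, h2⟩
        · exact lift_true_ne_false e (hall X) h1
        · exact lift_true_ne_false e (hall Y) h2
    · rw [List.mem_singleton, Sym2.eq_iff] at hmem
      rcases hmem with ⟨h1, -⟩ | ⟨-, h2⟩
      · exact lift_true_ne_false e (hall B1) h1.symm
      · have : B1 = A := ((lift_eq_lift e).1 h2.symm).1
        exact (flip_adj_iff.1 hAB).1 this.symm
    · obtain ⟨ed, hed, hmap⟩ := List.mem_map.1 hmem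
      induction ed using Sym2.ind with
      | _ X Y =>
        rw [Sym2.map_pair_eq, Sym2.eq_iff] at hmap
        rcases hmap with ⟨-, h1⟩ | ⟨h2, -⟩
        · exact lift_true_ne_false e (hall A) h1.symm
        · exact lift_true_ne_false e (hall A) h2.symm
  · intro X
    rw [Walk.support_cons, List.tail_cons]
    exact hcount X

lemma ham_cycle_at {A₀ : T} (he₀ : e ∉ A₀.arcs)
    (p : (MultiFlipGraph tail head r).Walk A₀ A₀) (hp : p.IsHamiltonianCycle) :
    ∃ (X : MultiArborescence (Sum.elim tail fun _ : Unit => tail e)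
        (Sum.elim head fun _ : Unit => head e) r)
      (w : (MultiFlipGraph (Sum.elim tail fun _ : Unit => tail e)
        (Sum.elim head fun _ : Unit => head e) r).Walk X X), w.IsHamiltonianCycle := by
  cases p with
  | nil => exact absurd hp.isCycle Walk.IsCycle.not_of_nil
  | @cons _ B1 _ hAB q =>
    have hq : q.IsHamiltonian := by
      have h2 := (Walk.isHamiltonianCycle_iff_isCycle_and_support_count_tail_eq_one.1 hp).2
      intro D
      have := h2 D
      rwa [Walk.support_cons, List.tail_cons] at this
    have hlen3 : 3 ≤ (Walk.cons hAB q).length := hp.isCycle.three_le_length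
    rw [Walk.length_cons] at hlen3
    have hlen : 3 ≤ q.support.length := by
      rw [Walk.length_support]; omega
    exact ham_cycle_case2 e he₀ hAB q hq hlen

lemma ham_cycle {A : T} (p : (MultiFlipGraph tail head r).Walk A A)
    (hp : p.IsHamiltonianCycle) :
    ∃ (X : MultiArborescence (Sum.elim tail fun _ : Unit => tail e)
        (Sum.elim head fun _ : Unit => head e) r)
      (w : (MultiFlipGraph (Sum.elim tail fun _ : Unit => tail e)
        (Sum.elim head fun _ : Unit => head e) r).Walk X X), w.IsHamiltonianCycle := by
  by_cases hall : ∀ D : T, e ∈ D.arcs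
  · cases p with
    | nil => exact absurd hp.isCycle Walk.IsCycle.not_of_nil
    | @cons _ B1 _ hAB q =>
      have hq : q.IsHamiltonian := by
        have h2 := (Walk.isHamiltonianCycle_iff_isCycle_and_support_count_tail_eq_one.1 hp).2
        intro D
        have := h2 D
        rwa [Walk.support_cons, List.tail_cons] at this
      exact ham_cycle_case1 e hall hAB q hq
  · push_neg at hall
    obtain ⟨A₀, he₀⟩ := hall
    have hA₀ : A₀ ∈ p.support := hp.mem_support A₀
    have hp' : (p.rotate A₀ hA₀).IsHamiltonianCycle := by
      rw [Walk.isHamiltonianCycle_iff_isCycle_and_support_count_tail_eq_one]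
      refine ⟨hp.isCycle.rotate hA₀, fun D => ?_⟩
      have hperm := (Walk.support_rotate p A₀ hA₀).perm
      rw [hperm.count_eq]
      exact (Walk.isHamiltonianCycle_iff_isCycle_and_support_count_tail_eq_one.1 hp).2 D
    exact ham_cycle_at e he₀ (p.rotate A₀ hA₀) hp'

end DupArc

/-- Let `G` be a directed multigraph rooted in `r` (arcs indexed by a
type `E` with tail and head maps) and let `G'` be obtained from `G` by duplicating an arc
`e`, i.e. adding a new parallel arc with the same tail and head as `e` (arc type
`E ⊕ Unit`). If the flip graph of `G` rooted in `r` has a Hamiltonian path, so does the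
flip graph of `G'`; and if the flip graph of `G` has a Hamiltonian cycle, so does the
flip graph of `G'`. -/
theorem multiFlipGraph_duplicate_arc {V E : Type*} [Fintype V] [DecidableEq V]
    [Fintype E] [DecidableEq E] (tail head : E → V) (r : V) (e : E) :
    ((∃ (A B : MultiArborescence tail head r)
        (p : (MultiFlipGraph tail head r).Walk A B), p.IsHamiltonian) →
      ∃ (A B : MultiArborescence (Sum.elim tail fun _ : Unit => tail e)
          (Sum.elim head fun _ : Unit => head e) r)
        (p : (MultiFlipGraph (Sum.elim tail fun _ : Unit => tail e)
          (Sum.elim head fun _ : Unit => head e) r).Walk A B), p.IsHamiltonian) ∧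
    ((∃ (A : MultiArborescence tail head r)
        (p : (MultiFlipGraph tail head r).Walk A A), p.IsHamiltonianCycle) →
      ∃ (A : MultiArborescence (Sum.elim tail fun _ : Unit => tail e)
          (Sum.elim head fun _ : Unit => head e) r)
        (p : (MultiFlipGraph (Sum.elim tail fun _ : Unit => tail e)
          (Sum.elim head fun _ : Unit => head e) r).Walk A A), p.IsHamiltonianCycle) := by
  constructor
  · rintro ⟨A, B, p, hp⟩
    refine ⟨_, _, DupArc.toWalk e p false, fun X => ?_⟩
    obtain ⟨cx, D, rfl⟩ := DupArc.lift_surj e X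
    rw [DupArc.count_toWalk]
    exact hp D
  · rintro ⟨A, p, hp⟩
    exact DupArc.ham_cycle e p hp
end
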